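/- arXiv:2208.08480 — 13 statements merged into one kernel-verified Lean document; each statement's English description precedes it below -/
import Mathlib

section
/- (MGF bound for functionals of a time-inhomogeneous Markov chain.) Let Z be a finite set, μ a PMF on Z, and P₁, …, P_{H−1} row-stochastic matrices on Z, each P_h admitting a stationary distribution ν_h; let Π_h be the matrix with every row equal to ν_h and Δ_{ℓ→h} := Π_{i=ℓ}^{h−1}(P_i − Π_i) (empty product = identity). Let φ₁, …, φ_H : Z → ℝ. With P₀(z,·) := μ, set V := max_{z∈Z, 1≤ℓ≤H} Var_{P_{ℓ−1}(z,·)}[ Σ_{h=ℓ}^{H} Δ_{ℓ→h}φ_h ] and M := 2·max_{1≤ℓ≤H} ‖ Σ_{h=ℓ}^{H} Δ_{ℓ→h}φ_h ‖_∞, and assume M > 0. Then for every λ > 0, E_μ[ exp( λ·( Σ_{h=1}^{H} φ_h(X_h) − E_μ[ Σ_{h=1}^{H} φ_h(X_h) ] ) ) ] ≤ exp( (H·V/M²)·( e^{λM} − λM − 1 ) ), where expectations are taken under the single-episode path law. -/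
open Finset

/-- `μ` is a probability mass function on the finite type `Z`. -/
def IsPMF {Z : Type*} [Fintype Z] (μ : Z → ℝ) : Prop :=
  (∀ z, 0 ≤ μ z) ∧ ∑ z, μ z = 1

/-- A row-stochastic kernel on `Z`. -/
def IsRowStochastic {Z : Type*} [Fintype Z] (P : Z → Z → ℝ) : Prop :=
  (∀ x y, 0 ≤ P x y) ∧ ∀ x, ∑ y, P x y = 1

/-- Variance of `φ` under the PMF `ν`. -/
def varPMF {Z : Type*} [Fintype Z] (ν φ : Z → ℝ) : ℝ :=
  (∑ z, ν z * φ z ^ 2) - (∑ z, ν z * φ z) ^ 2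

/-- Sup norm of a function on a finite nonempty type. -/
noncomputable def supNorm {Z : Type*} [Fintype Z] [Nonempty Z] (φ : Z → ℝ) : ℝ :=
  Finset.univ.sup' Finset.univ_nonempty fun z => |φ z|

/-- Weight of a single episode path of length `H = N + 1` under the initial law `μ` and
the transition kernels `P 0, …, P (N-1)`. -/
def pathWeight {Z : Type*} [Fintype Z] (N : ℕ) (μ : Z → ℝ) (P : ℕ → Z → Z → ℝ)
    (x : Fin (N + 1) → Z) : ℝ :=
  μ (x 0) * ∏ i : Fin N, P i (x i.castSucc) (x i.succ)

/-- Expectation of a path functional `g` under the single-episode path law. -/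
noncomputable def pathExp {Z : Type*} [Fintype Z] (N : ℕ) (μ : Z → ℝ)
    (P : ℕ → Z → Z → ℝ) (g : (Fin (N + 1) → Z) → ℝ) : ℝ :=
  ∑ x : Fin (N + 1) → Z, pathWeight N μ P x * g x

/-- `Δ_{ℓ→h} := (P_ℓ − Π_ℓ)⋯(P_{h−1} − Π_{h−1})` (ordered matrix product; the empty
product, for `h ≤ ℓ`, is the identity). -/
noncomputable def centeredProd {Z : Type*} [Fintype Z] [DecidableEq Z]
    (P Pi : ℕ → Matrix Z Z ℝ) (ℓ h : ℕ) : Matrix Z Z ℝ :=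
  (((List.range' ℓ (h - ℓ)).map fun i => P i - Pi i)).prod


section MgfAux
open Nat

lemma mgfaux_exp_tsum (x : ℝ) : Real.exp x = ∑' n : ℕ, x ^ n / (n ! : ℝ) := by
  rw [Real.exp_eq_exp_ℝ, NormedSpace.exp_eq_tsum_div]

lemma mgfaux_summ2 (x : ℝ) : Summable (fun n : ℕ => x ^ (n + 2) / ((n + 2)! : ℝ)) :=
  (summable_nat_add_iff 2).2 (Real.summable_pow_div_factorial x)

lemma mgfaux_exp_sub_tsum (x : ℝ) :
    Real.exp x - x - 1 = ∑' n : ℕ, x ^ (n + 2) / ((n + 2)! : ℝ) := by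
  have h := Summable.sum_add_tsum_nat_add (f := fun n : ℕ => x ^ n / (n ! : ℝ)) 2
    (Real.summable_pow_div_factorial x)
  rw [mgfaux_exp_tsum x, ← h]
  simp [Finset.sum_range_succ]
  ring

lemma mgfaux_key_ineq {u v : ℝ} (h : |u| ≤ v) :
    v ^ 2 * (Real.exp u - u - 1) ≤ u ^ 2 * (Real.exp v - v - 1) := by
  have hv : 0 ≤ v := le_trans (abs_nonneg u) h
  rw [mgfaux_exp_sub_tsum u, mgfaux_exp_sub_tsum v, ← tsum_mul_left, ← tsum_mul_left]
  apply Summable.tsum_le_tsum _ ((mgfaux_summ2 u).mul_left _) ((mgfaux_summ2 v).mul_left _)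
  intro n
  rw [← mul_div_assoc, ← mul_div_assoc]
  apply div_le_div_of_nonneg_right ?_ (by positivity)
  have h1 : u ^ n ≤ v ^ n := by
    calc u ^ n ≤ |u ^ n| := le_abs_self _
    _ = |u| ^ n := by rw [abs_pow]
    _ ≤ v ^ n := pow_le_pow_left₀ (abs_nonneg u) h n
  calc v ^ 2 * u ^ (n + 2) = u ^ 2 * v ^ 2 * u ^ n := by ring
  _ ≤ u ^ 2 * v ^ 2 * v ^ n := mul_le_mul_of_nonneg_left h1 (by positivity)
  _ = u ^ 2 * v ^ (n + 2) := by ring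

lemma mgfaux_bennett {Z : Type*} [Fintype Z] (ρ f : Z → ℝ) (M V lam : ℝ)
    (hM : 0 < M) (hlam : 0 < lam) (hρ0 : ∀ z, 0 ≤ ρ z) (hρ1 : ∑ z, ρ z = 1)
    (hmean : ∑ z, ρ z * f z = 0) (hbd : ∀ z, |f z| ≤ M)
    (hvar : ∑ z, ρ z * f z ^ 2 ≤ V) :
    ∑ z, ρ z * Real.exp (lam * f z)
      ≤ Real.exp (V / M ^ 2 * (Real.exp (lam * M) - lam * M - 1)) := by
  set E := Real.exp (lam * M) - lam * M - 1 with hE_def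
  have hE : 0 ≤ E := by
    have := Real.add_one_le_exp (lam * M); rw [hE_def]; linarith
  have hM2 : (0:ℝ) < M ^ 2 := by positivity
  have hpt : ∀ z, Real.exp (lam * f z) ≤ 1 + lam * f z + f z ^ 2 / M ^ 2 * E := by
    intro z
    have habs : |lam * f z| ≤ lam * M := by
      rw [abs_mul, abs_of_pos hlam]
      exact mul_le_mul_of_nonneg_left (hbd z) hlam.le
    have hk := mgfaux_key_ineq habs
    have h2 : lam ^ 2 * (M ^ 2 * (Real.exp (lam * f z) - lam * f z - 1))
        ≤ lam ^ 2 * (f z ^ 2 * E) := by nlinarith [hk]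
    have h3 := le_of_mul_le_mul_left h2 (by positivity : (0:ℝ) < lam ^ 2)
    have h4 : Real.exp (lam * f z) - lam * f z - 1 ≤ f z ^ 2 / M ^ 2 * E := by
      rw [div_mul_eq_mul_div, le_div_iff₀ hM2]
      nlinarith [h3]
    linarith
  have hVE : ∑ z, ρ z * f z ^ 2 * (E / M ^ 2) ≤ V * (E / M ^ 2) := by
    rw [← Finset.sum_mul]
    exact mul_le_mul_of_nonneg_right hvar (div_nonneg hE hM2.le)
  calc ∑ z, ρ z * Real.exp (lam * f z)
      ≤ ∑ z, ρ z * (1 + lam * f z + f z ^ 2 / M ^ 2 * E) :=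
        Finset.sum_le_sum fun z _ => mul_le_mul_of_nonneg_left (hpt z) (hρ0 z)
    _ = (∑ z, ρ z) + lam * (∑ z, ρ z * f z) + ∑ z, ρ z * f z ^ 2 * (E / M ^ 2) := by
        rw [Finset.mul_sum, ← Finset.sum_add_distrib, ← Finset.sum_add_distrib]
        apply Finset.sum_congr rfl; intro z _; ring
    _ ≤ 1 + 0 + V * (E / M ^ 2) := by rw [hρ1, hmean, mul_zero]; linarith [hVE]
    _ ≤ Real.exp (V / M ^ 2 * E) := by
        have := Real.add_one_le_exp (V / M ^ 2 * E)
        have he : V * (E / M ^ 2) = V / M ^ 2 * E := by ring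
        linarith

section

variable {Z : Type*} [Fintype Z]

lemma mgfaux_sum_snoc (n : ℕ) (F : (Fin (n + 2) → Z) → ℝ) :
    ∑ x : Fin (n + 2) → Z, F x = ∑ x : Fin (n + 1) → Z, ∑ y : Z, F (Fin.snoc x y) := by
  rw [← Fintype.sum_equiv (Fin.snocEquiv (fun _ : Fin (n + 2) => Z))
    (fun p => F (Fin.snoc p.2 p.1)) F (fun p => rfl)]
  rw [Fintype.sum_prod_type]
  exact Finset.sum_comm

lemma mgfaux_snoc_zero (n : ℕ) (x : Fin (n + 1) → Z) (y : Z) :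
    (Fin.snoc x y : Fin (n + 2) → Z) 0 = x 0 := by
  rw [← Fin.castSucc_zero, Fin.snoc_castSucc]

lemma mgfaux_prod_snoc (n : ℕ) (f : ℕ → Z → Z → ℝ) (x : Fin (n + 1) → Z) (y : Z) :
    (∏ i : Fin (n + 1), f i ((Fin.snoc x y : Fin (n+2) → Z) i.castSucc)
        ((Fin.snoc x y : Fin (n+2) → Z) i.succ)) =
      (∏ i : Fin n, f i (x i.castSucc) (x i.succ)) * f n (x (Fin.last n)) y := by
  rw [Fin.prod_univ_castSucc]
  simp [Fin.snoc_castSucc, Fin.succ_castSucc, Fin.succ_last, -Fin.castSucc_succ]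

lemma mgfaux_sum_snoc_fin (n : ℕ) (f : ℕ → Z → Z → ℝ) (x : Fin (n + 1) → Z) (y : Z) :
    (∑ i : Fin (n + 1), f i ((Fin.snoc x y : Fin (n+2) → Z) i.castSucc)
        ((Fin.snoc x y : Fin (n+2) → Z) i.succ)) =
      (∑ i : Fin n, f i (x i.castSucc) (x i.succ)) + f n (x (Fin.last n)) y := by
  rw [Fin.sum_univ_castSucc]
  simp [Fin.snoc_castSucc, Fin.succ_castSucc, Fin.succ_last, -Fin.castSucc_succ]

lemma mgfaux_pathWeight_snoc (n : ℕ) (μ : Z → ℝ) (K : ℕ → Z → Z → ℝ)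
    (x : Fin (n + 1) → Z) (y : Z) :
    pathWeight (n + 1) μ K (Fin.snoc x y) =
      pathWeight n μ K x * K n (x (Fin.last n)) y := by
  unfold pathWeight
  rw [mgfaux_prod_snoc, mgfaux_snoc_zero]
  ring

lemma mgfaux_pathWeight_nonneg (n : ℕ) (μ : Z → ℝ) (K : ℕ → Z → Z → ℝ)
    (hμ0 : ∀ z, 0 ≤ μ z) (hK0 : ∀ i, i < n → ∀ z y, 0 ≤ K i z y) (x : Fin (n + 1) → Z) :
    0 ≤ pathWeight n μ K x :=
  mul_nonneg (hμ0 _) (Finset.prod_nonneg fun i _ => hK0 i.1 i.2 _ _)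

lemma mgfaux_sum_fin_one (F : (Fin 1 → Z) → ℝ) :
    ∑ x : Fin 1 → Z, F x = ∑ z : Z, F (fun _ => z) := by
  apply Fintype.sum_equiv (Equiv.funUnique (Fin 1) Z)
  intro x
  congr 1
  ext i
  simp [Equiv.funUnique, Subsingleton.elim i 0]

lemma mgfaux_mass (n : ℕ) (μ : Z → ℝ) (K : ℕ → Z → Z → ℝ)
    (hμ1 : ∑ z, μ z = 1) (hK1 : ∀ i, i < n → ∀ z, ∑ y, K i z y = 1) :
    ∑ x : Fin (n + 1) → Z, pathWeight n μ K x = 1 := by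
  induction n with
  | zero =>
    rw [mgfaux_sum_fin_one]
    simpa [pathWeight] using hμ1
  | succ n IH =>
    rw [mgfaux_sum_snoc]
    have hin : ∀ x : Fin (n + 1) → Z,
        ∑ y, pathWeight (n + 1) μ K (Fin.snoc x y) = pathWeight n μ K x := by
      intro x
      calc ∑ y, pathWeight (n + 1) μ K (Fin.snoc x y)
          = ∑ y, pathWeight n μ K x * K n (x (Fin.last n)) y := by
            exact Finset.sum_congr rfl fun y _ => mgfaux_pathWeight_snoc n μ K x y
        _ = pathWeight n μ K x * ∑ y, K n (x (Fin.last n)) y := by rw [Finset.mul_sum]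
        _ = pathWeight n μ K x := by rw [hK1 n (by omega) _, mul_one]
    rw [Finset.sum_congr rfl fun x _ => hin x]
    exact IH (fun i hi => hK1 i (by omega))

lemma mgfaux_mart (n : ℕ) (μ : Z → ℝ) (K : ℕ → Z → Z → ℝ) (d0 : Z → ℝ) (d : ℕ → Z → Z → ℝ)
    (hμ1 : ∑ z, μ z = 1) (hK1 : ∀ i, i < n → ∀ z, ∑ y, K i z y = 1)
    (h0 : ∑ z, μ z * d0 z = 0) (hd : ∀ i, i < n → ∀ z, ∑ y, K i z y * d i z y = 0) :
    ∑ x : Fin (n + 1) → Z, pathWeight n μ K x *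
      (d0 (x 0) + ∑ i : Fin n, d i (x i.castSucc) (x i.succ)) = 0 := by
  induction n with
  | zero =>
    rw [mgfaux_sum_fin_one]
    simpa [pathWeight] using h0
  | succ n IH =>
    rw [mgfaux_sum_snoc]
    have hin : ∀ x : Fin (n + 1) → Z,
        (∑ y, pathWeight (n + 1) μ K (Fin.snoc x y) *
          (d0 ((Fin.snoc x y : Fin (n+2) → Z) 0) +
            ∑ i : Fin (n + 1), d i ((Fin.snoc x y : Fin (n+2) → Z) i.castSucc)
              ((Fin.snoc x y : Fin (n+2) → Z) i.succ)))
        = pathWeight n μ K x *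
            (d0 (x 0) + ∑ i : Fin n, d i (x i.castSucc) (x i.succ)) := by
      intro x
      have e1 : ∀ y : Z, pathWeight (n + 1) μ K (Fin.snoc x y) *
          (d0 ((Fin.snoc x y : Fin (n+2) → Z) 0) +
            ∑ i : Fin (n + 1), d i ((Fin.snoc x y : Fin (n+2) → Z) i.castSucc)
              ((Fin.snoc x y : Fin (n+2) → Z) i.succ))
          = (pathWeight n μ K x *
              (d0 (x 0) + ∑ i : Fin n, d i (x i.castSucc) (x i.succ))) *
                K n (x (Fin.last n)) y
            + pathWeight n μ K x *
                (K n (x (Fin.last n)) y * d n (x (Fin.last n)) y) := by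
        intro y
        rw [mgfaux_pathWeight_snoc, mgfaux_sum_snoc_fin, mgfaux_snoc_zero]
        ring
      rw [Finset.sum_congr rfl fun y _ => e1 y, Finset.sum_add_distrib,
        ← Finset.mul_sum, ← Finset.mul_sum, hK1 n (by omega) _, hd n (by omega) _,
        mul_one, mul_zero, add_zero]
    rw [Finset.sum_congr rfl fun x _ => hin x]
    exact IH (fun i hi => hK1 i (by omega)) (fun i hi => hd i (by omega))

lemma mgfaux_chain (n : ℕ) (μ : Z → ℝ) (K : ℕ → Z → Z → ℝ) (g0 : Z → ℝ)
    (g : ℕ → Z → Z → ℝ) (B : ℝ)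
    (hμ0 : ∀ z, 0 ≤ μ z) (hK0 : ∀ i, i < n → ∀ z y, 0 ≤ K i z y)
    (hg0 : ∀ y, 0 ≤ g0 y) (hg : ∀ i z y, 0 ≤ g i z y) (hB : 0 ≤ B)
    (hbase : ∑ z, μ z * g0 z ≤ B)
    (hstep : ∀ i, i < n → ∀ z, ∑ y, K i z y * g i z y ≤ B) :
    ∑ x : Fin (n + 1) → Z, pathWeight n μ K x *
      (g0 (x 0) * ∏ i : Fin n, g i (x i.castSucc) (x i.succ)) ≤ B ^ (n + 1) := by
  induction n with
  | zero =>
    rw [mgfaux_sum_fin_one, pow_one]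
    simpa [pathWeight] using hbase
  | succ n IH =>
    rw [mgfaux_sum_snoc]
    have hwg : ∀ x : Fin (n + 1) → Z, 0 ≤ pathWeight n μ K x *
        (g0 (x 0) * ∏ i : Fin n, g i (x i.castSucc) (x i.succ)) :=
      fun x => mul_nonneg
        (mgfaux_pathWeight_nonneg n μ K hμ0 (fun i hi => hK0 i (by omega)) x)
        (mul_nonneg (hg0 _) (Finset.prod_nonneg fun i _ => hg _ _ _))
    have hin : ∀ x : Fin (n + 1) → Z,
        (∑ y, pathWeight (n + 1) μ K (Fin.snoc x y) *
          (g0 ((Fin.snoc x y : Fin (n+2) → Z) 0) *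
            ∏ i : Fin (n + 1), g i ((Fin.snoc x y : Fin (n+2) → Z) i.castSucc)
              ((Fin.snoc x y : Fin (n+2) → Z) i.succ)))
        = (pathWeight n μ K x *
            (g0 (x 0) * ∏ i : Fin n, g i (x i.castSucc) (x i.succ))) *
          ∑ y, K n (x (Fin.last n)) y * g n (x (Fin.last n)) y := by
      intro x
      rw [Finset.mul_sum]
      apply Finset.sum_congr rfl
      intro y _
      rw [mgfaux_pathWeight_snoc, mgfaux_prod_snoc, mgfaux_snoc_zero]
      ring
    rw [Finset.sum_congr rfl fun x _ => hin x]
    calc ∑ x : Fin (n + 1) → Z, (pathWeight n μ K x *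
            (g0 (x 0) * ∏ i : Fin n, g i (x i.castSucc) (x i.succ))) *
          ∑ y, K n (x (Fin.last n)) y * g n (x (Fin.last n)) y
        ≤ ∑ x : Fin (n + 1) → Z, (pathWeight n μ K x *
            (g0 (x 0) * ∏ i : Fin n, g i (x i.castSucc) (x i.succ))) * B :=
          Finset.sum_le_sum fun x _ =>
            mul_le_mul_of_nonneg_left (hstep n (by omega) _) (hwg x)
      _ = (∑ x : Fin (n + 1) → Z, pathWeight n μ K x *
            (g0 (x 0) * ∏ i : Fin n, g i (x i.castSucc) (x i.succ))) * B := by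
          rw [Finset.sum_mul]
      _ ≤ B ^ (n + 1) * B :=
          mul_le_mul_of_nonneg_right
            (IH (fun i hi => hK0 i (by omega)) (fun i hi => hstep i (by omega))) hB
      _ = B ^ (n + 2) := by ring

end

end MgfAux

/-- **MGF bound for functionals of a time-inhomogeneous Markov chain.**
Steps are 0-based: the horizon is `H = N + 1`, `P 0, …, P (N-1)` are the transition
matrices (the paper's `P₁, …, P_{H−1}`), `ν i` is a stationary distribution of `P i`,
and `Π' i` is the matrix all of whose rows equal `ν i`.  The measure `P_{ℓ−1}(z,·)`
(with `P₀(z,·) = μ`) is `μ` for `ℓ₀ = 0` and the row `P (ℓ₀ − 1) z` for `ℓ₀ ≥ 1`. -/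
theorem mgf_bound_inhomogeneous_markov
    {Z : Type*} [Fintype Z] [DecidableEq Z] [Nonempty Z]
    (N : ℕ)
    (μ : Z → ℝ) (hμ : IsPMF μ)
    (P : ℕ → Matrix Z Z ℝ) (hP : ∀ i < N, IsRowStochastic fun x y => P i x y)
    (ν : ℕ → Z → ℝ)
    (hν : ∀ i < N, IsPMF (ν i) ∧ ∀ y, ∑ x, ν i x * P i x y = ν i y)
    (Pi : ℕ → Matrix Z Z ℝ) (hPi : ∀ i, Pi i = Matrix.of fun _ y => ν i y)
    (φ : ℕ → Z → ℝ)
    (ψ : ℕ → Z → ℝ)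
    (hψ : ∀ ℓ, ψ ℓ = ∑ h ∈ Finset.Icc ℓ N, (centeredProd P Pi ℓ h).mulVec (φ h))
    (V M : ℝ)
    (hV : V = Finset.univ.sup' Finset.univ_nonempty
      (fun p : Z × Fin (N + 1) =>
        varPMF (if p.2.val = 0 then μ else fun z => P (p.2.val - 1) p.1 z) (ψ p.2.val)))
    (hM : M = 2 * Finset.univ.sup' Finset.univ_nonempty
      (fun ℓ : Fin (N + 1) => supNorm (ψ ℓ.val)))
    (hMpos : 0 < M)
    (lam : ℝ) (hlam : 0 < lam) :
    (∑ x : Fin (N + 1) → Z,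
        pathWeight N μ (fun i a b => P i a b) x *
          Real.exp (lam * ((∑ h : Fin (N + 1), φ h.val (x h)) -
            pathExp N μ (fun i a b => P i a b) (fun y => ∑ h : Fin (N + 1), φ h.val (y h)))))
      ≤ Real.exp ((N + 1) * V / M ^ 2 * (Real.exp (lam * M) - lam * M - 1)) := by
  obtain ⟨hμ0, hμ1⟩ := hμ
  -- ψ at time N+1 vanishes
  have hψ_top : ∀ z, ψ (N + 1) z = 0 := by
    intro z
    rw [hψ]
    rw [Finset.Icc_eq_empty (by omega)]
    simp
  -- the recursion ψ ℓ = φ ℓ + (P ℓ − Π ℓ) ψ (ℓ+1) for ℓ ≤ N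
  have hψrec : ∀ ℓ, ℓ ≤ N → ψ ℓ = φ ℓ + (P ℓ - Pi ℓ).mulVec (ψ (ℓ + 1)) := by
    intro ℓ hℓ
    have hnotmem : ℓ ∉ Finset.Icc (ℓ + 1) N := by simp
    have e1 : Finset.Icc ℓ N = insert ℓ (Finset.Icc (ℓ + 1) N) := by
      ext k; simp [Finset.mem_Icc]; omega
    rw [hψ ℓ, e1, Finset.sum_insert hnotmem]
    congr 1
    · rw [show centeredProd P Pi ℓ ℓ = 1 by simp [centeredProd], Matrix.one_mulVec]
    · rw [hψ (ℓ + 1)]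
      have e2 : ∀ h ∈ Finset.Icc (ℓ + 1) N,
          (centeredProd P Pi ℓ h).mulVec (φ h)
            = (P ℓ - Pi ℓ).mulVec ((centeredProd P Pi (ℓ + 1) h).mulVec (φ h)) := by
        intro h hh
        rw [Finset.mem_Icc] at hh
        have e3 : centeredProd P Pi ℓ h = (P ℓ - Pi ℓ) * centeredProd P Pi (ℓ + 1) h := by
          unfold centeredProd
          rw [show h - ℓ = (h - (ℓ + 1)) + 1 by omega, List.range'_succ, List.map_cons,
            List.prod_cons]
        rw [e3, Matrix.mulVec_mulVec]
      rw [Finset.sum_congr rfl e2]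
      have := map_sum ((P ℓ - Pi ℓ).mulVecLin)
        (fun h => (centeredProd P Pi (ℓ + 1) h).mulVec (φ h)) (Finset.Icc (ℓ + 1) N)
      simp only [Matrix.mulVecLin_apply] at this
      exact this.symm
  -- pointwise form of the recursion
  have hφpt : ∀ ℓ, ℓ ≤ N → ∀ z, φ ℓ z
      = ψ ℓ z - (∑ y, P ℓ z y * ψ (ℓ + 1) y) + (∑ y, ν ℓ y * ψ (ℓ + 1) y) := by
    intro ℓ hℓ z
    have h1 := congrFun (hψrec ℓ hℓ) z
    simp only [_root_.Pi.add_apply, Matrix.mulVec, dotProduct, Matrix.sub_apply, hPi ℓ,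
      Matrix.of_apply, sub_mul, Finset.sum_sub_distrib] at h1
    linarith
  -- sup-norm control
  have hsup : ∀ k, k ≤ N → ∀ y : Z, |ψ k y| ≤ M / 2 := by
    intro k hk y
    have h1 : |ψ k y| ≤ supNorm (ψ k) := by
      unfold supNorm
      exact Finset.le_sup' (fun z => |ψ k z|) (Finset.mem_univ y)
    have h2 : supNorm (ψ ((⟨k, by omega⟩ : Fin (N + 1)) : Fin (N + 1)).val)
        ≤ Finset.univ.sup' Finset.univ_nonempty (fun ℓ : Fin (N + 1) => supNorm (ψ ℓ.val)) :=
      Finset.le_sup' (fun ℓ : Fin (N + 1) => supNorm (ψ ℓ.val))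
        (Finset.mem_univ (⟨k, by omega⟩ : Fin (N + 1)))
    simp only at h2
    rw [hM] at *
    linarith
  have hmean_bd : ∀ (ρ : Z → ℝ), (∀ z, 0 ≤ ρ z) → (∑ z, ρ z = 1) →
      ∀ k, k ≤ N → |∑ w, ρ w * ψ k w| ≤ M / 2 := by
    intro ρ hρ0 hρ1 k hk
    calc |∑ w, ρ w * ψ k w| ≤ ∑ w, |ρ w * ψ k w| := Finset.abs_sum_le_sum_abs _ _
      _ = ∑ w, ρ w * |ψ k w| := by
          apply Finset.sum_congr rfl; intro w _; rw [abs_mul, abs_of_nonneg (hρ0 w)]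
      _ ≤ ∑ w, ρ w * (M / 2) :=
          Finset.sum_le_sum fun w _ => mul_le_mul_of_nonneg_left (hsup k hk w) (hρ0 w)
      _ = M / 2 := by rw [← Finset.sum_mul, hρ1, one_mul]
  have habs_sub : ∀ a b : ℝ, |a| ≤ M / 2 → |b| ≤ M / 2 → |a - b| ≤ M := by
    intro a b ha hb
    have := abs_sub a b
    linarith [abs_sub_abs_le_abs_sub a b, abs_sub a b]
  -- centered second moment equals variance
  have hvarc : ∀ (ρ f : Z → ℝ), (∑ z, ρ z = 1) →
      ∑ z, ρ z * (f z - ∑ w, ρ w * f w) ^ 2 = varPMF ρ f := by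
    intro ρ f hρ1
    have e : ∀ z, ρ z * (f z - ∑ w, ρ w * f w) ^ 2
        = ρ z * f z ^ 2 - 2 * (∑ w, ρ w * f w) * (ρ z * f z)
            + (∑ w, ρ w * f w) ^ 2 * ρ z := fun z => by ring
    rw [Finset.sum_congr rfl fun z _ => e z]
    rw [Finset.sum_add_distrib, Finset.sum_sub_distrib, ← Finset.mul_sum, ← Finset.mul_sum,
      hρ1, varPMF]
    ring
  -- martingale-difference means vanish
  have hmart0 : ∑ z, μ z * (ψ 0 z - ∑ w, μ w * ψ 0 w) = 0 := by
    simp only [mul_sub]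
    rw [Finset.sum_sub_distrib, ← Finset.sum_mul, hμ1, one_mul, sub_self]
  have hmartk : ∀ i, i < N → ∀ z,
      ∑ y, P i z y * (ψ (i + 1) y - ∑ w, P i z w * ψ (i + 1) w) = 0 := by
    intro i hi z
    simp only [mul_sub]
    rw [Finset.sum_sub_distrib, ← Finset.sum_mul, (hP i hi).2 z, one_mul, sub_self]
  -- decomposition of the path functional
  have hdecomp : ∀ x : Fin (N + 1) → Z,
      (∑ h : Fin (N + 1), φ h.val (x h))
        = ((ψ 0 (x 0) - ∑ z, μ z * ψ 0 z)
            + ∑ i : Fin N, (ψ (i.val + 1) (x i.succ)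
                - ∑ w, P i.val (x i.castSucc) w * ψ (i.val + 1) w))
          + ((∑ z, μ z * ψ 0 z)
            + ∑ h : Fin (N + 1), (∑ y, ν h.val y * ψ (h.val + 1) y)) := by
    intro x
    have e1 : ∀ h : Fin (N + 1), φ h.val (x h)
        = ψ h.val (x h) - (∑ y, P h.val (x h) y * ψ (h.val + 1) y)
            + (∑ y, ν h.val y * ψ (h.val + 1) y) :=
      fun h => hφpt h.val (by omega) (x h)
    rw [Finset.sum_congr rfl fun h _ => e1 h, Finset.sum_add_distrib, Finset.sum_sub_distrib]
    have e2 : ∑ h : Fin (N + 1), ψ h.val (x h)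
        = ψ 0 (x 0) + ∑ i : Fin N, ψ (i.val + 1) (x i.succ) := by
      rw [Fin.sum_univ_succ]
      simp
    have e3 : ∑ h : Fin (N + 1), (∑ y, P h.val (x h) y * ψ (h.val + 1) y)
        = ∑ i : Fin N, ∑ y, P i.val (x i.castSucc) y * ψ (i.val + 1) y := by
      rw [Fin.sum_univ_castSucc]
      have : ∑ y, P (Fin.last N).val (x (Fin.last N)) y * ψ ((Fin.last N).val + 1) y = 0 := by
        simp [Fin.val_last, hψ_top]
      rw [this, add_zero]
      simp
    rw [e2, e3, Finset.sum_sub_distrib]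
    ring
  -- the path expectation equals the constant C
  have hmass : ∑ x : Fin (N + 1) → Z, pathWeight N μ (fun i a b => P i a b) x = 1 :=
    mgfaux_mass N μ _ hμ1 (fun i hi z => (hP i hi).2 z)
  have hmart := mgfaux_mart N μ (fun i a b => P i a b)
    (fun yy => ψ 0 yy - ∑ w, μ w * ψ 0 w)
    (fun k z yy => ψ (k + 1) yy - ∑ w, P k z w * ψ (k + 1) w)
    hμ1 (fun i hi z => (hP i hi).2 z) hmart0 hmartk
  have hPE : pathExp N μ (fun i a b => P i a b) (fun y => ∑ h : Fin (N + 1), φ h.val (y h))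
      = (∑ z, μ z * ψ 0 z)
          + ∑ h : Fin (N + 1), (∑ y, ν h.val y * ψ (h.val + 1) y) := by
    unfold pathExp
    beta_reduce at hmart ⊢
    have e : ∀ x : Fin (N + 1) → Z,
        pathWeight N μ (fun i a b => P i a b) x * (∑ h : Fin (N + 1), φ h.val (x h))
          = pathWeight N μ (fun i a b => P i a b) x *
              ((ψ 0 (x 0) - ∑ z, μ z * ψ 0 z)
                + ∑ i : Fin N, (ψ (i.val + 1) (x i.succ)
                    - ∑ w, P i.val (x i.castSucc) w * ψ (i.val + 1) w))
            + pathWeight N μ (fun i a b => P i a b) x *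
                ((∑ z, μ z * ψ 0 z)
                  + ∑ h : Fin (N + 1), (∑ y, ν h.val y * ψ (h.val + 1) y)) := by
      intro x
      rw [hdecomp x]
      ring
    rw [Finset.sum_congr rfl fun x _ => e x, Finset.sum_add_distrib, ← Finset.sum_mul,
      hmass, one_mul, hmart, zero_add]
  -- rewrite the exponent
  have hexp_eq : ∀ x : Fin (N + 1) → Z,
      Real.exp (lam * ((∑ h : Fin (N + 1), φ h.val (x h)) -
          pathExp N μ (fun i a b => P i a b) (fun y => ∑ h : Fin (N + 1), φ h.val (y h))))
        = Real.exp (lam * (ψ 0 (x 0) - ∑ z, μ z * ψ 0 z))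
            * ∏ i : Fin N, Real.exp (lam * (ψ (i.val + 1) (x i.succ)
                - ∑ w, P i.val (x i.castSucc) w * ψ (i.val + 1) w)) := by
    intro x
    rw [hPE, hdecomp x, add_sub_cancel_right, mul_add, Real.exp_add, Finset.mul_sum,
      Real.exp_sum]
  rw [Finset.sum_congr rfl fun x _ => by rw [hexp_eq x]]
  -- Bennett bound for each step
  have hE : 0 ≤ Real.exp (lam * M) - lam * M - 1 := by
    have := Real.add_one_le_exp (lam * M); linarith
  have hbase : ∑ z, μ z * Real.exp (lam * (ψ 0 z - ∑ w, μ w * ψ 0 w))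
      ≤ Real.exp (V / M ^ 2 * (Real.exp (lam * M) - lam * M - 1)) := by
    apply mgfaux_bennett μ _ M V lam hMpos hlam hμ0 hμ1 hmart0
    · intro z
      exact habs_sub _ _ (hsup 0 (by omega) z) (hmean_bd μ hμ0 hμ1 0 (by omega))
    · rw [hvarc μ (ψ 0) hμ1, hV]
      have := Finset.le_sup' (fun p : Z × Fin (N + 1) =>
          varPMF (if p.2.val = 0 then μ else fun z => P (p.2.val - 1) p.1 z) (ψ p.2.val))
        (Finset.mem_univ ((Classical.arbitrary Z), (0 : Fin (N + 1))))
      refine le_trans (le_of_eq ?_) this; simp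
  have hstep : ∀ i, i < N → ∀ z,
      ∑ y, P i z y * Real.exp (lam * (ψ (i + 1) y - ∑ w, P i z w * ψ (i + 1) w))
        ≤ Real.exp (V / M ^ 2 * (Real.exp (lam * M) - lam * M - 1)) := by
    intro i hi z
    apply mgfaux_bennett (fun y => P i z y) _ M V lam hMpos hlam
      (fun y => (hP i hi).1 z y) ((hP i hi).2 z) (hmartk i hi z)
    · intro y
      exact habs_sub _ _ (hsup (i + 1) (by omega) y)
        (hmean_bd (fun w => P i z w) (fun w => (hP i hi).1 z w) ((hP i hi).2 z)
          (i + 1) (by omega))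
    · rw [hvarc (fun y => P i z y) (ψ (i + 1)) ((hP i hi).2 z), hV]
      have := Finset.le_sup' (fun p : Z × Fin (N + 1) =>
          varPMF (if p.2.val = 0 then μ else fun z => P (p.2.val - 1) p.1 z) (ψ p.2.val))
        (Finset.mem_univ (z, (⟨i + 1, by omega⟩ : Fin (N + 1))))
      refine le_trans (le_of_eq ?_) this; simp
  -- apply the chain bound
  have hchain := mgfaux_chain N μ (fun i a b => P i a b)
    (fun y => Real.exp (lam * (ψ 0 y - ∑ w, μ w * ψ 0 w)))
    (fun k z y => Real.exp (lam * (ψ (k + 1) y - ∑ w, P k z w * ψ (k + 1) w)))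
    (Real.exp (V / M ^ 2 * (Real.exp (lam * M) - lam * M - 1)))
    hμ0 (fun i hi z y => (hP i hi).1 z y)
    (fun y => (Real.exp_pos _).le) (fun i z y => (Real.exp_pos _).le)
    (Real.exp_pos _).le hbase hstep
  refine le_trans hchain ?_
  rw [← Real.exp_nat_mul]
  apply le_of_eq
  congr 1
  push_cast
  ring
end

section
/- (Variance and maximum-deviation bounds for centered Markov operators.) Let Z be a finite set, η ≥ 1, μ an η-regular PMF on Z, and P₁, …, P_{H−1} η-regular row-stochastic matrices on Z with stationary distributions ν₁, …, ν_{H−1}; let Π_h be the matrix with every row equal to ν_h and Δ_{ℓ→h} := Π_{i=ℓ}^{h−1}(P_i − Π_i) (empty product = identity). Then for every ℓ ∈ {1, …, H}, every z ∈ Z (with the convention P₀(z,·) := μ), and all φ_ℓ, …, φ_H : Z → ℝ: (i) Var_{P_{ℓ−1}(z,·)}[ Σ_{h=ℓ}^{H} Δ_{ℓ→h}φ_h ] ≤ (1 + √2·η·(2η−1))² · max_{ℓ≤h≤H} Var_{P_{ℓ−1}(z,·)}[φ_h]; and (ii) ‖ Σ_{h=ℓ}^{H} Δ_{ℓ→h}φ_h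 ‖_∞ ≤ (2η−1) · max_{ℓ≤h≤H} ‖φ_h‖_∞. -/
open Finset

/-- An `η`-regular PMF: `μ x ≤ η * μ y` for all `x, y`. -/
def IsRegularPMF {Z : Type*} [Fintype Z] (η : ℝ) (μ : Z → ℝ) : Prop :=
  IsPMF μ ∧ ∀ x y, μ x ≤ η * μ y

/-- An `η`-regular row-stochastic kernel. -/
def IsRegularKernel {Z : Type*} [Fintype Z] (η : ℝ) (P : Z → Z → ℝ) : Prop :=
  IsRowStochastic P ∧ (∀ x y, 0 < P x y) ∧
    ∀ x y z, P x y ≤ η * P x z ∧ P y x ≤ η * P z x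

section Aux

variable {Z : Type*} [Fintype Z] [Nonempty Z]

/-- Oscillation of a function on a finite nonempty type. -/
noncomputable def oscF (φ : Z → ℝ) : ℝ :=
  (Finset.univ.sup' Finset.univ_nonempty φ) - (Finset.univ.inf' Finset.univ_nonempty φ)

lemma sub_le_oscF (φ : Z → ℝ) (x y : Z) : φ x - φ y ≤ oscF φ :=
  sub_le_sub (le_sup' φ (mem_univ x)) (inf'_le φ (mem_univ y))

lemma oscF_nonneg (φ : Z → ℝ) : 0 ≤ oscF φ := by
  obtain ⟨x⟩ := (inferInstance : Nonempty Z)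
  have := sub_le_oscF φ x x
  linarith

lemma oscF_le (φ : Z → ℝ) {c : ℝ} (h : ∀ x y, φ x - φ y ≤ c) : oscF φ ≤ c := by
  obtain ⟨x, _, hx⟩ := Finset.exists_mem_eq_sup' (Finset.univ_nonempty (α := Z)) φ
  obtain ⟨y, _, hy⟩ := Finset.exists_mem_eq_inf' (Finset.univ_nonempty (α := Z)) φ
  rw [oscF, hx, hy]
  exact h x y

lemma abs_le_supNorm (φ : Z → ℝ) (z : Z) : |φ z| ≤ supNorm φ :=
  Finset.le_sup' (fun z => |φ z|) (mem_univ z)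

lemma supNorm_le (φ : Z → ℝ) {c : ℝ} (h : ∀ z, |φ z| ≤ c) : supNorm φ ≤ c :=
  sup'_le _ _ fun z _ => h z

lemma supNorm_nonneg (φ : Z → ℝ) : 0 ≤ supNorm φ := by
  obtain ⟨x⟩ := (inferInstance : Nonempty Z)
  exact (abs_nonneg _).trans (abs_le_supNorm φ x)

lemma oscF_le_two_supNorm (φ : Z → ℝ) : oscF φ ≤ 2 * supNorm φ := by
  apply oscF_le
  intro x y
  have hx := abs_le.mp (abs_le_supNorm φ x)
  have hy := abs_le.mp (abs_le_supNorm φ y)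
  linarith [hx.1, hx.2, hy.1, hy.2]

/-- Bound a zero-sum row applied to a function via the oscillation. -/
lemma rowBound (c ψ : Z → ℝ) (hc : ∑ w, c w = 0) {C : ℝ}
    (hC : ∑ w, |c w| ≤ C) : |∑ w, c w * ψ w| ≤ C * (oscF ψ / 2) := by
  set M := Finset.univ.sup' Finset.univ_nonempty ψ with hM
  set m := Finset.univ.inf' Finset.univ_nonempty ψ with hm
  have hosc : oscF ψ = M - m := rfl
  have key : ∀ w, |ψ w - (M + m) / 2| ≤ oscF ψ / 2 := by
    intro w
    have h1 : ψ w ≤ M := le_sup' ψ (mem_univ w)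
    have h2 : m ≤ ψ w := inf'_le ψ (mem_univ w)
    rw [hosc, abs_le]
    constructor <;> linarith
  have e1 : ∑ w, c w * ψ w = ∑ w, c w * (ψ w - (M + m) / 2) := by
    have : ∑ w, c w * (ψ w - (M + m) / 2)
        = (∑ w, c w * ψ w) - (∑ w, c w) * ((M + m) / 2) := by
      rw [Finset.sum_mul]
      rw [← Finset.sum_sub_distrib]
      exact Finset.sum_congr rfl fun w _ => by ring
    rw [this, hc]
    ring
  rw [e1]
  calc |∑ w, c w * (ψ w - (M + m) / 2)| ≤ ∑ w, |c w * (ψ w - (M + m) / 2)| :=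
        Finset.abs_sum_le_sum_abs _ _
    _ = ∑ w, |c w| * |ψ w - (M + m) / 2| := by
        exact Finset.sum_congr rfl fun w _ => abs_mul _ _
    _ ≤ ∑ w, |c w| * (oscF ψ / 2) :=
        Finset.sum_le_sum fun w _ => mul_le_mul_of_nonneg_left (key w) (abs_nonneg _)
    _ = (∑ w, |c w|) * (oscF ψ / 2) := (Finset.sum_mul _ _ _).symm
    _ ≤ C * (oscF ψ / 2) := by
        apply mul_le_mul_of_nonneg_right hC
        have := oscF_nonneg ψ
        linarith

lemma varPMF_eq (ρ φ : Z → ℝ) (h1 : ∑ z, ρ z = 1) :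
    varPMF ρ φ = ∑ z, ρ z * (φ z - ∑ w, ρ w * φ w) ^ 2 := by
  set m := ∑ w, ρ w * φ w with hm
  have : ∀ z, ρ z * (φ z - m) ^ 2
      = ρ z * φ z ^ 2 - 2 * m * (ρ z * φ z) + m ^ 2 * ρ z := fun z => by ring
  rw [varPMF, Finset.sum_congr rfl fun z _ => this z, Finset.sum_add_distrib,
    Finset.sum_sub_distrib, ← Finset.mul_sum, ← Finset.mul_sum, h1]
  ring

lemma varPMF_nonneg (ρ φ : Z → ℝ) (h0 : ∀ z, 0 ≤ ρ z) (h1 : ∑ z, ρ z = 1) :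
    0 ≤ varPMF ρ φ := by
  rw [varPMF_eq ρ φ h1]
  exact Finset.sum_nonneg fun z _ => mul_nonneg (h0 z) (sq_nonneg _)

lemma varPMF_le_sq_supNorm (ρ φ : Z → ℝ) (h0 : ∀ z, 0 ≤ ρ z) (h1 : ∑ z, ρ z = 1) :
    varPMF ρ φ ≤ supNorm φ ^ 2 := by
  have h : ∑ z, ρ z * φ z ^ 2 ≤ supNorm φ ^ 2 := by
    calc ∑ z, ρ z * φ z ^ 2 ≤ ∑ z, ρ z * supNorm φ ^ 2 := by
          apply Finset.sum_le_sum
          intro z _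
          apply mul_le_mul_of_nonneg_left _ (h0 z)
          calc φ z ^ 2 = |φ z| ^ 2 := (sq_abs _).symm
            _ ≤ supNorm φ ^ 2 :=
              pow_le_pow_left₀ (abs_nonneg _) (abs_le_supNorm φ z) 2
      _ = supNorm φ ^ 2 := by rw [← Finset.sum_mul, h1, one_mul]
  have := sq_nonneg (∑ z, ρ z * φ z)
  rw [varPMF]
  linarith

lemma sqrtVar_add (ρ f g : Z → ℝ) (h0 : ∀ z, 0 ≤ ρ z) (h1 : ∑ z, ρ z = 1) :
    Real.sqrt (varPMF ρ (f + g))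
      ≤ Real.sqrt (varPMF ρ f) + Real.sqrt (varPMF ρ g) := by
  set mf := ∑ w, ρ w * f w with hmf
  set mg := ∑ w, ρ w * g w with hmg
  set F : Z → ℝ := fun z => Real.sqrt (ρ z) * (f z - mf) with hF
  set G : Z → ℝ := fun z => Real.sqrt (ρ z) * (g z - mg) with hG
  have hsq : ∀ z, Real.sqrt (ρ z) ^ 2 = ρ z := fun z => Real.sq_sqrt (h0 z)
  have hf : varPMF ρ f = ∑ z, F z ^ 2 := by
    rw [varPMF_eq ρ f h1]
    exact Finset.sum_congr rfl fun z _ => by rw [hF, mul_pow, hsq]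
  have hg : varPMF ρ g = ∑ z, G z ^ 2 := by
    rw [varPMF_eq ρ g h1]
    exact Finset.sum_congr rfl fun z _ => by rw [hG, mul_pow, hsq]
  have hmean : ∑ w, ρ w * (f + g) w = mf + mg := by
    rw [hmf, hmg, ← Finset.sum_add_distrib]
    exact Finset.sum_congr rfl fun w _ => by simp [Pi.add_apply]; ring
  have hfg : varPMF ρ (f + g) = ∑ z, (F z + G z) ^ 2 := by
    rw [varPMF_eq ρ (f + g) h1, hmean]
    refine Finset.sum_congr rfl fun z _ => ?_
    have : F z + G z = Real.sqrt (ρ z) * ((f + g) z - (mf + mg)) := by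
      rw [hF, hG]; simp [Pi.add_apply]; ring
    rw [this, mul_pow, hsq]
  have hFnn : (0:ℝ) ≤ ∑ z, F z ^ 2 := Finset.sum_nonneg fun z _ => sq_nonneg _
  have hGnn : (0:ℝ) ≤ ∑ z, G z ^ 2 := Finset.sum_nonneg fun z _ => sq_nonneg _
  have hcs : ∑ z, F z * G z ≤ Real.sqrt (∑ z, F z ^ 2) * Real.sqrt (∑ z, G z ^ 2) := by
    have h2 := Finset.sum_mul_sq_le_sq_mul_sq Finset.univ F G
    calc ∑ z, F z * G z ≤ |∑ z, F z * G z| := le_abs_self _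
      _ = Real.sqrt ((∑ z, F z * G z) ^ 2) := (Real.sqrt_sq_eq_abs _).symm
      _ ≤ Real.sqrt ((∑ z, F z ^ 2) * ∑ z, G z ^ 2) := Real.sqrt_le_sqrt h2
      _ = Real.sqrt (∑ z, F z ^ 2) * Real.sqrt (∑ z, G z ^ 2) := Real.sqrt_mul hFnn _
  have hexp : ∑ z, (F z + G z) ^ 2
      = (∑ z, F z ^ 2) + 2 * (∑ z, F z * G z) + ∑ z, G z ^ 2 := by
    rw [Finset.mul_sum, ← Finset.sum_add_distrib, ← Finset.sum_add_distrib]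
    exact Finset.sum_congr rfl fun z _ => by ring
  have hbound : varPMF ρ (f + g)
      ≤ (Real.sqrt (∑ z, F z ^ 2) + Real.sqrt (∑ z, G z ^ 2)) ^ 2 := by
    rw [hfg, hexp]
    have e1 : Real.sqrt (∑ z, F z ^ 2) ^ 2 = ∑ z, F z ^ 2 := Real.sq_sqrt hFnn
    have e2 : Real.sqrt (∑ z, G z ^ 2) ^ 2 = ∑ z, G z ^ 2 := Real.sq_sqrt hGnn
    nlinarith [hcs]
  calc Real.sqrt (varPMF ρ (f + g))
      ≤ Real.sqrt ((Real.sqrt (∑ z, F z ^ 2) + Real.sqrt (∑ z, G z ^ 2)) ^ 2) :=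
        Real.sqrt_le_sqrt hbound
    _ = Real.sqrt (∑ z, F z ^ 2) + Real.sqrt (∑ z, G z ^ 2) :=
        Real.sqrt_sq (by positivity)
    _ = Real.sqrt (varPMF ρ f) + Real.sqrt (varPMF ρ g) := by rw [hf, hg]

lemma sqrtVar_sum (ρ : Z → ℝ) (h0 : ∀ z, 0 ≤ ρ z) (h1 : ∑ z, ρ z = 1)
    (s : Finset ℕ) (ψ : ℕ → Z → ℝ) :
    Real.sqrt (varPMF ρ (∑ h ∈ s, ψ h)) ≤ ∑ h ∈ s, Real.sqrt (varPMF ρ (ψ h)) := by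
  induction s using Finset.cons_induction with
  | empty =>
      simp only [Finset.sum_empty]
      have : varPMF ρ (0 : Z → ℝ) = 0 := by simp [varPMF]
      rw [this, Real.sqrt_zero]
  | cons a s ha ih =>
      rw [Finset.sum_cons, Finset.sum_cons]
      exact (sqrtVar_add ρ (ψ a) (∑ h ∈ s, ψ h) h0 h1).trans (by linarith)

lemma supNorm_sum (s : Finset ℕ) (ψ : ℕ → Z → ℝ) :
    supNorm (∑ h ∈ s, ψ h) ≤ ∑ h ∈ s, supNorm (ψ h) := by
  apply supNorm_le
  intro z
  calc |(∑ h ∈ s, ψ h) z| = |∑ h ∈ s, ψ h z| := by rw [Finset.sum_apply]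
    _ ≤ ∑ h ∈ s, |ψ h z| := Finset.abs_sum_le_sum_abs _ _
    _ ≤ ∑ h ∈ s, supNorm (ψ h) := Finset.sum_le_sum fun h _ => abs_le_supNorm _ z

/-- Total variation bound for two distributions minorized by `ν'/η`. -/
lemma tv_le (η : ℝ) (hη : 1 ≤ η) (p q ν' : Z → ℝ)
    (hp1 : ∑ w, p w = 1) (hq1 : ∑ w, q w = 1) (hν1 : ∑ w, ν' w = 1)
    (hminp : ∀ w, ν' w / η ≤ p w) (hminq : ∀ w, ν' w / η ≤ q w) :
    ∑ w, |p w - q w| ≤ 2 * (1 - 1 / η) := by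
  have hηpos : (0:ℝ) < η := lt_of_lt_of_le one_pos hη
  have key : ∀ w, |p w - q w| ≤ p w + q w - 2 / η * ν' w := by
    intro w
    have h1 := hminp w
    have h2 := hminq w
    have e : 2 / η * ν' w = 2 * (ν' w / η) := by ring
    rw [abs_le]
    constructor <;> linarith
  calc ∑ w, |p w - q w| ≤ ∑ w, (p w + q w - 2 / η * ν' w) :=
        Finset.sum_le_sum fun w _ => key w
    _ = (∑ w, p w) + (∑ w, q w) - 2 / η * ∑ w, ν' w := by
        rw [Finset.sum_sub_distrib, Finset.sum_add_distrib, Finset.mul_sum]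
    _ = 2 * (1 - 1 / η) := by
        rw [hp1, hq1, hν1]
        field_simp
        ring

/-- `η²`-domination between two `η`-regular PMFs. -/
lemma reg_le_reg (η : ℝ) (hη : 0 < η) (p q : Z → ℝ)
    (hp1 : ∑ w, p w = 1) (hpreg : ∀ x y, p x ≤ η * p y)
    (hq1 : ∑ w, q w = 1) (hqreg : ∀ x y, q x ≤ η * q y) :
    ∀ w, p w ≤ η ^ 2 * q w := by
  intro w
  have hcard : (0:ℝ) < (Fintype.card Z : ℝ) := by
    have := Fintype.card_pos (α := Z)
    exact_mod_cast this
  have h1 : (Fintype.card Z : ℝ) * p w ≤ η := by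
    calc (Fintype.card Z : ℝ) * p w = ∑ _x : Z, p w := by
          rw [Finset.sum_const, Finset.card_univ, nsmul_eq_mul]
      _ ≤ ∑ x : Z, η * p x := Finset.sum_le_sum fun x _ => hpreg w x
      _ = η * ∑ x, p x := (Finset.mul_sum _ _ _).symm
      _ = η := by rw [hp1, mul_one]
  have h2 : 1 ≤ η * ((Fintype.card Z : ℝ) * q w) := by
    calc (1:ℝ) = ∑ x, q x := hq1.symm
      _ ≤ ∑ _x : Z, η * q w := Finset.sum_le_sum fun x _ => hqreg x w
      _ = (Fintype.card Z : ℝ) * (η * q w) := by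
          rw [Finset.sum_const, Finset.card_univ, nsmul_eq_mul]
      _ = η * ((Fintype.card Z : ℝ) * q w) := by ring
  have h3 : (Fintype.card Z : ℝ) * p w ≤ (Fintype.card Z : ℝ) * (η ^ 2 * q w) := by
    nlinarith
  exact le_of_mul_le_mul_left h3 hcard

/-- Cauchy–Schwarz bound for a zero-sum row dominated by `η² ρ`. -/
lemma cs_row (η : ℝ) (c ρ φ : Z → ℝ) (hρ0 : ∀ z, 0 < ρ z) (h1 : ∑ z, ρ z = 1)
    (hc0 : ∑ w, c w = 0) {γ : ℝ} (hγ0 : 0 ≤ γ) (hcabs : ∑ w, |c w| ≤ 2 * γ)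
    (hcρ : ∀ w, |c w| ≤ η ^ 2 * ρ w) :
    |∑ w, c w * φ w| ≤ Real.sqrt (2 * γ * η ^ 2) * Real.sqrt (varPMF ρ φ) := by
  set m := ∑ w, ρ w * φ w with hm
  have hη2 : (0:ℝ) ≤ η ^ 2 := sq_nonneg η
  have key : ∑ w, c w * φ w
      = ∑ w, (c w / Real.sqrt (ρ w)) * (Real.sqrt (ρ w) * (φ w - m)) := by
    have e : ∀ w, (c w / Real.sqrt (ρ w)) * (Real.sqrt (ρ w) * (φ w - m))
        = c w * (φ w - m) := by
      intro w
      have hs : Real.sqrt (ρ w) ≠ 0 := ne_of_gt (Real.sqrt_pos.mpr (hρ0 w))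
      field_simp
    rw [Finset.sum_congr rfl fun w _ => e w]
    have : ∑ w, c w * (φ w - m) = (∑ w, c w * φ w) - (∑ w, c w) * m := by
      rw [Finset.sum_mul, ← Finset.sum_sub_distrib]
      exact Finset.sum_congr rfl fun w _ => by ring
    rw [this, hc0]
    ring
  have e2 : ∑ w, (Real.sqrt (ρ w) * (φ w - m)) ^ 2 = varPMF ρ φ := by
    rw [varPMF_eq ρ φ h1]
    exact Finset.sum_congr rfl fun w _ => by
      rw [mul_pow, Real.sq_sqrt (hρ0 w).le]
  have e1 : ∑ w, (c w / Real.sqrt (ρ w)) ^ 2 ≤ 2 * γ * η ^ 2 := by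
    have step : ∀ w, (c w / Real.sqrt (ρ w)) ^ 2 ≤ η ^ 2 * |c w| := by
      intro w
      have hρw := hρ0 w
      have hd : (c w / Real.sqrt (ρ w)) ^ 2 = c w ^ 2 / ρ w := by
        rw [div_pow, Real.sq_sqrt hρw.le]
      rw [hd, div_le_iff₀ hρw]
      calc c w ^ 2 = |c w| * |c w| := by rw [sq]; exact (abs_mul_abs_self _).symm
        _ ≤ |c w| * (η ^ 2 * ρ w) := mul_le_mul_of_nonneg_left (hcρ w) (abs_nonneg _)
        _ = η ^ 2 * |c w| * ρ w := by ring
    calc ∑ w, (c w / Real.sqrt (ρ w)) ^ 2 ≤ ∑ w, η ^ 2 * |c w| :=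
          Finset.sum_le_sum fun w _ => step w
      _ = η ^ 2 * ∑ w, |c w| := (Finset.mul_sum _ _ _).symm
      _ ≤ η ^ 2 * (2 * γ) := mul_le_mul_of_nonneg_left hcabs hη2
      _ = 2 * γ * η ^ 2 := by ring
  have hvnn : (0:ℝ) ≤ varPMF ρ φ := varPMF_nonneg ρ φ (fun z => (hρ0 z).le) h1
  have h2 : (∑ w, c w * φ w) ^ 2 ≤ (2 * γ * η ^ 2) * varPMF ρ φ := by
    rw [key]
    refine (Finset.sum_mul_sq_le_sq_mul_sq Finset.univ _ _).trans ?_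
    rw [e2]
    exact mul_le_mul_of_nonneg_right e1 hvnn
  calc |∑ w, c w * φ w| = Real.sqrt ((∑ w, c w * φ w) ^ 2) :=
        (Real.sqrt_sq_eq_abs _).symm
    _ ≤ Real.sqrt ((2 * γ * η ^ 2) * varPMF ρ φ) := Real.sqrt_le_sqrt h2
    _ = Real.sqrt (2 * γ * η ^ 2) * Real.sqrt (varPMF ρ φ) :=
        Real.sqrt_mul (by positivity) _

end Aux

/-- **Variance and maximum-deviation bounds for centered Markov operators.**
Everything is 0-based: the horizon is `H = N + 1`, `P 0, …, P (N-1)` are the transition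
matrices (the paper's `P₁, …, P_{H−1}`), `ν i` is a stationary distribution of `P i`,
and `Π' i` has all rows equal to `ν i`.  For `ℓ ∈ {0, …, N}` the measure `P_{ℓ−1}(z,·)`
(with `P₀(z,·) = μ`) is `μ` if `ℓ = 0` and the row `P (ℓ − 1) z` otherwise. -/
theorem variance_maxdev_centered_markov
    {Z : Type*} [Fintype Z] [DecidableEq Z] [Nonempty Z]
    (N : ℕ) (η : ℝ) (hη : 1 ≤ η)
    (μ : Z → ℝ) (hμ : IsRegularPMF η μ)
    (P : ℕ → Matrix Z Z ℝ) (hP : ∀ i < N, IsRegularKernel η fun x y => P i x y)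
    (ν : ℕ → Z → ℝ)
    (hν : ∀ i < N, IsPMF (ν i) ∧ ∀ y, ∑ x, ν i x * P i x y = ν i y)
    (Pi : ℕ → Matrix Z Z ℝ) (hPi : ∀ i, Pi i = Matrix.of fun _ y => ν i y)
    (ℓ : ℕ) (hℓ : ℓ ≤ N) (z : Z)
    (φ : ℕ → Z → ℝ) :
    varPMF (if ℓ = 0 then μ else fun w => P (ℓ - 1) z w)
        (∑ h ∈ Finset.Icc ℓ N, (centeredProd P Pi ℓ h).mulVec (φ h))
      ≤ (1 + Real.sqrt 2 * η * (2 * η - 1)) ^ 2 *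
        (Finset.Icc ℓ N).sup' (Finset.nonempty_Icc.mpr hℓ)
          (fun h => varPMF (if ℓ = 0 then μ else fun w => P (ℓ - 1) z w) (φ h))
    ∧ supNorm (∑ h ∈ Finset.Icc ℓ N, (centeredProd P Pi ℓ h).mulVec (φ h))
      ≤ (2 * η - 1) *
        (Finset.Icc ℓ N).sup' (Finset.nonempty_Icc.mpr hℓ) (fun h => supNorm (φ h)) := by
  classical
  have hηpos : (0:ℝ) < η := lt_of_lt_of_le one_pos hη
  obtain ⟨⟨hμ0, hμ1⟩, hμreg⟩ := hμ
  set ρ : Z → ℝ := if ℓ = 0 then μ else fun w => P (ℓ - 1) z w with hρdef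
  -- facts about the kernels
  have hProw1 : ∀ i, i < N → ∀ x, ∑ w, P i x w = 1 := by
    intro i hi x; obtain ⟨⟨_, h⟩, _, _⟩ := hP i hi; exact h x
  have hProw0 : ∀ i, i < N → ∀ x w, 0 < P i x w := by
    intro i hi; obtain ⟨_, h, _⟩ := hP i hi; exact h
  have hPreg1 : ∀ i, i < N → ∀ x y z', P i x y ≤ η * P i x z' := by
    intro i hi x y z'; obtain ⟨_, _, h⟩ := hP i hi; exact (h x y z').1
  have hPreg2 : ∀ i, i < N → ∀ x y z', P i y x ≤ η * P i z' x := by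
    intro i hi x y z'; obtain ⟨_, _, h⟩ := hP i hi; exact (h x y z').2
  have hν0 : ∀ i, i < N → ∀ w, 0 ≤ ν i w := fun i hi w => ((hν i hi).1.1 w)
  have hν1 : ∀ i, i < N → ∑ w, ν i w = 1 := fun i hi => ((hν i hi).1.2)
  have hνst : ∀ i, i < N → ∀ y, ∑ x, ν i x * P i x y = ν i y := fun i hi => (hν i hi).2
  -- facts about ρ
  have hρ1 : ∑ w, ρ w = 1 := by
    rw [hρdef]; split_ifs with h0
    · exact hμ1
    · exact hProw1 (ℓ - 1) (by omega) z
  have hρreg : ∀ x y, ρ x ≤ η * ρ y := by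
    rw [hρdef]; split_ifs with h0
    · exact hμreg
    · exact fun x y => hPreg1 (ℓ - 1) (by omega) z x y
  have hρ0 : ∀ w, 0 < ρ w := by
    rw [hρdef]; split_ifs with h0
    · intro w
      by_contra hw
      push_neg at hw
      have hw0 : μ w = 0 := le_antisymm hw (hμ0 w)
      have hall : ∀ x, μ x ≤ 0 := by
        intro x; have := hμreg x w; rw [hw0] at this; linarith
      have : ∑ x, μ x ≤ 0 := Finset.sum_nonpos fun x _ => hall x
      rw [hμ1] at this; linarith
    · intro w; exact hProw0 (ℓ - 1) (by omega) z w
  have hρ0le : ∀ w, 0 ≤ ρ w := fun w => (hρ0 w).le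
  -- γ
  set γ : ℝ := 1 - 1 / η with hγdef
  have hγ0 : 0 ≤ γ := by
    have : 1 / η ≤ 1 := by rw [div_le_one hηpos]; exact hη
    rw [hγdef]; linarith
  have hγη : γ * η = η - 1 := by
    rw [hγdef]; field_simp
  -- regularity of ν
  have hνreg : ∀ i, i < N → ∀ x y, ν i x ≤ η * ν i y := by
    intro i hi x y
    calc ν i x = ∑ w, ν i w * P i w x := (hνst i hi x).symm
      _ ≤ ∑ w, ν i w * (η * P i w y) :=
          Finset.sum_le_sum fun w _ =>
            mul_le_mul_of_nonneg_left (hPreg1 i hi w x y) (hν0 i hi w)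
      _ = η * ∑ w, ν i w * P i w y := by
          rw [Finset.mul_sum]; exact Finset.sum_congr rfl fun w _ => by ring
      _ = η * ν i y := by rw [hνst i hi y]
  -- minorization
  have hminor : ∀ i, i < N → ∀ x w, ν i w / η ≤ P i x w := by
    intro i hi x w
    rw [div_le_iff₀ hηpos]
    calc ν i w = ∑ x', ν i x' * P i x' w := (hνst i hi w).symm
      _ ≤ ∑ x', ν i x' * (η * P i x w) :=
          Finset.sum_le_sum fun x' _ =>
            mul_le_mul_of_nonneg_left (hPreg2 i hi w x' x) (hν0 i hi x')
      _ = (∑ x', ν i x') * (η * P i x w) := by rw [Finset.sum_mul]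
      _ = P i x w * η := by rw [hν1 i hi]; ring
  -- the centered kernel rows
  have happ : ∀ i, ∀ ψ : Z → ℝ, ∀ x,
      ((P i - Pi i).mulVec ψ) x = ∑ w, (P i x w - ν i w) * ψ w := by
    intro i ψ x
    simp [Matrix.mulVec, dotProduct, Matrix.sub_apply, hPi i, Matrix.of_apply]
  have hrow0 : ∀ i, i < N → ∀ x, ∑ w, (P i x w - ν i w) = 0 := by
    intro i hi x
    rw [Finset.sum_sub_distrib, hProw1 i hi x, hν1 i hi, sub_self]
  have htv : ∀ i, i < N → ∀ x, ∑ w, |P i x w - ν i w| ≤ 2 * γ := by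
    intro i hi x
    rw [hγdef]
    exact tv_le η hη (fun w => P i x w) (ν i) (ν i) (hProw1 i hi x) (hν1 i hi)
      (hν1 i hi) (hminor i hi x) (fun w => div_le_self (hν0 i hi w) hη)
  have htv2 : ∀ i, i < N → ∀ x y, ∑ w, |P i x w - P i y w| ≤ 2 * γ := by
    intro i hi x y
    rw [hγdef]
    exact tv_le η hη (fun w => P i x w) (fun w => P i y w) (ν i) (hProw1 i hi x)
      (hProw1 i hi y) (hν1 i hi) (hminor i hi x) (hminor i hi y)
  -- oscillation contraction
  have hosc : ∀ i, i < N → ∀ ψ : Z → ℝ,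
      oscF ((P i - Pi i).mulVec ψ) ≤ γ * oscF ψ := by
    intro i hi ψ
    apply oscF_le
    intro x y
    have hc0 : ∑ w, (P i x w - P i y w) = 0 := by
      rw [Finset.sum_sub_distrib, hProw1 i hi x, hProw1 i hi y, sub_self]
    have e : ((P i - Pi i).mulVec ψ) x - ((P i - Pi i).mulVec ψ) y
        = ∑ w, (P i x w - P i y w) * ψ w := by
      rw [happ, happ, ← Finset.sum_sub_distrib]
      exact Finset.sum_congr rfl fun w _ => by ring
    rw [e]
    calc ∑ w, (P i x w - P i y w) * ψ w ≤ |∑ w, (P i x w - P i y w) * ψ w| :=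
          le_abs_self _
      _ ≤ 2 * γ * (oscF ψ / 2) := rowBound _ ψ hc0 (htv2 i hi x y)
      _ = γ * oscF ψ := by ring
  -- sup-norm contraction
  have hsupD : ∀ i, i < N → ∀ ψ : Z → ℝ,
      supNorm ((P i - Pi i).mulVec ψ) ≤ γ * oscF ψ := by
    intro i hi ψ
    apply supNorm_le
    intro x
    rw [happ]
    calc |∑ w, (P i x w - ν i w) * ψ w| ≤ 2 * γ * (oscF ψ / 2) :=
          rowBound _ ψ (hrow0 i hi x) (htv i hi x)
      _ = γ * oscF ψ := by ring
  -- Cauchy–Schwarz bound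
  set K : ℝ := Real.sqrt (2 * γ * η ^ 2) with hKdef
  have hKnn : 0 ≤ K := Real.sqrt_nonneg _
  have hcsD : ∀ i, i < N → ∀ ψ : Z → ℝ,
      supNorm ((P i - Pi i).mulVec ψ) ≤ K * Real.sqrt (varPMF ρ ψ) := by
    intro i hi ψ
    apply supNorm_le
    intro x
    rw [happ, hKdef]
    apply cs_row η _ ρ ψ hρ0 hρ1 (hrow0 i hi x) hγ0 (htv i hi x)
    intro w
    have hPle : P i x w ≤ η ^ 2 * ρ w :=
      reg_le_reg η hηpos (fun w => P i x w) ρ (hProw1 i hi x)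
        (fun a b => hPreg1 i hi x a b) hρ1 hρreg w
    have hνle : ν i w ≤ η ^ 2 * ρ w :=
      reg_le_reg η hηpos (ν i) ρ (hν1 i hi) (hνreg i hi) hρ1 hρreg w
    have h0P : 0 ≤ P i x w := (hProw0 i hi x w).le
    have h0ν := hν0 i hi w
    rw [abs_le]
    constructor <;> linarith
  -- product decompositions
  have hA0 : ∀ j : ℕ, (((List.range' j 0).map fun i => P i - Pi i)).prod = 1 := by
    intro j; simp
  have hAsucc : ∀ k j : ℕ,
      (((List.range' j (k + 1)).map fun i => P i - Pi i)).prod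
        = (P j - Pi j) * (((List.range' (j + 1) k).map fun i => P i - Pi i)).prod := by
    intro k j
    rw [List.range'_succ]
    simp
  have hAconcat : ∀ k j : ℕ,
      (((List.range' j (k + 1)).map fun i => P i - Pi i)).prod
        = (((List.range' j k).map fun i => P i - Pi i)).prod * (P (j + k) - Pi (j + k)) := by
    intro k j
    rw [List.range'_1_concat]
    simp
  -- oscillation bound for products
  have hoscA : ∀ k : ℕ, ∀ j : ℕ, j + k ≤ N → ∀ ψ : Z → ℝ,
      oscF ((((List.range' j k).map fun i => P i - Pi i)).prod.mulVec ψ)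
        ≤ γ ^ k * oscF ψ := by
    intro k
    induction k with
    | zero =>
        intro j hj ψ
        rw [hA0, Matrix.one_mulVec]
        simpa using le_refl (oscF ψ)
    | succ k ih =>
        intro j hj ψ
        rw [hAsucc k j, ← Matrix.mulVec_mulVec]
        exact le_trans (hosc j (by omega) _)
          (le_trans (mul_le_mul_of_nonneg_left (ih (j + 1) (by omega) ψ) hγ0)
            (le_of_eq (by ring)))
  -- sup-norm bound for nonempty products
  have hsupA : ∀ k j : ℕ, j + (k + 1) ≤ N → ∀ ψ : Z → ℝ,
      supNorm ((((List.range' j (k + 1)).map fun i => P i - Pi i)).prod.mulVec ψ)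
        ≤ γ ^ (k + 1) * oscF ψ := by
    intro k j hj ψ
    rw [hAsucc k j, ← Matrix.mulVec_mulVec]
    exact le_trans (hsupD j (by omega) _)
      (le_trans (mul_le_mul_of_nonneg_left (hoscA k (j + 1) (by omega) ψ) hγ0)
        (le_of_eq (by ring)))
  -- variance-flavored sup-norm bound for nonempty products
  have hvarA : ∀ k j : ℕ, j + (k + 1) ≤ N → ∀ ψ : Z → ℝ,
      supNorm ((((List.range' j (k + 1)).map fun i => P i - Pi i)).prod.mulVec ψ)
        ≤ 2 * γ ^ k * (K * Real.sqrt (varPMF ρ ψ)) := by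
    intro k j hj ψ
    have hσnn : 0 ≤ K * Real.sqrt (varPMF ρ ψ) :=
      mul_nonneg hKnn (Real.sqrt_nonneg _)
    cases k with
    | zero =>
        rw [hAconcat 0 j, hA0, one_mul]
        have hw := hcsD (j + 0) (by omega) ψ
        have : (2:ℝ) * γ ^ 0 * (K * Real.sqrt (varPMF ρ ψ))
            = 2 * (K * Real.sqrt (varPMF ρ ψ)) := by ring
        rw [this]
        linarith
    | succ m =>
        rw [hAconcat (m + 1) j, ← Matrix.mulVec_mulVec]
        have hw := hcsD (j + (m + 1)) (by omega) ψ
        have h2 : oscF ((P (j + (m + 1)) - Pi (j + (m + 1))).mulVec ψ)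
            ≤ 2 * (K * Real.sqrt (varPMF ρ ψ)) :=
          le_trans (oscF_le_two_supNorm _) (by linarith)
        exact le_trans (hsupA m j (by omega) _)
          (le_trans (mul_le_mul_of_nonneg_left h2 (pow_nonneg hγ0 _))
            (le_of_eq (by ring)))
  -- sup' bounds
  set Msup : ℝ := (Finset.Icc ℓ N).sup' (Finset.nonempty_Icc.mpr hℓ)
    (fun h => supNorm (φ h)) with hMdef
  set Vmax : ℝ := (Finset.Icc ℓ N).sup' (Finset.nonempty_Icc.mpr hℓ)
    (fun h => varPMF ρ (φ h)) with hVdef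
  set σmax : ℝ := Real.sqrt Vmax with hσdef
  have hMle : ∀ h ∈ Finset.Icc ℓ N, supNorm (φ h) ≤ Msup := by
    intro h hh; rw [hMdef]; exact Finset.le_sup' (fun h => supNorm (φ h)) hh
  have hVle : ∀ h ∈ Finset.Icc ℓ N, varPMF ρ (φ h) ≤ Vmax := by
    intro h hh; rw [hVdef]; exact Finset.le_sup' (fun h => varPMF ρ (φ h)) hh
  have hℓmem : ℓ ∈ Finset.Icc ℓ N := Finset.mem_Icc.mpr ⟨le_refl _, hℓ⟩
  have hMsup0 : 0 ≤ Msup := le_trans (supNorm_nonneg (φ ℓ)) (hMle ℓ hℓmem)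
  have hVmax0 : 0 ≤ Vmax :=
    le_trans (varPMF_nonneg ρ (φ ℓ) hρ0le hρ1) (hVle ℓ hℓmem)
  have hσmax0 : 0 ≤ σmax := Real.sqrt_nonneg _
  have hσle : ∀ h ∈ Finset.Icc ℓ N, Real.sqrt (varPMF ρ (φ h)) ≤ σmax := by
    intro h hh; rw [hσdef]; exact Real.sqrt_le_sqrt (hVle h hh)
  -- empty product at h = ℓ
  have hgl : centeredProd P Pi ℓ ℓ = 1 := by
    simp [centeredProd]
  -- per-h sup-norm bound
  have hsup_h : ∀ h ∈ Finset.Ioc ℓ N,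
      supNorm ((centeredProd P Pi ℓ h).mulVec (φ h)) ≤ 2 * γ ^ (h - ℓ) * Msup := by
    intro h hh
    rw [Finset.mem_Ioc] at hh
    obtain ⟨k, hk⟩ : ∃ k, h - ℓ = k + 1 := ⟨h - ℓ - 1, by omega⟩
    simp only [centeredProd]
    rw [hk]
    refine le_trans (hsupA k ℓ (by omega) (φ h)) ?_
    have h1 : oscF (φ h) ≤ 2 * supNorm (φ h) := oscF_le_two_supNorm _
    have h2 : supNorm (φ h) ≤ Msup := hMle h (Finset.mem_Icc.mpr ⟨by omega, hh.2⟩)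
    have h3 : (0:ℝ) ≤ γ ^ (k + 1) := pow_nonneg hγ0 _
    have h4 : oscF (φ h) ≤ 2 * Msup := by linarith
    exact le_trans (mul_le_mul_of_nonneg_left h4 h3) (le_of_eq (by ring))
  -- per-h sqrt-variance bound
  have hvar_h : ∀ h ∈ Finset.Ioc ℓ N,
      Real.sqrt (varPMF ρ ((centeredProd P Pi ℓ h).mulVec (φ h)))
        ≤ 2 * γ ^ (h - ℓ - 1) * (K * σmax) := by
    intro h hh
    rw [Finset.mem_Ioc] at hh
    obtain ⟨k, hk⟩ : ∃ k, h - ℓ = k + 1 := ⟨h - ℓ - 1, by omega⟩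
    have hk' : h - ℓ - 1 = k := by omega
    rw [hk']
    have hsqle : Real.sqrt (varPMF ρ ((centeredProd P Pi ℓ h).mulVec (φ h)))
        ≤ supNorm ((centeredProd P Pi ℓ h).mulVec (φ h)) := by
      refine le_trans (Real.sqrt_le_sqrt (varPMF_le_sq_supNorm ρ _ hρ0le hρ1)) ?_
      rw [Real.sqrt_sq (supNorm_nonneg _)]
    refine le_trans hsqle ?_
    have hb : supNorm ((centeredProd P Pi ℓ h).mulVec (φ h))
        ≤ 2 * γ ^ k * (K * Real.sqrt (varPMF ρ (φ h))) := by
      simp only [centeredProd]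
      rw [hk]
      exact hvarA k ℓ (by omega) (φ h)
    refine le_trans hb ?_
    have hσh : Real.sqrt (varPMF ρ (φ h)) ≤ σmax :=
      hσle h (Finset.mem_Icc.mpr ⟨by omega, hh.2⟩)
    have : (0:ℝ) ≤ 2 * γ ^ k := by positivity
    exact mul_le_mul_of_nonneg_left (mul_le_mul_of_nonneg_left hσh hKnn) this
  -- geometric sums
  have hgeom : ∀ n : ℕ, ∑ i ∈ Finset.range n, γ ^ i ≤ η := by
    intro n
    induction n with
    | zero => simpa using hηpos.le
    | succ n ih =>
        rw [geom_sum_succ]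
        have h1 := mul_le_mul_of_nonneg_left ih hγ0
        linarith [hγη]
  have hIoc_Ico : Finset.Ioc ℓ N = Finset.Ico (ℓ + 1) (N + 1) := by
    rw [← Finset.Icc_add_one_left_eq_Ioc, ← Finset.Ico_add_one_right_eq_Icc]
  have hS1 : ∑ h ∈ Finset.Ioc ℓ N, γ ^ (h - ℓ) ≤ η - 1 := by
    rw [hIoc_Ico, Finset.sum_Ico_eq_sum_range]
    have e : ∀ i ∈ Finset.range (N + 1 - (ℓ + 1)), γ ^ (ℓ + 1 + i - ℓ) = γ * γ ^ i := by
      intro i _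
      have : ℓ + 1 + i - ℓ = i + 1 := by omega
      rw [this, pow_succ]; ring
    rw [Finset.sum_congr rfl e, ← Finset.mul_sum]
    calc γ * ∑ i ∈ Finset.range (N + 1 - (ℓ + 1)), γ ^ i ≤ γ * η :=
          mul_le_mul_of_nonneg_left (hgeom _) hγ0
      _ = η - 1 := hγη
  have hS0 : ∑ h ∈ Finset.Ioc ℓ N, γ ^ (h - ℓ - 1) ≤ η := by
    rw [hIoc_Ico, Finset.sum_Ico_eq_sum_range]
    have e : ∀ i ∈ Finset.range (N + 1 - (ℓ + 1)), γ ^ (ℓ + 1 + i - ℓ - 1) = γ ^ i := by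
      intro i _
      congr 1
      omega
    rw [Finset.sum_congr rfl e]
    exact hgeom _
  -- split the Icc sum
  have hsplit : ∀ f : ℕ → ℝ,
      ∑ h ∈ Finset.Icc ℓ N, f h = f ℓ + ∑ h ∈ Finset.Ioc ℓ N, f h := by
    intro f
    rw [Finset.Icc_eq_cons_Ioc hℓ, Finset.sum_cons]
  -- sup-norm conclusion
  have mainsup : supNorm (∑ h ∈ Finset.Icc ℓ N, (centeredProd P Pi ℓ h).mulVec (φ h))
      ≤ (2 * η - 1) * Msup := by
    calc supNorm (∑ h ∈ Finset.Icc ℓ N, (centeredProd P Pi ℓ h).mulVec (φ h))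
        ≤ ∑ h ∈ Finset.Icc ℓ N, supNorm ((centeredProd P Pi ℓ h).mulVec (φ h)) :=
          supNorm_sum _ _
      _ = supNorm ((centeredProd P Pi ℓ ℓ).mulVec (φ ℓ))
          + ∑ h ∈ Finset.Ioc ℓ N, supNorm ((centeredProd P Pi ℓ h).mulVec (φ h)) :=
          hsplit _
      _ ≤ Msup + ∑ h ∈ Finset.Ioc ℓ N, 2 * γ ^ (h - ℓ) * Msup := by
          refine add_le_add ?_ (Finset.sum_le_sum hsup_h)
          rw [hgl, Matrix.one_mulVec]
          exact hMle ℓ hℓmem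
      _ = Msup + 2 * Msup * ∑ h ∈ Finset.Ioc ℓ N, γ ^ (h - ℓ) := by
          rw [Finset.mul_sum]
          congr 1
          exact Finset.sum_congr rfl fun h _ => by ring
      _ ≤ Msup + 2 * Msup * (η - 1) := by
          refine add_le_add le_rfl (mul_le_mul_of_nonneg_left hS1 (by linarith))
      _ = (2 * η - 1) * Msup := by ring
  -- sqrt-variance conclusion
  have hvar1 : Real.sqrt
      (varPMF ρ (∑ h ∈ Finset.Icc ℓ N, (centeredProd P Pi ℓ h).mulVec (φ h)))
      ≤ (1 + 2 * η * K) * σmax := by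
    calc Real.sqrt (varPMF ρ (∑ h ∈ Finset.Icc ℓ N, (centeredProd P Pi ℓ h).mulVec (φ h)))
        ≤ ∑ h ∈ Finset.Icc ℓ N,
            Real.sqrt (varPMF ρ ((centeredProd P Pi ℓ h).mulVec (φ h))) :=
          sqrtVar_sum ρ hρ0le hρ1 _ _
      _ = Real.sqrt (varPMF ρ ((centeredProd P Pi ℓ ℓ).mulVec (φ ℓ)))
          + ∑ h ∈ Finset.Ioc ℓ N,
              Real.sqrt (varPMF ρ ((centeredProd P Pi ℓ h).mulVec (φ h))) :=
          hsplit _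
      _ ≤ σmax + ∑ h ∈ Finset.Ioc ℓ N, 2 * γ ^ (h - ℓ - 1) * (K * σmax) := by
          refine add_le_add ?_ (Finset.sum_le_sum hvar_h)
          rw [hgl, Matrix.one_mulVec]
          exact hσle ℓ hℓmem
      _ = σmax + 2 * (K * σmax) * ∑ h ∈ Finset.Ioc ℓ N, γ ^ (h - ℓ - 1) := by
          rw [Finset.mul_sum]
          congr 1
          exact Finset.sum_congr rfl fun h _ => by ring
      _ ≤ σmax + 2 * (K * σmax) * η := by
          refine add_le_add le_rfl (mul_le_mul_of_nonneg_left hS0 ?_)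
          have : 0 ≤ K * σmax := mul_nonneg hKnn hσmax0
          linarith
      _ = (1 + 2 * η * K) * σmax := by ring
  -- numeric bound on K
  have hKle : K ≤ Real.sqrt 2 * (2 * η - 1) / 2 := by
    have h2 : (Real.sqrt 2) ^ 2 = 2 := Real.sq_sqrt (by norm_num)
    have hγη2 : γ * η ^ 2 = η ^ 2 - η := by rw [hγdef]; field_simp
    have e : (Real.sqrt 2 * (2 * η - 1) / 2) ^ 2 = (2 * η - 1) ^ 2 / 2 := by
      rw [div_pow, mul_pow, h2]; ring
    have hb : 2 * γ * η ^ 2 ≤ (Real.sqrt 2 * (2 * η - 1) / 2) ^ 2 := by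
      rw [e]
      have expand : (2 * η - 1) ^ 2 / 2 = 2 * (η ^ 2 - η) + 1 / 2 := by ring
      rw [expand, ← hγη2]
      linarith
    have hrnn : 0 ≤ Real.sqrt 2 * (2 * η - 1) / 2 :=
      div_nonneg (mul_nonneg (Real.sqrt_nonneg 2) (by linarith)) (by norm_num)
    calc K = Real.sqrt (2 * γ * η ^ 2) := hKdef
      _ ≤ Real.sqrt ((Real.sqrt 2 * (2 * η - 1) / 2) ^ 2) := Real.sqrt_le_sqrt hb
      _ = Real.sqrt 2 * (2 * η - 1) / 2 := Real.sqrt_sq hrnn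
  have hC1 : 1 + 2 * η * K ≤ 1 + Real.sqrt 2 * η * (2 * η - 1) := by
    have h2η : (0:ℝ) ≤ 2 * η := by linarith
    have := mul_le_mul_of_nonneg_left hKle h2η
    nlinarith [this]
  -- variance conclusion
  have hvarSnn : 0 ≤ varPMF ρ (∑ h ∈ Finset.Icc ℓ N, (centeredProd P Pi ℓ h).mulVec (φ h)) :=
    varPMF_nonneg ρ _ hρ0le hρ1
  have mainvar : varPMF ρ (∑ h ∈ Finset.Icc ℓ N, (centeredProd P Pi ℓ h).mulVec (φ h))
      ≤ (1 + Real.sqrt 2 * η * (2 * η - 1)) ^ 2 * Vmax := by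
    have hs1 : Real.sqrt
        (varPMF ρ (∑ h ∈ Finset.Icc ℓ N, (centeredProd P Pi ℓ h).mulVec (φ h)))
        ≤ (1 + Real.sqrt 2 * η * (2 * η - 1)) * σmax :=
      le_trans hvar1 (mul_le_mul_of_nonneg_right hC1 hσmax0)
    calc varPMF ρ (∑ h ∈ Finset.Icc ℓ N, (centeredProd P Pi ℓ h).mulVec (φ h))
        = Real.sqrt
            (varPMF ρ (∑ h ∈ Finset.Icc ℓ N, (centeredProd P Pi ℓ h).mulVec (φ h))) ^ 2 :=
          (Real.sq_sqrt hvarSnn).symm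
      _ ≤ ((1 + Real.sqrt 2 * η * (2 * η - 1)) * σmax) ^ 2 :=
          pow_le_pow_left₀ (Real.sqrt_nonneg _) hs1 2
      _ = (1 + Real.sqrt 2 * η * (2 * η - 1)) ^ 2 * Vmax := by
          rw [mul_pow, hσdef, Real.sq_sqrt hVmax0]
  exact ⟨mainvar, mainsup⟩
end

section
/- (Entry bounds for the context chain and its stationary distribution.) Under η-regularity of the Block MDP, every entry of the context chain kernel satisfies 1/(η³·n) ≤ P₀(y|x) ≤ η³/n for all x, y ∈ X (in particular all entries are positive, so the chain is irreducible and aperiodic), and every stationary distribution Π₀ of P₀ — i.e., every PMF Π₀ on X with Σ_x Π₀(x)·P₀(y|x) = Π₀(y) for all y — satisfies 1/(η³·n) ≤ Π₀(x) ≤ η³/n for all x ∈ X. -/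
/-!
Every factor of `P₀(y|x) = Σₐ π(a|x) q(y|f y) p(f y|f x, a)` is pinned down up to a factor `η` by
regularity: a family of `N` numbers with sum `c` whose pairwise ratios are at most `η`
has all its members within a factor `η` of `c / N`. This puts `q(y|f y)` within `η` of
`1 / |f⁻¹(f y)|`, `p(·|·,a)` within `η` of `1 / |S|`, and the cluster size `|f⁻¹(f y)|` within `η`
of `n / |S|`, so each summand is within `η³` of `1 / n`. Averages preserve such two-sided bounds,
which gives the claim for `P₀` (averaging over `π(·|x)`) and then for `Π₀ = Π₀ P₀`.
-/

open Finset

def WithinFactor (r c x : ℝ) : Prop :=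
  c / r ≤ x ∧ x ≤ r * c

namespace WithinFactor

variable {r s c d x y : ℝ}

theorem one_div_iff : WithinFactor r (1 / c) x ↔ 1 / (r * c) ≤ x ∧ x ≤ r / c := by
  rw [WithinFactor, div_div, mul_comm c r, mul_one_div]

theorem mul (hx : WithinFactor r c x) (hy : WithinFactor s d y) (hr : 0 < r) (hs : 0 < s)
    (hc : 0 ≤ c) (hd : 0 ≤ d) : WithinFactor (r * s) (c * d) (x * y) := by
  have hx0 : 0 ≤ x := (div_nonneg hc hr.le).trans hx.1
  have hy0 : 0 ≤ y := (div_nonneg hd hs.le).trans hy.1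
  constructor
  · calc c * d / (r * s) = c / r * (d / s) := mul_div_mul_comm c d r s
      _ ≤ x * y := mul_le_mul hx.1 hy.1 (div_nonneg hd hs.le) hx0
  · calc x * y ≤ r * c * (s * d) := mul_le_mul hx.2 hy.2 hy0 (by positivity)
      _ = r * s * (c * d) := by ring

theorem div (hx : WithinFactor r c x) (hr : 0 < r) (hc : 0 < c) {a : ℝ} (ha : 0 ≤ a) :
    WithinFactor r (a / c) (a / x) := by
  have hcr : 0 < c / r := div_pos hc hr
  constructor
  · calc a / c / r = a / (r * c) := by rw [div_div, mul_comm]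
      _ ≤ a / x := div_le_div_of_nonneg_left ha (hcr.trans_le hx.1) hx.2
  · calc a / x ≤ a / (c / r) := div_le_div_of_nonneg_left ha hcr hx.1
      _ = r * (a / c) := by field_simp

theorem trans (hx : WithinFactor r c x) (hc : WithinFactor s d c) (hr : 0 < r) :
    WithinFactor (r * s) d x := by
  constructor
  · calc d / (r * s) = d / s / r := by rw [div_div, mul_comm]
      _ ≤ c / r := div_le_div_of_nonneg_right hc.1 hr.le
      _ ≤ x := hx.1
  · calc x ≤ r * c := hx.2
      _ ≤ r * (s * d) := mul_le_mul_of_nonneg_left hc.2 hr.le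
      _ = r * s * d := (mul_assoc r s d).symm

theorem sum_mul {ι : Type*} {T : Finset ι} {w v : ι → ℝ} (hw : ∀ i ∈ T, 0 ≤ w i)
    (hw₁ : ∑ i ∈ T, w i = 1) (hv : ∀ i ∈ T, WithinFactor r c (v i)) :
    WithinFactor r c (∑ i ∈ T, w i * v i) := by
  constructor
  · calc c / r = ∑ i ∈ T, w i * (c / r) := by rw [← Finset.sum_mul, hw₁, one_mul]
      _ ≤ ∑ i ∈ T, w i * v i :=
        sum_le_sum fun i hi => mul_le_mul_of_nonneg_left (hv i hi).1 (hw i hi)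
  · calc ∑ i ∈ T, w i * v i ≤ ∑ i ∈ T, w i * (r * c) :=
        sum_le_sum fun i hi => mul_le_mul_of_nonneg_left (hv i hi).2 (hw i hi)
      _ = r * c := by rw [← Finset.sum_mul, hw₁, one_mul]

theorem of_sum_eq {ι : Type*} {T : Finset ι} {g : ι → ℝ} (hr : 0 < r)
    (hsum : ∑ i ∈ T, g i = c) (hg : ∀ i ∈ T, ∀ j ∈ T, g i ≤ r * g j) {j : ι} (hj : j ∈ T) :
    WithinFactor r (c / #T) (g j) := by
  have hT : (0 : ℝ) < #T := by exact_mod_cast card_pos.mpr ⟨j, hj⟩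
  constructor
  · rw [div_div, div_le_iff₀ (by positivity), ← hsum]
    calc ∑ i ∈ T, g i ≤ ∑ _i ∈ T, r * g j := sum_le_sum fun i hi => hg i hi j hj
      _ = g j * (#T * r) := by rw [sum_const, nsmul_eq_mul]; ring
  · rw [mul_div_assoc', le_div_iff₀ hT, ← hsum, Finset.mul_sum]
    calc g j * #T = ∑ _i ∈ T, g j := by rw [sum_const, nsmul_eq_mul, mul_comm]
      _ ≤ ∑ i ∈ T, r * g i := sum_le_sum fun i hi => hg j hj i hi

end WithinFactor

section BlockMDP

variable {X S A : Type*} [Fintype X] [DecidableEq S] {η : ℝ} {f : X → S}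

theorem card_fiber_withinFactor [Fintype S] (hη : 0 < η)
    (hreg : ∀ s₁ s₂ : S, (#{x | f x = s₁} : ℝ) ≤ η * #{x | f x = s₂}) (x : X) :
    WithinFactor η (Fintype.card X / Fintype.card S) #{y | f y = f x} := by
  have hsum : ∑ s, (#{y | f y = s} : ℝ) = Fintype.card X := by
    rw [← card_univ, card_eq_sum_card_fiberwise fun y _ => mem_univ (f y)]
    push_cast
    rfl
  simpa [card_univ] using
    WithinFactor.of_sum_eq (T := univ) hη hsum (fun s _ t _ => hreg s t) (mem_univ (f x))

theorem emission_withinFactor (hη : 0 < η) {q : S → X → ℝ}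
    (hq : ∀ s, ∀ x, f x ≠ s → q s x = 0) (hq₁ : ∀ s, ∑ x, q s x = 1)
    (hreg : ∀ (s : S) (x y : X), f x = s → f y = s → q s x ≤ η * q s y) (y : X) :
    WithinFactor η (1 / #{x | f x = f y}) (q (f y) y) := by
  have hsum : ∑ x ∈ {x | f x = f y}, q (f y) x = 1 := by
    rw [sum_filter_of_ne fun x _ hx => not_imp_comm.mp (hq (f y) x) hx, hq₁]
  refine WithinFactor.of_sum_eq hη hsum (fun i hi j hj => ?_) (by simp)
  exact hreg (f y) i j (mem_filter.mp hi).2 (mem_filter.mp hj).2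

theorem emission_mul_withinFactor [Fintype S] (hη : 0 < η) {q : S → X → ℝ} {μ : S → ℝ}
    (hq : ∀ s, ∀ x, f x ≠ s → q s x = 0) (hq₁ : ∀ s, ∑ x, q s x = 1) (hμ : ∑ s, μ s = 1)
    (hreg₁ : ∀ s₁ s₂ : S, (#{x | f x = s₁} : ℝ) ≤ η * #{x | f x = s₂})
    (hreg₃ : ∀ (s : S) (x y : X), f x = s → f y = s → q s x ≤ η * q s y)
    (hregμ : ∀ s t, μ s ≤ η * μ t) (y : X) :
    WithinFactor (η ^ 3) (1 / Fintype.card X) (q (f y) y * μ (f y)) := by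
  have hX : (0 : ℝ) < Fintype.card X := by exact_mod_cast Fintype.card_pos_iff.mpr ⟨y⟩
  have hS : (0 : ℝ) < Fintype.card S := by exact_mod_cast Fintype.card_pos_iff.mpr ⟨f y⟩
  have hq' := emission_withinFactor hη hq hq₁ hreg₃ y
  have hμ' : WithinFactor η (1 / Fintype.card S) (μ (f y)) := by
    simpa [card_univ] using
      WithinFactor.of_sum_eq (T := univ) hη hμ (fun s _ t _ => hregμ s t) (mem_univ (f y))
  have hm : WithinFactor η (1 / Fintype.card X)
      (1 / #{x | f x = f y} * (1 / Fintype.card S)) := by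
    have := (card_fiber_withinFactor hη hreg₁ y).div hη (by positivity)
      (a := 1 / Fintype.card S) (by positivity)
    convert this using 1 <;> field_simp
  rw [pow_three']
  exact (hq'.mul hμ' hη hη (by positivity) (by positivity)).trans hm (by positivity)

end BlockMDP

/-- Here `p s a s'` is the latent transition probability `p(s'|s,a)`, `q s x` the emission
probability `q(x|s)`, `pol x a` the behavior-policy probability `π(a|x)`, and
`P0 x y = P₀(y|x) = Σ_a π(a|x)·q(y|f(y))·p(f(y)|f(x),a)` is the context chain kernel. -/
theorem blockMDP_context_chain_entry_bounds_general
    {X S A : Type*} [Fintype X] [Fintype S] [Fintype A]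
    [DecidableEq S]
    (η : ℝ) (hη : 1 ≤ η)
    (f : X → S)
    (p : S → A → S → ℝ) (hp : ∀ s a, (∀ s', 0 ≤ p s a s') ∧ ∑ s', p s a s' = 1)
    (q : S → X → ℝ)
    (hq : ∀ s, (∀ x, 0 ≤ q s x) ∧ (∀ x, f x ≠ s → q s x = 0) ∧ ∑ x, q s x = 1)
    (pol : X → A → ℝ) (hpol : ∀ x, (∀ a, 0 ≤ pol x a) ∧ ∑ a, pol x a = 1)
    -- η-regularity (i): linear cluster sizes are comparable
    (hreg1 : ∀ s₁ s₂ : S,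
      ((Finset.univ.filter fun x => f x = s₁).card : ℝ)
        ≤ η * ((Finset.univ.filter fun x => f x = s₂).card : ℝ))
    -- η-regularity (ii)
    (hreg2 : ∀ (s₁ s₂ s₃ : S) (a : A),
      p s₁ a s₂ ≤ η * p s₁ a s₃ ∧ p s₂ a s₁ ≤ η * p s₃ a s₁)
    -- η-regularity (iii)
    (hreg3 : ∀ (s : S) (x y : X), f x = s → f y = s → q s x ≤ η * q s y)
    (P0 : X → X → ℝ)
    (hP0 : ∀ x y, P0 x y = ∑ a, pol x a * (q (f y) y * p (f x) a (f y))) :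
    (∀ x y : X,
        1 / (η ^ 3 * (Fintype.card X : ℝ)) ≤ P0 x y
          ∧ P0 x y ≤ η ^ 3 / (Fintype.card X : ℝ))
    ∧ ∀ Pi0 : X → ℝ,
        ((∀ x, 0 ≤ Pi0 x) ∧ ∑ x, Pi0 x = 1 ∧ ∀ y, ∑ x, Pi0 x * P0 x y = Pi0 y) →
        ∀ x : X,
          1 / (η ^ 3 * (Fintype.card X : ℝ)) ≤ Pi0 x
            ∧ Pi0 x ≤ η ^ 3 / (Fintype.card X : ℝ) := by
  have hη₀ : 0 < η := one_pos.trans_le hη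
  have hentry : ∀ x y, WithinFactor (η ^ 3) (1 / Fintype.card X) (P0 x y) := fun x y => by
    rw [hP0]
    exact WithinFactor.sum_mul (fun a _ => (hpol x).1 a) (hpol x).2 fun a _ =>
      emission_mul_withinFactor hη₀ (fun s => (hq s).2.1) (fun s => (hq s).2.2) (hp (f x) a).2
        hreg1 hreg3 (fun s t => (hreg2 (f x) s t a).1) y
  refine ⟨fun x y => WithinFactor.one_div_iff.mp (hentry x y), ?_⟩
  rintro Pi0 ⟨hPi0_nonneg, hPi0_sum, hPi0_stat⟩ x
  rw [← hPi0_stat x]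
  exact WithinFactor.one_div_iff.mp
    (WithinFactor.sum_mul (fun z _ => hPi0_nonneg z) hPi0_sum fun z _ => hentry z x)

/-- **Entry bounds for the context chain and its stationary distribution in a Block MDP.**
Here `p s a s'` is the latent transition probability `p(s'|s,a)`, `q s x` the emission
probability `q(x|s)`, `π x a` the behavior-policy probability `π(a|x)`, and
`P0 x y = P₀(y|x) = Σ_a π(a|x)·q(y|f(y))·p(f(y)|f(x),a)` is the context chain kernel. -/
theorem blockMDP_context_chain_entry_bounds
    {X S A : Type*} [Fintype X] [Fintype S] [Fintype A]
    [Nonempty X] [Nonempty S] [Nonempty A] [DecidableEq S]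
    (η : ℝ) (hη : 1 ≤ η)
    (f : X → S) (hf : Function.Surjective f)
    (p : S → A → S → ℝ) (hp : ∀ s a, (∀ s', 0 ≤ p s a s') ∧ ∑ s', p s a s' = 1)
    (q : S → X → ℝ)
    (hq : ∀ s, (∀ x, 0 ≤ q s x) ∧ (∀ x, f x ≠ s → q s x = 0) ∧ ∑ x, q s x = 1)
    (pol : X → A → ℝ) (hpol : ∀ x, (∀ a, 0 ≤ pol x a) ∧ ∑ a, pol x a = 1)
    -- η-regularity (i): linear cluster sizes are comparable
    (hreg1 : ∀ s₁ s₂ : S,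
      ((Finset.univ.filter fun x => f x = s₁).card : ℝ)
        ≤ η * ((Finset.univ.filter fun x => f x = s₂).card : ℝ))
    -- η-regularity (ii)
    (hreg2 : ∀ (s₁ s₂ s₃ : S) (a : A),
      p s₁ a s₂ ≤ η * p s₁ a s₃ ∧ p s₂ a s₁ ≤ η * p s₃ a s₁)
    -- η-regularity (iii)
    (hreg3 : ∀ (s : S) (x y : X), f x = s → f y = s → q s x ≤ η * q s y)
    -- η-regularity (iv)
    (hreg4 : ∀ (x y : X) (a₁ a₂ : A), pol x a₁ ≤ η * pol y a₂)
    (P0 : X → X → ℝ)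
    (hP0 : ∀ x y, P0 x y = ∑ a, pol x a * (q (f y) y * p (f x) a (f y))) :
    (∀ x y : X,
        1 / (η ^ 3 * (Fintype.card X : ℝ)) ≤ P0 x y
          ∧ P0 x y ≤ η ^ 3 / (Fintype.card X : ℝ))
    ∧ ∀ Pi0 : X → ℝ,
        ((∀ x, 0 ≤ Pi0 x) ∧ ∑ x, Pi0 x = 1 ∧ ∀ y, ∑ x, Pi0 x * P0 x y = Pi0 y) →
        ∀ x : X,
          1 / (η ^ 3 * (Fintype.card X : ℝ)) ≤ Pi0 x
            ∧ Pi0 x ≤ η ^ 3 / (Fintype.card X : ℝ) :=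
  blockMDP_context_chain_entry_bounds_general η hη f p hp q hq pol hpol hreg1 hreg2 hreg3 P0 hP0
end

section
/- (Dobrushin coefficient and mixing time of the context chain.) Under η-regularity of the Block MDP (only conditions (ii) and (iv) and the normalizations of π, q, p are needed), the context chain kernel satisfies P₀(z|x) ≥ (1/η²)·P₀(z|y) for all x, y, z ∈ X. Consequently its Dobrushin coefficient δ(P₀) := (1/2)·max_{x,y∈X} Σ_{z∈X} |P₀(z|x) − P₀(z|y)| satisfies δ(P₀) ≤ 1 − 1/η², and for every PMF μ₀ on X, every stationary distribution Π₀ of P₀, and every integer h ≥ 2η², d_TV(μ₀P₀^h, Π₀) ≤ 1/4; i.e., the mixing time of the context chain is at most 2η². -/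
/-!
Regularity (ii) and (iv) give `P₀(z|y) ≤ η² P₀(z|x)`, a Doeblin minorization of every row by
`ε = 1/η²` times any fixed row. Subtracting that common part from all rows shows that `P₀`
contracts the `ℓ¹` norm of mass-zero vectors by `1 - ε`. Applied to `δ_x - δ_y` this bounds the
Dobrushin coefficient; iterated on `μ₀ - Π₀` it gives
`d_TV(μ₀P₀ʰ, Π₀) ≤ (1 - ε)ʰ ≤ e^{-εh} ≤ e^{-2} < 1/4`.
-/

open Finset

/-- Total variation distance between two mass functions on a finite type. -/
noncomputable def dTV {Z : Type*} [Fintype Z] (u v : Z → ℝ) : ℝ :=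
  (1 / 2) * ∑ z, |u z - v z|

/-- Dobrushin ergodic coefficient `δ(P) = (1/2)·max_{x,y} Σ_z |P(z|x) − P(z|y)|`. -/
noncomputable def dobrushin {Z : Type*} [Fintype Z] [Nonempty Z] (P : Matrix Z Z ℝ) : ℝ :=
  Finset.univ.sup' Finset.univ_nonempty fun q : Z × Z =>
    (1 / 2) * ∑ z, |P q.1 z - P q.2 z|

open Matrix

theorem IsPMF.single {Z : Type*} [Fintype Z] [DecidableEq Z] (x : Z) :
    IsPMF (Pi.single x (1 : ℝ)) :=
  ⟨fun z => by by_cases h : z = x <;> simp [h], by simp⟩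

theorem IsPMF.sum_abs_sub_le_two {Z : Type*} [Fintype Z] {μ ν : Z → ℝ} (hμ : IsPMF μ)
    (hν : IsPMF ν) : ∑ z, |μ z - ν z| ≤ 2 := by
  calc ∑ z, |μ z - ν z| ≤ ∑ z, (|μ z| + |ν z|) := sum_le_sum fun z _ => abs_sub _ _
    _ = 2 := by
      simp only [abs_of_nonneg (hμ.1 _), abs_of_nonneg (hν.1 _), sum_add_distrib, hμ.2, hν.2]
      norm_num

theorem one_sub_pow_le_one_div_four {ε : ℝ} {h : ℕ} (hε : ε ≤ 1) (hh : 2 ≤ ε * h) :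
    (1 - ε) ^ h ≤ 1 / 4 := by
  have two_le_exp_one : 2 ≤ Real.exp 1 := by linarith [Real.add_one_le_exp 1]
  calc (1 - ε) ^ h ≤ Real.exp (-ε) ^ h :=
        pow_le_pow_left₀ (sub_nonneg.2 hε) (Real.one_sub_le_exp_neg ε) h
    _ = Real.exp (-(ε * h)) := by rw [← Real.exp_nat_mul]; ring_nf
    _ ≤ Real.exp (-2) := Real.exp_le_exp.2 (by linarith)
    _ = (Real.exp 1 ^ 2)⁻¹ := by rw [Real.exp_neg, Real.exp_one_pow]; norm_num
    _ ≤ 1 / 4 := by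
      rw [one_div]
      exact inv_anti₀ (by norm_num) (by nlinarith)

section Doeblin

variable {Z : Type*} [Fintype Z] {P : Matrix Z Z ℝ} {ε : ℝ}

theorem sum_vecMul_of_sum_row_eq_one (hrow : ∀ x, ∑ z, P x z = 1) (u : Z → ℝ) :
    ∑ z, (u ᵥ* P) z = ∑ x, u x := by
  simp only [vecMul, dotProduct]
  rw [sum_comm]
  simp only [← mul_sum, hrow, mul_one]

theorem sum_abs_vecMul_le_of_doeblin {ν : Z → ℝ} (hrow : ∀ x, ∑ z, P x z = 1)
    (hν : ∑ z, ν z = 1) (hmin : ∀ x z, ε * ν z ≤ P x z) {u : Z → ℝ} (hu : ∑ x, u x = 0) :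
    ∑ z, |(u ᵥ* P) z| ≤ (1 - ε) * ∑ x, |u x| := by
  -- `u` has total mass zero, so removing the common part `ε ν` from every row changes nothing.
  have hshift : ∀ z, (u ᵥ* P) z = ∑ x, u x * (P x z - ε * ν z) := by
    intro z
    simp only [vecMul, dotProduct, mul_sub, sum_sub_distrib, ← sum_mul, hu, zero_mul, sub_zero]
  calc ∑ z, |(u ᵥ* P) z| ≤ ∑ z, ∑ x, |u x| * (P x z - ε * ν z) := by
        gcongr with z
        rw [hshift]
        refine (abs_sum_le_sum_abs _ _).trans_eq (sum_congr rfl fun x _ => ?_)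
        rw [abs_mul, abs_of_nonneg (sub_nonneg.2 (hmin x z))]
    _ = (1 - ε) * ∑ x, |u x| := by
        rw [sum_comm, mul_sum]
        refine sum_congr rfl fun x _ => ?_
        rw [← mul_sum, sum_sub_distrib, hrow, ← mul_sum, hν, mul_one, mul_comm]

variable [DecidableEq Z]

theorem sum_abs_vecMul_pow_le_of_doeblin {ν : Z → ℝ} (hrow : ∀ x, ∑ z, P x z = 1)
    (hν : ∑ z, ν z = 1) (hmin : ∀ x z, ε * ν z ≤ P x z) (hε : ε ≤ 1) (h : ℕ) {u : Z → ℝ}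
    (hu : ∑ x, u x = 0) : ∑ z, |(u ᵥ* P ^ h) z| ≤ (1 - ε) ^ h * ∑ x, |u x| := by
  induction h generalizing u with
  | zero => simp
  | succ h ih =>
    rw [pow_succ', ← vecMul_vecMul]
    calc ∑ z, |((u ᵥ* P) ᵥ* P ^ h) z| ≤ (1 - ε) ^ h * ∑ x, |(u ᵥ* P) x| :=
          ih (by rw [sum_vecMul_of_sum_row_eq_one hrow, hu])
      _ ≤ (1 - ε) ^ h * ((1 - ε) * ∑ x, |u x|) :=
          mul_le_mul_of_nonneg_left (sum_abs_vecMul_le_of_doeblin hrow hν hmin hu)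
            (pow_nonneg (sub_nonneg.2 hε) h)
      _ = (1 - ε) ^ (h + 1) * ∑ x, |u x| := by ring

theorem vecMul_pow_eq_self {π : Z → ℝ} (hπ : π ᵥ* P = π) (h : ℕ) : π ᵥ* P ^ h = π := by
  induction h with
  | zero => simp
  | succ h ih => rw [pow_succ, ← vecMul_vecMul, ih, hπ]

variable [Nonempty Z]

theorem dobrushin_le_of_minorization (hrow : ∀ x, ∑ z, P x z = 1)
    (hmin : ∀ x y z, ε * P y z ≤ P x z) (hε : ε ≤ 1) : dobrushin P ≤ 1 - ε := by
  refine sup'_le _ _ fun ⟨x, y⟩ _ => ?_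
  set u : Z → ℝ := Pi.single x 1 - Pi.single y 1
  have hu : ∀ z, (u ᵥ* P) z = P x z - P y z := by simp [u, sub_vecMul]
  have hcontract := sum_abs_vecMul_le_of_doeblin hrow (hrow y) (fun x' z => hmin x' y z)
    (u := u) (by simp [u])
  simp only [hu] at hcontract
  calc 1 / 2 * ∑ z, |P x z - P y z| ≤ 1 / 2 * ((1 - ε) * 2) := by
        gcongr
        exact hcontract.trans (mul_le_mul_of_nonneg_left
          ((IsPMF.single x).sum_abs_sub_le_two (IsPMF.single y)) (sub_nonneg.2 hε))
    _ = 1 - ε := by ring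

theorem dTV_vecMul_pow_le_of_minorization (hrow : ∀ x, ∑ z, P x z = 1)
    (hmin : ∀ x y z, ε * P y z ≤ P x z) (hε : ε ≤ 1) {μ π : Z → ℝ} (hμ : IsPMF μ)
    (hπ : IsPMF π) (hstat : π ᵥ* P = π) (h : ℕ) : dTV (μ ᵥ* P ^ h) π ≤ (1 - ε) ^ h := by
  obtain ⟨y⟩ := ‹Nonempty Z›
  have hcontract := sum_abs_vecMul_pow_le_of_doeblin hrow (hrow y) (fun x z => hmin x y z) hε h
    (u := μ - π) (by simp [sum_sub_distrib, hμ.2, hπ.2])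
  rw [sub_vecMul, vecMul_pow_eq_self hstat] at hcontract
  calc dTV (μ ᵥ* P ^ h) π ≤ 1 / 2 * ((1 - ε) ^ h * 2) := by
        unfold dTV
        gcongr
        exact hcontract.trans (mul_le_mul_of_nonneg_left (hμ.sum_abs_sub_le_two hπ)
          (pow_nonneg (sub_nonneg.2 hε) h))
    _ = (1 - ε) ^ h := by ring

end Doeblin

section ContextChain

variable {X S A : Type*} [Fintype A]

/-- With `p s a s' = p(s'|s,a)`, `q s x = q(x|s)` and `pol x a = π(a|x)`, this is `P₀(y|x)`. -/
def contextKernel (f : X → S) (p : S → A → S → ℝ) (q : S → X → ℝ) (pol : X → A → ℝ) :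
    Matrix X X ℝ :=
  Matrix.of fun x y => ∑ a, pol x a * (q (f y) y * p (f x) a (f y))

theorem sum_emission_mul [Fintype X] [Fintype S] {f : X → S} {q : S → X → ℝ}
    (hsupp : ∀ s x, f x ≠ s → q s x = 0) (hsum : ∀ s, ∑ x, q s x = 1) (g : S → ℝ) :
    ∑ y, q (f y) y * g (f y) = ∑ s, g s := by
  have hfiber (y : X) : q (f y) y * g (f y) = ∑ s, q s y * g s := by
    rw [Fintype.sum_eq_single (f y) fun s hs => by rw [hsupp s y (Ne.symm hs), zero_mul]]
  simp only [hfiber]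
  rw [sum_comm]
  simp only [← sum_mul, hsum, one_mul]

theorem sum_contextKernel_row [Fintype X] [Fintype S] {f : X → S} {p : S → A → S → ℝ}
    {q : S → X → ℝ} {pol : X → A → ℝ} (hp : ∀ s a, ∑ s', p s a s' = 1)
    (hsupp : ∀ s x, f x ≠ s → q s x = 0) (hsum : ∀ s, ∑ x, q s x = 1)
    (hpol : ∀ x, ∑ a, pol x a = 1) (x : X) :
    ∑ y, contextKernel f p q pol x y = 1 := by
  simp only [contextKernel, of_apply]
  rw [sum_comm]
  simp only [← mul_sum, sum_emission_mul hsupp hsum (p (f x) _), hp, mul_one, hpol]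

theorem contextKernel_le_sq_mul {η : ℝ} (hη : 0 ≤ η) {f : X → S} {p : S → A → S → ℝ}
    {q : S → X → ℝ} {pol : X → A → ℝ} (hp : ∀ s a s', 0 ≤ p s a s') (hq : ∀ s x, 0 ≤ q s x)
    (hpol : ∀ x a, 0 ≤ pol x a) (hreg_p : ∀ s₁ s₂ s₃ a, p s₂ a s₁ ≤ η * p s₃ a s₁)
    (hreg_pol : ∀ x y a, pol x a ≤ η * pol y a) (x y z : X) :
    contextKernel f p q pol y z ≤ η ^ 2 * contextKernel f p q pol x z := by
  simp only [contextKernel, of_apply, mul_sum]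
  refine sum_le_sum fun a _ => ?_
  calc pol y a * (q (f z) z * p (f y) a (f z))
      ≤ (η * pol x a) * (q (f z) z * (η * p (f x) a (f z))) := by
        have := hp (f y) a (f z)
        have := hq (f z) z
        have := hpol x a
        gcongr
        exacts [hreg_pol y x a, hreg_p _ _ _ a]
    _ = η ^ 2 * (pol x a * (q (f z) z * p (f x) a (f z))) := by ring

end ContextChain

/-- **Dobrushin coefficient and mixing time of the context chain of a Block MDP.**
`p s a s'` is `p(s'|s,a)`, `q s x` is `q(x|s)`, `pol x a` is `π(a|x)`, and
`P0 x y = P₀(y|x) = Σ_a π(a|x)·q(y|f(y))·p(f(y)|f(x),a)`.  Only the normalizations of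
`p`, `q`, `π` and the regularity conditions (ii) and (iv) are assumed. -/
theorem context_chain_dobrushin_and_mixing
    {X S A : Type*} [Fintype X] [Fintype S] [Fintype A]
    [Nonempty X] [DecidableEq X]
    (η : ℝ) (hη : 1 ≤ η)
    (f : X → S)
    (p : S → A → S → ℝ) (hp : ∀ s a, (∀ s', 0 ≤ p s a s') ∧ ∑ s', p s a s' = 1)
    (q : S → X → ℝ)
    (hq : ∀ s, (∀ x, 0 ≤ q s x) ∧ (∀ x, f x ≠ s → q s x = 0) ∧ ∑ x, q s x = 1)
    (pol : X → A → ℝ) (hpol : ∀ x, (∀ a, 0 ≤ pol x a) ∧ ∑ a, pol x a = 1)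
    -- η-regularity (ii)
    (hreg2 : ∀ (s₁ s₂ s₃ : S) (a : A),
      p s₁ a s₂ ≤ η * p s₁ a s₃ ∧ p s₂ a s₁ ≤ η * p s₃ a s₁)
    -- η-regularity (iv)
    (hreg4 : ∀ (x y : X) (a₁ a₂ : A), pol x a₁ ≤ η * pol y a₂)
    (P0 : Matrix X X ℝ)
    (hP0 : ∀ x y, P0 x y = ∑ a, pol x a * (q (f y) y * p (f x) a (f y))) :
    (∀ x y z : X, 1 / η ^ 2 * P0 y z ≤ P0 x z)
    ∧ dobrushin P0 ≤ 1 - 1 / η ^ 2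
    ∧ ∀ μ0 : X → ℝ, IsPMF μ0 →
        ∀ Pi0 : X → ℝ, IsPMF Pi0 → (∀ y, ∑ x, Pi0 x * P0 x y = Pi0 y) →
          ∀ h : ℕ, 2 * η ^ 2 ≤ (h : ℝ) →
            dTV (Matrix.vecMul μ0 (P0 ^ h)) Pi0 ≤ 1 / 4 := by
  obtain rfl : P0 = contextKernel f p q pol := Matrix.ext hP0
  have hη2 : 0 < η ^ 2 := by positivity
  have hε : 1 / η ^ 2 ≤ 1 := (div_le_one hη2).2 (by nlinarith)
  have hrow := sum_contextKernel_row (fun s a => (hp s a).2) (fun s => (hq s).2.1)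
    (fun s => (hq s).2.2) (fun x => (hpol x).2)
  have hmin : ∀ x y z, 1 / η ^ 2 * contextKernel f p q pol y z ≤ contextKernel f p q pol x z :=
    fun x y z => by
      rw [one_div_mul_eq_div, div_le_iff₀' hη2]
      exact contextKernel_le_sq_mul (by linarith) (fun s a => (hp s a).1) (fun s => (hq s).1)
        (fun x => (hpol x).1) (fun s₁ s₂ s₃ a => (hreg2 s₁ s₂ s₃ a).2)
        (fun x y a => hreg4 x y a a) x y z
  refine ⟨hmin, dobrushin_le_of_minorization hrow hmin hε, ?_⟩
  intro μ0 hμ0 Pi0 hPi0 hstat h hh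
  refine (dTV_vecMul_pow_le_of_minorization hrow hmin hε hμ0 hPi0 (funext hstat) h).trans
    (one_sub_pow_le_one_div_four hε ?_)
  rw [one_div_mul_eq_div, le_div_iff₀' hη2]
  linarith
end

section
/- (Powers of the triple-chain kernel in terms of the action–context kernel.) For every integer h ≥ 1 and all triples (x,a,y), (y',a',z) ∈ X×A×X: P₂^{h+1}((y',a',z)|(x,a,y)) = Σ_{ã∈A} P₁((a',z)|(ã,y'))·P₁^{h}((ã,y')|(a,y)), where P₂^{h+1} and P₁^{h} denote iterated compositions (matrix powers) of the kernels P₂ and P₁. -/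
/-
Write a triple as `(x, s)` with `s = (a, x') : A × X`. A step of `P₂` from `(x, s)` only sees `s`
and lands on a triple whose first entry is the context of `s`, so `P₂ = E * N` where `E = forgetFirst`
drops the first entry and `N = recordContext P₁` is the step of `P₁` that also records the context
it leaves from. Since `N * E = P₁`, regrouping gives `P₂ ^ (h + 1) = E * P₁ ^ h * N`.
-/

namespace Matrix

variable {m n R : Type*} [Fintype m] [Fintype n] [DecidableEq m] [DecidableEq n] [Semiring R]

theorem mul_pow_succ_eq_mul_mul_pow_mul (E : Matrix m n R) (N : Matrix n m R) (k : ℕ) :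
    (E * N) ^ (k + 1) = E * (N * E) ^ k * N := by
  induction k with
  | zero => simp
  | succ k ih =>
    rw [pow_succ, ih, pow_succ]
    simp only [Matrix.mul_assoc]

end Matrix

section TripleLift

variable {X A R : Type*} [Fintype X] [Fintype A] [DecidableEq X] [DecidableEq A] [Semiring R]

def tripleLift (M : Matrix (A × X) (A × X) R) : Matrix (X × A × X) (X × A × X) R :=
  Matrix.of fun s t => if t.1 = s.2.2 then M s.2 t.2 else 0

def forgetFirst : Matrix (X × A × X) (A × X) R :=
  Matrix.of fun s p => if s.2 = p then 1 else 0

def recordContext (M : Matrix (A × X) (A × X) R) : Matrix (A × X) (X × A × X) R :=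
  Matrix.of fun p t => if t.1 = p.2 then M p t.2 else 0

theorem forgetFirst_mul_apply (Q : Matrix (A × X) (X × A × X) R) (s : X × A × X) (t : X × A × X) :
    ((forgetFirst : Matrix (X × A × X) (A × X) R) * Q) s t = Q s.2 t := by
  simp [Matrix.mul_apply, forgetFirst]

theorem tripleLift_eq_forgetFirst_mul (M : Matrix (A × X) (A × X) R) :
    tripleLift M = (forgetFirst : Matrix (X × A × X) (A × X) R) * recordContext M := by
  ext s t
  rw [forgetFirst_mul_apply]
  rfl

theorem recordContext_mul_forgetFirst (M : Matrix (A × X) (A × X) R) :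
    recordContext M * (forgetFirst : Matrix (X × A × X) (A × X) R) = M := by
  ext p q
  simp [Matrix.mul_apply, Fintype.sum_prod_type, recordContext, forgetFirst]

theorem tripleLift_pow_succ_apply (M : Matrix (A × X) (A × X) R) (n : ℕ) (x : X) (s : A × X)
    (y' : X) (t : A × X) :
    (tripleLift M ^ (n + 1)) (x, s) (y', t) = ∑ a, (M ^ n) s (a, y') * M (a, y') t := by
  rw [tripleLift_eq_forgetFirst_mul, Matrix.mul_pow_succ_eq_mul_mul_pow_mul,
    recordContext_mul_forgetFirst, Matrix.mul_assoc, forgetFirst_mul_apply]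
  simp [Matrix.mul_apply, Fintype.sum_prod_type, recordContext]

end TripleLift

/-- `pol x a = π(a|x)` and `P x a y = P(y|x,a)`; kernels are matrices whose rows index the
starting state, so `P1 (a,x) (b,y) = P₁((b,y)|(a,x))`. -/
theorem triple_chain_power_formula_general
    {X A : Type*} [Fintype X] [Fintype A] [DecidableEq X] [DecidableEq A]
    (pol : X → A → ℝ)
    (P : X → A → X → ℝ)
    (P1 : Matrix (A × X) (A × X) ℝ)
    (hP1 : ∀ (a : A) (x : X) (b : A) (y : X), P1 (a, x) (b, y) = pol x b * P x b y)
    (P2 : Matrix (X × A × X) (X × A × X) ℝ)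
    (hP2 : ∀ (x : X) (a : A) (x' : X) (y : X) (b : A) (y' : X),
      P2 (x, a, x') (y, b, y') = if y = x' then pol y b * P y b y' else 0)
    (h : ℕ) :
    ∀ (x : X) (a : A) (y y' : X) (a' : A) (z : X),
      (P2 ^ (h + 1)) (x, a, y) (y', a', z)
        = ∑ a2 : A, P1 (a2, y') (a', z) * (P1 ^ h) (a, y) (a2, y') := by
  have hlift : P2 = tripleLift P1 := by
    ext ⟨x, a, x'⟩ ⟨y, b, y'⟩
    rw [hP2]
    split_ifs with hy
    · simp [tripleLift, hy, hP1]
    · simp [tripleLift, hy]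
  intro x a y y' a' z
  simp_rw [hlift, tripleLift_pow_succ_apply, mul_comm]

/-- **Powers of the triple-chain kernel in terms of the action–context kernel.**
`pol x a` is the policy probability `π(a|x)` and `P x a y` the context transition
probability `P(y|x,a)`.  `P1 (a,x) (b,y) = P₁((b,y)|(a,x)) = π(b|x)·P(y|x,b)` and
`P2 (x,a,x') (y,b,y') = P₂((y,b,y')|(x,a,x')) = 1{y = x'}·π(b|y)·P(y'|y,b)`; powers of
these kernels are matrix powers (rows index the starting state). -/
theorem triple_chain_power_formula
    {X A : Type*} [Fintype X] [Fintype A] [DecidableEq X] [DecidableEq A]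
    (pol : X → A → ℝ) (hpol : ∀ x, (∀ a, 0 ≤ pol x a) ∧ ∑ a, pol x a = 1)
    (P : X → A → X → ℝ) (hP : ∀ x a, (∀ y, 0 ≤ P x a y) ∧ ∑ y, P x a y = 1)
    (P1 : Matrix (A × X) (A × X) ℝ)
    (hP1 : ∀ (a : A) (x : X) (b : A) (y : X), P1 (a, x) (b, y) = pol x b * P x b y)
    (P2 : Matrix (X × A × X) (X × A × X) ℝ)
    (hP2 : ∀ (x : X) (a : A) (x' : X) (y : X) (b : A) (y' : X),
      P2 (x, a, x') (y, b, y') = if y = x' then pol y b * P y b y' else 0)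
    (h : ℕ) (hh : 1 ≤ h) :
    ∀ (x : X) (a : A) (y y' : X) (a' : A) (z : X),
      (P2 ^ (h + 1)) (x, a, y) (y', a', z)
        = ∑ a2 : A, P1 (a2, y') (a', z) * (P1 ^ h) (a, y) (a2, y') :=
  triple_chain_power_formula_general pol P P1 hP1 P2 hP2 h
end

section
/- (Total variation comparison between the triple chain and the action–context chain.) Let Π₀ be a stationary distribution of P₀ (a PMF on X with Σ_x Π₀(x)·P₀(y|x) = Π₀(y) for all y), and define Π₁(a,x) := Σ_{y∈X} Π₀(y)·π(a|y)·P(x|y,a) on A×X and Π₂(x,a,x') := Π₀(x)·π(a|x)·P(x'|x,a) on X×A×X. Then for every integer h ≥ 1 and every triple (x,a,y) ∈ X×A×X: d_TV( P₂^{h+1}(·|(x,a,y)), Π₂ ) ≤ d_TV( P₁^{h}(·|(a,y)), Π₁ ). -/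
/-!
Started from `(x, a, y)`, the triple chain after `h + 1` steps has law `ρ(z) · π(b|z) · P(z'|z,b)`
at `(z, b, z')`, where `ρ` is the context marginal of `P₁^h(·|(a,y))`; likewise
`Π₂(z, b, z') = Π₀(z) · π(b|z) · P(z'|z,b)`, and `Π₀` is the context marginal of `Π₁` by
stationarity. Composing with a Markov kernel preserves total variation exactly, so the left-hand
side equals the distance between the context marginals, and taking marginals cannot increase it.
-/

open Finset

section TotalVariation

variable {α β : Type*} [Fintype α] [Fintype β]

theorem dTV_sum_fst_le (u v : α × β → ℝ) :
    dTV (fun b => ∑ a, u (a, b)) (fun b => ∑ a, v (a, b)) ≤ dTV u v := by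
  unfold dTV
  gcongr
  rw [Fintype.sum_prod_type_right]
  refine sum_le_sum fun b _ => ?_
  rw [← sum_sub_distrib]
  exact abs_sum_le_sum_abs _ _

theorem dTV_mul_kernel (μ ν : α → ℝ) (q : α → β → ℝ) (hq_nonneg : ∀ a b, 0 ≤ q a b)
    (hq_sum : ∀ a, ∑ b, q a b = 1) :
    dTV (fun p : α × β => μ p.1 * q p.1 p.2) (fun p => ν p.1 * q p.1 p.2) = dTV μ ν := by
  unfold dTV
  rw [Fintype.sum_prod_type]
  congr 1
  refine sum_congr rfl fun a _ => ?_
  calc ∑ b, |μ a * q a b - ν a * q a b| = ∑ b, |μ a - ν a| * q a b := by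
        refine sum_congr rfl fun b _ => ?_
        rw [← sub_mul, abs_mul, abs_of_nonneg (hq_nonneg a b)]
    _ = |μ a - ν a| := by rw [← mul_sum, hq_sum, mul_one]

end TotalVariation

section Chains

variable {X A : Type*} [Fintype X] [Fintype A] [DecidableEq X] [DecidableEq A]
  {pol : X → A → ℝ} {P : X → A → X → ℝ}
  {P1 : Matrix (A × X) (A × X) ℝ} {P2 : Matrix (X × A × X) (X × A × X) ℝ}

theorem actionContext_pow_succ_apply
    (hP1 : ∀ a x b y, P1 (a, x) (b, y) = pol x b * P x b y) (m : ℕ) (s : A × X) (c : A) (z : X) :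
    (P1 ^ (m + 1)) s (c, z) = ∑ w, (∑ d, (P1 ^ m) s (d, w)) * (pol w c * P w c z) := by
  rw [pow_succ, Matrix.mul_apply, Fintype.sum_prod_type_right]
  simp only [hP1, sum_mul]

/-- The triple chain forgets its first two coordinates after one step, and then moves like the
action–context chain with the action resampled in the new context. -/
theorem triple_pow_succ_apply
    (hP1 : ∀ a x b y, P1 (a, x) (b, y) = pol x b * P x b y)
    (hP2 : ∀ x a x' y b y', P2 (x, a, x') (y, b, y') = if y = x' then pol y b * P y b y' else 0)
    (m : ℕ) (x : X) (a : A) (y z : X) (b : A) (z' : X) :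
    (P2 ^ (m + 1)) (x, a, y) (z, b, z') = (∑ c, (P1 ^ m) (a, y) (c, z)) * (pol z b * P z b z') := by
  induction m generalizing z b z' with
  | zero =>
    rw [zero_add, pow_one, hP2]
    by_cases hz : z = y
    · subst hz
      simp [Matrix.one_apply]
    · simp [hz, Ne.symm hz]
  | succ m ih =>
    rw [pow_succ, Matrix.mul_apply, Fintype.sum_prod_type]
    simp only [Fintype.sum_prod_type, ih, hP2, mul_ite, mul_zero, sum_ite_eq, mem_univ, if_true]
    simp only [actionContext_pow_succ_apply hP1, ← sum_mul]
    rw [sum_comm]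

end Chains

/-- `pol x a` is `π(a|x)` and `P x a y` is `P(y|x,a)`. -/
theorem dTV_triple_vs_action_context_general
    {X A : Type*} [Fintype X] [Fintype A] [DecidableEq X] [DecidableEq A]
    (pol : X → A → ℝ) (hpol : ∀ x, (∀ a, 0 ≤ pol x a) ∧ ∑ a, pol x a = 1)
    (P : X → A → X → ℝ) (hP : ∀ x a, (∀ y, 0 ≤ P x a y) ∧ ∑ y, P x a y = 1)
    (Pi0 : X → ℝ)
    (hstat : ∀ y, ∑ x, Pi0 x * (∑ a, pol x a * P x a y) = Pi0 y)
    (P1 : Matrix (A × X) (A × X) ℝ)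
    (hP1 : ∀ (a : A) (x : X) (b : A) (y : X), P1 (a, x) (b, y) = pol x b * P x b y)
    (P2 : Matrix (X × A × X) (X × A × X) ℝ)
    (hP2 : ∀ (x : X) (a : A) (x' : X) (y : X) (b : A) (y' : X),
      P2 (x, a, x') (y, b, y') = if y = x' then pol y b * P y b y' else 0)
    (Pi1 : A × X → ℝ)
    (hPi1 : ∀ (a : A) (x : X), Pi1 (a, x) = ∑ y, Pi0 y * pol y a * P y a x)
    (Pi2 : X × A × X → ℝ)
    (hPi2 : ∀ (x : X) (a : A) (x' : X), Pi2 (x, a, x') = Pi0 x * pol x a * P x a x') :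
    ∀ h : ℕ, 1 ≤ h → ∀ (x : X) (a : A) (y : X),
      dTV (fun t : X × A × X => (P2 ^ (h + 1)) (x, a, y) t) Pi2
        ≤ dTV (fun s : A × X => (P1 ^ h) (a, y) s) Pi1 := by
  intro h _ x a y
  have hq_nonneg : ∀ z (w : A × X), 0 ≤ pol z w.1 * P z w.1 w.2 :=
    fun z w => mul_nonneg ((hpol z).1 w.1) ((hP z w.1).1 w.2)
  have hq_sum : ∀ z, ∑ w : A × X, pol z w.1 * P z w.1 w.2 = 1 := fun z => by
    simp only [Fintype.sum_prod_type, ← mul_sum, (hP _ _).2, mul_one, (hpol z).2]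
  have hPi0 : Pi0 = fun z => ∑ c, Pi1 (c, z) := funext fun z => by
    simp only [hPi1, ← hstat z, mul_sum, mul_assoc]
    exact sum_comm
  have hlaw : (fun t : X × A × X => (P2 ^ (h + 1)) (x, a, y) t)
      = fun t => (∑ c, (P1 ^ h) (a, y) (c, t.1)) * (pol t.1 t.2.1 * P t.1 t.2.1 t.2.2) :=
    funext fun ⟨z, b, z'⟩ => triple_pow_succ_apply hP1 hP2 h x a y z b z'
  have hPi2' : Pi2 = fun t => Pi0 t.1 * (pol t.1 t.2.1 * P t.1 t.2.1 t.2.2) :=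
    funext fun ⟨z, b, z'⟩ => by rw [hPi2, mul_assoc]
  rw [hlaw, hPi2', dTV_mul_kernel (fun z => ∑ c, (P1 ^ h) (a, y) (c, z)) Pi0 _ hq_nonneg hq_sum,
    hPi0]
  exact dTV_sum_fst_le _ _

/-- **Total variation comparison between the triple chain and the action–context chain.**
`pol x a` is the policy probability `π(a|x)`, `P x a y` the context transition
probability `P(y|x,a)`; `P₀(y|x) = Σ_a π(a|x)·P(y|x,a)`;
`P1 (a,x) (b,y) = π(b|x)·P(y|x,b)`;
`P2 (x,a,x') (y,b,y') = 1{y = x'}·π(b|y)·P(y'|y,b)`.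
`Pi0` is a stationary distribution of `P₀`, and `Pi1`, `Pi2` are built from it. -/
theorem dTV_triple_vs_action_context
    {X A : Type*} [Fintype X] [Fintype A] [DecidableEq X] [DecidableEq A]
    (pol : X → A → ℝ) (hpol : ∀ x, (∀ a, 0 ≤ pol x a) ∧ ∑ a, pol x a = 1)
    (P : X → A → X → ℝ) (hP : ∀ x a, (∀ y, 0 ≤ P x a y) ∧ ∑ y, P x a y = 1)
    (Pi0 : X → ℝ) (hPi0 : (∀ x, 0 ≤ Pi0 x) ∧ ∑ x, Pi0 x = 1)
    (hstat : ∀ y, ∑ x, Pi0 x * (∑ a, pol x a * P x a y) = Pi0 y)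
    (P1 : Matrix (A × X) (A × X) ℝ)
    (hP1 : ∀ (a : A) (x : X) (b : A) (y : X), P1 (a, x) (b, y) = pol x b * P x b y)
    (P2 : Matrix (X × A × X) (X × A × X) ℝ)
    (hP2 : ∀ (x : X) (a : A) (x' : X) (y : X) (b : A) (y' : X),
      P2 (x, a, x') (y, b, y') = if y = x' then pol y b * P y b y' else 0)
    (Pi1 : A × X → ℝ)
    (hPi1 : ∀ (a : A) (x : X), Pi1 (a, x) = ∑ y, Pi0 y * pol y a * P y a x)
    (Pi2 : X × A × X → ℝ)
    (hPi2 : ∀ (x : X) (a : A) (x' : X), Pi2 (x, a, x') = Pi0 x * pol x a * P x a x') :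
    ∀ h : ℕ, 1 ≤ h → ∀ (x : X) (a : A) (y : X),
      dTV (fun t : X × A × X => (P2 ^ (h + 1)) (x, a, y) t) Pi2
        ≤ dTV (fun s : A × X => (P1 ^ h) (a, y) s) Pi1 :=
  dTV_triple_vs_action_context_general pol hpol P hP Pi0 hstat P1 hP1 P2 hP2 Pi1 hPi1 Pi2 hPi2
end

section
/- (Near-symmetry of KL divergence under bounded likelihood ratios.) Let Z be a finite set and let p, q be PMFs on Z with p(z) > 0 and q(z) > 0 for all z ∈ Z. Suppose ξ ≥ 1 satisfies max_{z∈Z} max( p(z)/q(z), q(z)/p(z) ) ≤ ξ. Then KL(p‖q) ≤ ξ·KL(q‖p) and KL(q‖p) ≤ ξ·KL(p‖q). -/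
open Finset

private lemma kl_key (ξ : ℝ) (hξ : 1 ≤ ξ) {r : ℝ} (hr : 0 < r) (hrξ : r ≤ ξ) :
    r * Real.log r - r + 1 ≤ ξ * (r - 1 - Real.log r) := by
  set f : ℝ → ℝ := fun r => ξ * (r - 1 - Real.log r) - (r * Real.log r - r + 1) with hf
  have hf1 : f 1 = 0 := by simp [hf]
  have hderiv : ∀ x : ℝ, 0 < x → HasDerivAt f (ξ * (1 - x⁻¹) - Real.log x) x := by
    intro x hx
    have h1 : HasDerivAt Real.log x⁻¹ x := Real.hasDerivAt_log hx.ne'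
    have h2 : HasDerivAt (fun y : ℝ => y * Real.log y) (1 * Real.log x + x * x⁻¹) x :=
      (hasDerivAt_id x).mul h1
    have h3 : HasDerivAt (fun y : ℝ => ξ * (y - 1 - Real.log y)) (ξ * (1 - x⁻¹)) x := by
      exact (((hasDerivAt_id x).sub_const 1).sub h1).const_mul ξ
    have h4 : HasDerivAt (fun y : ℝ => y * Real.log y - y + 1)
        (1 * Real.log x + x * x⁻¹ - 1) x := ((h2.sub (hasDerivAt_id x)).add_const 1)
    have := h3.sub h4
    have hxx : x * x⁻¹ = 1 := mul_inv_cancel₀ hx.ne'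
    have e : ξ * (1 - x⁻¹) - Real.log x = ξ * (1 - x⁻¹) - (1 * Real.log x + x * x⁻¹ - 1) := by
      rw [hxx]; ring
    rw [e]; exact this
  have hgoal : 0 ≤ f r := by
    rcases le_or_gt r 1 with hr1 | hr1
    · -- antitone on Ioc 0 1
      have hcont : ContinuousOn f (Set.Ioc 0 1) := by
        intro x hx
        exact ((hderiv x hx.1).continuousAt).continuousWithinAt
      have hanti : AntitoneOn f (Set.Ioc 0 1) := by
        apply antitoneOn_of_deriv_nonpos (convex_Ioc 0 1) hcont
        · intro x hx
          rw [interior_Ioc] at hx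
          exact ((hderiv x hx.1).differentiableAt).differentiableWithinAt
        · intro x hx
          rw [interior_Ioc] at hx
          rw [(hderiv x hx.1).deriv]
          have hlog : 1 - x⁻¹ ≤ Real.log x := by
            have := Real.log_le_sub_one_of_pos (x := x⁻¹) (inv_pos.mpr hx.1)
            rw [Real.log_inv] at this
            linarith
          have hneg : 1 - x⁻¹ ≤ 0 := by
            have : 1 ≤ x⁻¹ := one_le_inv_iff₀.mpr ⟨hx.1, hx.2.le⟩
            linarith
          nlinarith
      have := hanti (Set.mem_Ioc.mpr ⟨hr, hr1⟩) (Set.mem_Ioc.mpr ⟨one_pos, le_refl 1⟩) hr1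
      linarith [hf1 ▸ this]
    · -- monotone on Icc 1 ξ
      have hcont : ContinuousOn f (Set.Icc 1 ξ) := by
        intro x hx
        exact ((hderiv x (lt_of_lt_of_le one_pos hx.1)).continuousAt).continuousWithinAt
      have hmono : MonotoneOn f (Set.Icc 1 ξ) := by
        apply monotoneOn_of_deriv_nonneg (convex_Icc 1 ξ) hcont
        · intro x hx
          rw [interior_Icc] at hx
          exact ((hderiv x (lt_trans one_pos hx.1)).differentiableAt).differentiableWithinAt
        · intro x hx
          rw [interior_Icc] at hx
          have hx0 : (0:ℝ) < x := lt_trans one_pos hx.1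
          rw [(hderiv x hx0).deriv]
          have hlog : Real.log x ≤ x - 1 := Real.log_le_sub_one_of_pos hx0
          have h1 : x - 1 = x * (1 - x⁻¹) := by field_simp
          have h2 : 0 ≤ 1 - x⁻¹ := by
            have : x⁻¹ ≤ 1 := (inv_le_one₀ hx0).mpr hx.1.le
            linarith
          nlinarith [hx.2.le]
      have := hmono (Set.mem_Icc.mpr ⟨le_refl 1, hξ⟩) (Set.mem_Icc.mpr ⟨hr1.le, hrξ⟩) hr1.le
      linarith [hf1 ▸ this]
  simp only [hf] at hgoal
  linarith

private lemma kl_term (ξ : ℝ) (hξ : 1 ≤ ξ) {x y : ℝ} (hx : 0 < x) (hy : 0 < y)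
    (h : x ≤ ξ * y) :
    x * Real.log (x / y) - x + y ≤ ξ * (y * Real.log (y / x) - y + x) := by
  have hr : 0 < x / y := by positivity
  have hrξ : x / y ≤ ξ := (div_le_iff₀ hy).mpr (by linarith)
  have key := kl_key ξ hξ hr hrξ
  have hmul := mul_le_mul_of_nonneg_left key hy.le
  have hxy : y * (x / y) = x := by field_simp
  have hlogyx : Real.log (y / x) = -Real.log (x / y) := by
    rw [← Real.log_inv, inv_div]
  have e1 : y * (x / y * Real.log (x / y) - x / y + 1)
      = y * (x / y) * Real.log (x / y) - y * (x / y) + y := by ring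
  have e2 : y * (ξ * (x / y - 1 - Real.log (x / y)))
      = ξ * (y * -Real.log (x / y) - y + y * (x / y)) := by ring
  rw [hxy] at e1 e2
  rw [hlogyx]
  linarith

private lemma kl_one_side
    {Z : Type*} [Fintype Z]
    (p q : Z → ℝ) (hp1 : ∑ z, p z = 1) (hq1 : ∑ z, q z = 1)
    (hppos : ∀ z, 0 < p z) (hqpos : ∀ z, 0 < q z)
    (ξ : ℝ) (hξ : 1 ≤ ξ) (hb : ∀ z, p z ≤ ξ * q z) :
    (∑ z, p z * Real.log (p z / q z)) ≤ ξ * ∑ z, q z * Real.log (q z / p z) := by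
  have hsum : ∑ z, (p z * Real.log (p z / q z) - p z + q z)
      ≤ ∑ z, ξ * (q z * Real.log (q z / p z) - q z + p z) := by
    apply Finset.sum_le_sum
    intro z _
    exact kl_term ξ hξ (hppos z) (hqpos z) (hb z)
  have hL : ∑ z, (p z * Real.log (p z / q z) - p z + q z)
      = (∑ z, p z * Real.log (p z / q z)) - 1 + 1 := by
    rw [Finset.sum_add_distrib, Finset.sum_sub_distrib, hp1, hq1]
  have hR : ∑ z, ξ * (q z * Real.log (q z / p z) - q z + p z)
      = ξ * ((∑ z, q z * Real.log (q z / p z)) - 1 + 1) := by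
    rw [← Finset.mul_sum, Finset.sum_add_distrib, Finset.sum_sub_distrib, hp1, hq1]
  rw [hL, hR] at hsum
  linarith

/-- **Near-symmetry of KL divergence under bounded likelihood ratios.**
`KL(p‖q) = Σ_z p(z)·log(p(z)/q(z))` for fully supported PMFs `p`, `q`. -/
theorem kl_near_symmetry
    {Z : Type*} [Fintype Z]
    (p q : Z → ℝ) (hp : IsPMF p) (hq : IsPMF q)
    (hppos : ∀ z, 0 < p z) (hqpos : ∀ z, 0 < q z)
    (ξ : ℝ) (hξ : 1 ≤ ξ)
    (hratio : ∀ z, max (p z / q z) (q z / p z) ≤ ξ) :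
    (∑ z, p z * Real.log (p z / q z)) ≤ ξ * ∑ z, q z * Real.log (q z / p z)
    ∧ (∑ z, q z * Real.log (q z / p z)) ≤ ξ * ∑ z, p z * Real.log (p z / q z) := by
  have hbpq : ∀ z, p z ≤ ξ * q z := by
    intro z
    have h := le_trans (le_max_left _ _) (hratio z)
    rw [div_le_iff₀ (hqpos z)] at h
    linarith [h, mul_comm ξ (q z)]
  have hbqp : ∀ z, q z ≤ ξ * p z := by
    intro z
    have h := le_trans (le_max_right _ _) (hratio z)
    rw [div_le_iff₀ (hppos z)] at h
    linarith [h, mul_comm ξ (p z)]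
  exact ⟨kl_one_side p q hp.2 hq.2 hppos hqpos ξ hξ hbpq,
    kl_one_side q p hq.2 hp.2 hqpos hppos ξ hξ hbqp⟩
end

section
/- (KL-mixture representation of the rate function and characterization of its zero set.) Define G := Σ_{a∈A} Σ_{s∈S} [ c·q₀·p(j|s,a)·m(s,a)·log( c·p(j|s,a)/p(i|s,a) ) + c·q₀·m(j,a)·p(s|j,a)·log( p(s|j,a)/p(s|i,a) ) + (1 − c·q₀·p(j|s,a))·m(s,a)·log( (1 − c·q₀·p(j|s,a))/(1 − q₀·p(i|s,a)) ) ]. Define r and r̃ on S×{0,1}×A by r(s,1,a) := m(s,a)·q₀·p(i|s,a), r(s,0,a) := m(s,a)·(1 − q₀·p(i|s,a)), r̃(s,1,a) := m(s,a)·c·q₀·p(j|s,a), r̃(s,0,a) := m(s,a)·(1 − c·q₀·p(j|s,a)). Then r and r̃ are PMFs on S×{0,1}×A, and G = KL(r̃‖r) + c·q₀·Σ_{a∈A} m(j,a)·KL( p(·|j,a) ‖ p(·|i,a) ). In particular G ≥ 0, and G = 0 if and only if p(i|s,a) = c·p(j|s,a) and p(s|i,a) = p(s|j,a) for all (s,a)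 ∈ S×A. -/
open Finset

lemma kl_helper {Z : Type*} [Fintype Z] (u v : Z → ℝ) (hu : ∀ z, 0 < u z)
    (hv : ∀ z, 0 < v z) (hs : ∑ z, u z = ∑ z, v z) :
    0 ≤ ∑ z, u z * Real.log (u z / v z) ∧
    ((∑ z, u z * Real.log (u z / v z)) = 0 ↔ ∀ z, u z = v z) := by
  have key : ∀ z : Z, u z - v z ≤ u z * Real.log (u z / v z) := by
    intro z
    have h1 : Real.log (v z / u z) ≤ v z / u z - 1 :=
      Real.log_le_sub_one_of_pos (div_pos (hv z) (hu z))
    have h2 : Real.log (u z / v z) = - Real.log (v z / u z) := by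
      rw [← Real.log_inv, inv_div]
    have h3 : u z * (v z / u z) = v z := by
      rw [mul_comm, div_mul_cancel₀ _ (hu z).ne']
    have h4 : u z * Real.log (u z / v z) = -(u z * Real.log (v z / u z)) := by
      rw [h2, mul_neg]
    nlinarith [mul_le_mul_of_nonneg_left h1 (hu z).le]
  have hsum0 : ∑ z, (u z - v z) = 0 := by
    rw [Finset.sum_sub_distrib, hs, sub_self]
  have hle : 0 ≤ ∑ z, u z * Real.log (u z / v z) := by
    calc (0:ℝ) = ∑ z, (u z - v z) := hsum0.symm
    _ ≤ ∑ z, u z * Real.log (u z / v z) :=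
        Finset.sum_le_sum (fun z _ => key z)
  refine ⟨hle, ?_, ?_⟩
  · intro h0
    have heq : ∀ z ∈ Finset.univ, u z - v z = u z * Real.log (u z / v z) := by
      rw [← Finset.sum_eq_sum_iff_of_le (fun z _ => key z), hsum0, h0]
    intro z
    by_contra hne
    have h1 : Real.log (v z / u z) < v z / u z - 1 :=
      Real.log_lt_sub_one_of_pos (div_pos (hv z) (hu z)) (by
        intro h
        exact hne ((div_eq_one_iff_eq (hu z).ne').mp h).symm)
    have h2 : Real.log (u z / v z) = - Real.log (v z / u z) := by
      rw [← Real.log_inv, inv_div]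
    have h3 : u z * (v z / u z) = v z := by
      rw [mul_comm, div_mul_cancel₀ _ (hu z).ne']
    have h4 : u z * Real.log (u z / v z) = -(u z * Real.log (v z / u z)) := by
      rw [h2, mul_neg]
    have := heq z (Finset.mem_univ z)
    nlinarith [mul_lt_mul_of_pos_left h1 (hu z)]
  · intro h
    apply Finset.sum_eq_zero
    intro z _
    rw [h z, div_self (hv z).ne', Real.log_one, mul_zero]


/-- **KL-mixture representation of the rate function and characterization of its zero
set.**  Here `p s a s'` is the latent transition probability `p(s'|s,a)`, `m s a` is
the PMF `m(s,a)` on latent state–action pairs, `q₀ = q(x|i)`, and the set `{0,1}` is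
modeled by `Bool` (`true ↔ 1`, `false ↔ 0`). -/
theorem rate_function_kl_representation
    {S A : Type*} [Fintype S] [Fintype A]
    (p : S → A → S → ℝ) (hp : ∀ s a, (∀ s', 0 < p s a s') ∧ ∑ s', p s a s' = 1)
    (m : S → A → ℝ) (hm : (∀ s a, 0 < m s a) ∧ ∑ s, ∑ a, m s a = 1)
    (i j : S) (hij : i ≠ j)
    (q0 : ℝ) (hq0 : 0 < q0 ∧ q0 < 1)
    (c : ℝ) (hc : 0 < c)
    (hlt1 : ∀ s a, c * q0 * p s a j < 1)
    (hlt2 : ∀ s a, q0 * p s a i < 1)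
    (G : ℝ)
    (hG : G = ∑ a, ∑ s,
      (c * q0 * p s a j * m s a * Real.log (c * p s a j / p s a i)
        + c * q0 * m j a * p j a s * Real.log (p j a s / p i a s)
        + (1 - c * q0 * p s a j) * m s a *
            Real.log ((1 - c * q0 * p s a j) / (1 - q0 * p s a i))))
    (r rt : S × Bool × A → ℝ)
    (hr : ∀ s a, r (s, true, a) = m s a * q0 * p s a i
               ∧ r (s, false, a) = m s a * (1 - q0 * p s a i))
    (hrt : ∀ s a, rt (s, true, a) = m s a * c * q0 * p s a j
                ∧ rt (s, false, a) = m s a * (1 - c * q0 * p s a j)) :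
    IsPMF r ∧ IsPMF rt
    ∧ G = (∑ t : S × Bool × A, rt t * Real.log (rt t / r t))
        + c * q0 * ∑ a, m j a * ∑ s, p j a s * Real.log (p j a s / p i a s)
    ∧ 0 ≤ G
    ∧ (G = 0 ↔ ∀ s a, p s a i = c * p s a j ∧ p i a s = p j a s) := by
  obtain ⟨hq0p, hq0l⟩ := hq0
  obtain ⟨hmp, hms⟩ := hm
  -- positivity of r and rt
  have hrpos : ∀ z, 0 < r z := by
    rintro ⟨s, b, a⟩
    cases b
    · rw [(hr s a).2]
      exact mul_pos (hmp s a) (by linarith [hlt2 s a])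
    · rw [(hr s a).1]
      exact mul_pos (mul_pos (hmp s a) hq0p) ((hp s a).1 i)
  have hrtpos : ∀ z, 0 < rt z := by
    rintro ⟨s, b, a⟩
    cases b
    · rw [(hrt s a).2]
      exact mul_pos (hmp s a) (by linarith [hlt1 s a])
    · rw [(hrt s a).1]
      exact mul_pos (mul_pos (mul_pos (hmp s a) hc) hq0p) ((hp s a).1 j)
  -- sums of r and rt
  have hrsum : ∑ z, r z = 1 := by
    rw [Fintype.sum_prod_type]
    have step : ∀ s : S, ∑ y : Bool × A, r (s, y) = ∑ a, m s a := by
      intro s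
      rw [Fintype.sum_prod_type, Fintype.sum_bool, ← Finset.sum_add_distrib]
      refine Finset.sum_congr rfl (fun a _ => ?_)
      rw [(hr s a).1, (hr s a).2]; ring
    calc ∑ s, ∑ y : Bool × A, r (s, y) = ∑ s, ∑ a, m s a :=
          Finset.sum_congr rfl (fun s _ => step s)
    _ = 1 := hms
  have hrtsum : ∑ z, rt z = 1 := by
    rw [Fintype.sum_prod_type]
    have step : ∀ s : S, ∑ y : Bool × A, rt (s, y) = ∑ a, m s a := by
      intro s
      rw [Fintype.sum_prod_type, Fintype.sum_bool, ← Finset.sum_add_distrib]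
      refine Finset.sum_congr rfl (fun a _ => ?_)
      rw [(hrt s a).1, (hrt s a).2]; ring
    calc ∑ s, ∑ y : Bool × A, rt (s, y) = ∑ s, ∑ a, m s a :=
          Finset.sum_congr rfl (fun s _ => step s)
    _ = 1 := hms
  -- KL between rt and r, rewritten as a double sum
  have hKLeq : (∑ t : S × Bool × A, rt t * Real.log (rt t / r t))
      = ∑ a, ∑ s,
        (c * q0 * p s a j * m s a * Real.log (c * p s a j / p s a i)
          + (1 - c * q0 * p s a j) * m s a *
              Real.log ((1 - c * q0 * p s a j) / (1 - q0 * p s a i))) := by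
    rw [Fintype.sum_prod_type]
    have step : ∀ s : S, ∑ y : Bool × A, rt (s, y) * Real.log (rt (s, y) / r (s, y))
        = ∑ a, (c * q0 * p s a j * m s a * Real.log (c * p s a j / p s a i)
          + (1 - c * q0 * p s a j) * m s a *
              Real.log ((1 - c * q0 * p s a j) / (1 - q0 * p s a i))) := by
      intro s
      rw [Fintype.sum_prod_type, Fintype.sum_bool, ← Finset.sum_add_distrib]
      refine Finset.sum_congr rfl (fun a _ => ?_)
      rw [(hr s a).1, (hr s a).2, (hrt s a).1, (hrt s a).2]
      have e1 : m s a * c * q0 * p s a j / (m s a * q0 * p s a i)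
          = c * p s a j / p s a i := by
        field_simp [(hmp s a).ne', hq0p.ne', ((hp s a).1 i).ne']
      have e2 : m s a * (1 - c * q0 * p s a j) / (m s a * (1 - q0 * p s a i))
          = (1 - c * q0 * p s a j) / (1 - q0 * p s a i) :=
        mul_div_mul_left _ _ (hmp s a).ne'
      rw [e1, e2]; ring
    calc ∑ s, ∑ y : Bool × A, rt (s, y) * Real.log (rt (s, y) / r (s, y))
        = ∑ s, ∑ a, (c * q0 * p s a j * m s a * Real.log (c * p s a j / p s a i)
          + (1 - c * q0 * p s a j) * m s a *
              Real.log ((1 - c * q0 * p s a j) / (1 - q0 * p s a i))) :=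
          Finset.sum_congr rfl (fun s _ => step s)
    _ = _ := Finset.sum_comm
  -- the inner KL term, rewritten as a double sum
  have hXeq : c * q0 * ∑ a, m j a * ∑ s, p j a s * Real.log (p j a s / p i a s)
      = ∑ a, ∑ s, c * q0 * m j a * p j a s * Real.log (p j a s / p i a s) := by
    rw [Finset.mul_sum]
    refine Finset.sum_congr rfl (fun a _ => ?_)
    rw [Finset.mul_sum, Finset.mul_sum]
    refine Finset.sum_congr rfl (fun s _ => ?_)
    ring
  -- the decomposition
  have hdecomp : G = (∑ t : S × Bool × A, rt t * Real.log (rt t / r t))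
      + c * q0 * ∑ a, m j a * ∑ s, p j a s * Real.log (p j a s / p i a s) := by
    rw [hG, hKLeq, hXeq, ← Finset.sum_add_distrib]
    refine Finset.sum_congr rfl (fun a _ => ?_)
    rw [← Finset.sum_add_distrib]
    refine Finset.sum_congr rfl (fun s _ => ?_)
    ring
  -- nonnegativity and zero characterizations
  obtain ⟨hKLnn, hKLiff⟩ := kl_helper rt r hrtpos hrpos (by rw [hrtsum, hrsum])
  have hD : ∀ a : A, 0 ≤ ∑ s, p j a s * Real.log (p j a s / p i a s) ∧
      ((∑ s, p j a s * Real.log (p j a s / p i a s)) = 0 ↔ ∀ s, p j a s = p i a s) :=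
    fun a => kl_helper (p j a) (p i a) ((hp j a).1) ((hp i a).1)
      (by rw [(hp j a).2, (hp i a).2])
  have hYnn : 0 ≤ ∑ a, m j a * ∑ s, p j a s * Real.log (p j a s / p i a s) :=
    Finset.sum_nonneg (fun a _ => mul_nonneg (hmp j a).le (hD a).1)
  have hGnn : 0 ≤ G := by
    rw [hdecomp]
    have : 0 ≤ c * q0 := (mul_pos hc hq0p).le
    nlinarith
  refine ⟨⟨fun z => (hrpos z).le, hrsum⟩, ⟨fun z => (hrtpos z).le, hrtsum⟩,
    hdecomp, hGnn, ?_, ?_⟩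
  · -- G = 0 → conditions
    intro h0
    have hcq : 0 < c * q0 := mul_pos hc hq0p
    have hXnn : 0 ≤ c * q0 * ∑ a, m j a * ∑ s, p j a s * Real.log (p j a s / p i a s) :=
      mul_nonneg hcq.le hYnn
    have hKL0 : (∑ t : S × Bool × A, rt t * Real.log (rt t / r t)) = 0 := by
      rw [hdecomp] at h0; linarith
    have hX0 : (∑ a, m j a * ∑ s, p j a s * Real.log (p j a s / p i a s)) = 0 := by
      rw [hdecomp, hKL0, zero_add] at h0
      exact (mul_eq_zero.mp h0).resolve_left hcq.ne'
    have hreq := hKLiff.mp hKL0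
    have hD0 : ∀ a : A, (∑ s, p j a s * Real.log (p j a s / p i a s)) = 0 := by
      intro a
      have := (Finset.sum_eq_zero_iff_of_nonneg
        (fun a _ => mul_nonneg (hmp j a).le (hD a).1)).mp hX0 a (Finset.mem_univ a)
      exact (mul_eq_zero.mp this).resolve_left (hmp j a).ne'
    intro s a
    constructor
    · have h1 := hreq (s, true, a)
      rw [(hrt s a).1, (hr s a).1] at h1
      have h2 : (m s a * q0) * (c * p s a j) = (m s a * q0) * p s a i := by
        linear_combination h1
      exact (mul_left_cancel₀ (mul_pos (hmp s a) hq0p).ne' h2).symm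
    · exact (((hD a).2.mp (hD0 a)) s).symm
  · -- conditions → G = 0
    intro h
    have hKL0 : (∑ t : S × Bool × A, rt t * Real.log (rt t / r t)) = 0 := by
      apply hKLiff.mpr
      rintro ⟨s, b, a⟩
      cases b
      · rw [(hrt s a).2, (hr s a).2, (h s a).1]; ring
      · rw [(hrt s a).1, (hr s a).1, (h s a).1]; ring
    have hD0 : ∀ a : A, (∑ s, p j a s * Real.log (p j a s / p i a s)) = 0 :=
      fun a => (hD a).2.mpr (fun s => ((h s a).2).symm)
    rw [hdecomp, hKL0, zero_add]
    have : (∑ a, m j a * ∑ s, p j a s * Real.log (p j a s / p i a s)) = 0 :=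
      Finset.sum_eq_zero (fun a _ => by rw [hD0 a, mul_zero])
    rw [this, mul_zero]
end

section
/- (Latent-variable reformulation of kinematic inseparability.) Fix a PMF u on X×A with u(x,a) > 0 for all (x,a), and contexts x₁, x₂ ∈ X. Then: (a) P(x|x₁,a) = P(x|x₂,a) for all (x,a) ∈ X×A if and only if p(s|f(x₁),a) = p(s|f(x₂),a) for all (s,a) ∈ S×A; and (b) P^{bwd}(x,a|x₁) = P^{bwd}(x,a|x₂) for all (x,a) ∈ X×A if and only if p(f(x₁)|s,a) / Σ_{(x',a')∈X×A} p(f(x₁)|f(x'),a')·u(x',a') = p(f(x₂)|s,a) / Σ_{(x',a')∈X×A} p(f(x₂)|f(x'),a')·u(x',a') for all (s,a) ∈ S×A. -/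
open Finset

/-- Context transition kernel of a Block MDP: `ctxKer f p q x a y = P(y|x,a) =
q(y|f(y))·p(f(y)|f(x),a)`, where `p s a s' = p(s'|s,a)` and `q s y = q(y|s)`. -/
def ctxKer {X S A : Type*} (f : X → S) (p : S → A → S → ℝ) (q : S → X → ℝ)
    (x : X) (a : A) (y : X) : ℝ :=
  q (f y) y * p (f x) a (f y)

/-- Context backward transition kernel:
`ctxBwd f p q u x a y = P^{bwd}(x,a|y) = P(y|x,a)·u(x,a) / Σ_{x',a'} P(y|x',a')·u(x',a')`. -/
noncomputable def ctxBwd {X S A : Type*} [Fintype X] [Fintype A]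
    (f : X → S) (p : S → A → S → ℝ) (q : S → X → ℝ) (u : X × A → ℝ)
    (x : X) (a : A) (y : X) : ℝ :=
  ctxKer f p q x a y * u (x, a) / ∑ t : X × A, ctxKer f p q t.1 t.2 y * u t

/-!
Both kernels factor through the latent model: `P(y|x,a)` is `p(f y|f x,a)` scaled by the
emission weight `q(y|f y) > 0`, which cancels from the forward equality and, being common to
numerator and denominator, from the backward kernel; the positive weight `u(x,a)` then
cancels from the backward equality. Surjectivity of `f` turns the resulting conditions on
contexts into conditions on all latent states.
-/

section BlockMDP

variable {X S A : Type*} (f : X → S) (p : S → A → S → ℝ) (q : S → X → ℝ)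

theorem ctxKer_eq_ctxKer_iff {x₁ x₂ y : X} {a : A} (hq : q (f y) y ≠ 0) :
    ctxKer f p q x₁ a y = ctxKer f p q x₂ a y ↔ p (f x₁) a (f y) = p (f x₂) a (f y) :=
  mul_right_inj' hq

variable [Fintype X] [Fintype A] (u : X × A → ℝ)

theorem sum_ctxKer_mul (y : X) :
    ∑ t : X × A, ctxKer f p q t.1 t.2 y * u t
      = q (f y) y * ∑ t : X × A, p (f t.1) t.2 (f y) * u t := by
  rw [mul_sum]
  exact sum_congr rfl fun t _ => by rw [ctxKer]; ring

theorem ctxBwd_eq_latent {y : X} (hq : q (f y) y ≠ 0) (x : X) (a : A) :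
    ctxBwd f p q u x a y
      = p (f x) a (f y) / (∑ t : X × A, p (f t.1) t.2 (f y) * u t) * u (x, a) := by
  rw [ctxBwd, sum_ctxKer_mul, ctxKer, mul_assoc, mul_div_mul_left _ _ hq, mul_div_right_comm]

end BlockMDP

theorem kinematic_inseparability_latent_reformulation_general
    {X S A : Type*} [Fintype X] [Fintype A]
    (f : X → S) (hf : Function.Surjective f)
    (p : S → A → S → ℝ)
    (q : S → X → ℝ)
    (hqpos : ∀ x, 0 < q (f x) x)
    (u : X × A → ℝ) (hupos : ∀ t, 0 < u t)
    (x₁ x₂ : X) :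
    ((∀ (x : X) (a : A), ctxKer f p q x₁ a x = ctxKer f p q x₂ a x) ↔
      ∀ (s : S) (a : A), p (f x₁) a s = p (f x₂) a s)
    ∧
    ((∀ (x : X) (a : A), ctxBwd f p q u x a x₁ = ctxBwd f p q u x a x₂) ↔
      ∀ (s : S) (a : A),
        p s a (f x₁) / (∑ t : X × A, p (f t.1) t.2 (f x₁) * u t)
          = p s a (f x₂) / (∑ t : X × A, p (f t.1) t.2 (f x₂) * u t)) := by
  constructor
  · simp_rw [ctxKer_eq_ctxKer_iff f p q (hqpos _).ne']
    exact (hf.forall (p := fun s => ∀ a, p (f x₁) a s = p (f x₂) a s)).symm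
  · simp_rw [ctxBwd_eq_latent f p q u (hqpos _).ne', mul_left_inj' (hupos _).ne']
    exact (hf.forall (p := fun s => ∀ a, p s a (f x₁) / _ = p s a (f x₂) / _)).symm

/-- **Latent-variable reformulation of kinematic inseparability.**
Part (a): equality of the forward kernels out of `x₁` and `x₂` is equivalent to
equality of the latent forward transitions from `f(x₁)` and `f(x₂)`.
Part (b): equality of the backward kernels into `x₁` and `x₂` is equivalent to the
latent backward condition (C2'). -/
theorem kinematic_inseparability_latent_reformulation
    {X S A : Type*} [Fintype X] [Fintype S] [Fintype A]
    (f : X → S) (hf : Function.Surjective f)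
    (p : S → A → S → ℝ) (hp : ∀ s a, (∀ s', 0 < p s a s') ∧ ∑ s', p s a s' = 1)
    (q : S → X → ℝ)
    (hq : ∀ s, (∀ y, 0 ≤ q s y) ∧ (∀ y, f y ≠ s → q s y = 0) ∧ ∑ y, q s y = 1)
    (hqpos : ∀ x, 0 < q (f x) x)
    (u : X × A → ℝ) (hu : IsPMF u) (hupos : ∀ t, 0 < u t)
    (x₁ x₂ : X) :
    ((∀ (x : X) (a : A), ctxKer f p q x₁ a x = ctxKer f p q x₂ a x) ↔
      ∀ (s : S) (a : A), p (f x₁) a s = p (f x₂) a s)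
    ∧
    ((∀ (x : X) (a : A), ctxBwd f p q u x a x₁ = ctxBwd f p q u x a x₂) ↔
      ∀ (s : S) (a : A),
        p s a (f x₁) / (∑ t : X × A, p (f t.1) t.2 (f x₁) * u t)
          = p s a (f x₂) / (∑ t : X × A, p (f t.1) t.2 (f x₂) * u t)) :=
  kinematic_inseparability_latent_reformulation_general f hf p q hqpos u hupos x₁ x₂
end

section
/- (Horizon-free bound on centered value functions.) Suppose there exists η ≥ 1 such that for every h ∈ {1, …, H} the policy-induced kernel Q_h(z|x) := P(z|x, π_h(x)) satisfies the Doeblin-type regularity condition Σ_{z∈X} min( Q_h(z|x), Q_h(z|x') ) ≥ 1/η² for all x, x' ∈ X. Then for every h ∈ {1, …, H}, every (x,a) ∈ X×A, and every y ∈ X: | V_{h+1}(y) − Σ_{z∈X} P(z|x,a)·V_{h+1}(z) | ≤ 2η² − 1. -/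
/-!
The key quantity is the span `max V_h - min V_h`. One Bellman step adds at most `1` (rewards lie
in `[0, 1]`), while the Doeblin overlap `δ = 1/η²` lets the two next-state distributions share
mass `δ`, on which `V_{h+1}` cancels, so the span of `V_{h+1}` enters only with factor `1 - δ`.
Hence `η²`, the fixed point of `c ↦ 1 + (1 - 1/η²) c`, bounds every span by backward induction
from `V_{H+1} = 0`, and a value differs from any average of values by at most the span.
-/

open Finset

section

variable {X : Type*} [Fintype X]

theorem abs_sub_sum_mul_le {p f : X → ℝ} {c : ℝ} (hp : ∀ z, 0 ≤ p z)
    (hp1 : ∑ z, p z = 1) (hf : ∀ u v, f u - f v ≤ c) (y : X) :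
    |f y - ∑ z, p z * f z| ≤ c := by
  have hsum : f y - ∑ z, p z * f z = ∑ z, p z * (f y - f z) := by
    simp only [mul_sub, sum_sub_distrib, ← sum_mul, hp1, one_mul]
  calc |f y - ∑ z, p z * f z| ≤ ∑ z, p z * |f y - f z| := by
        rw [hsum]
        refine (abs_sum_le_sum_abs _ _).trans_eq (sum_congr rfl fun z _ => ?_)
        rw [abs_mul, abs_of_nonneg (hp z)]
    _ ≤ ∑ z, p z * c := by
        gcongr with z
        · exact hp z
        · exact abs_sub_le_iff.2 ⟨hf y z, hf z y⟩
    _ = c := by rw [← sum_mul, hp1, one_mul]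

theorem sum_mul_sub_sum_mul_le_of_overlap {p q f : X → ℝ} {c δ : ℝ}
    (hp1 : ∑ z, p z = 1) (hq1 : ∑ z, q z = 1) (hδ : δ ≤ ∑ z, min (p z) (q z))
    (hf : ∀ u v, f u - f v ≤ c) :
    ∑ z, p z * f z - ∑ z, q z * f z ≤ (1 - δ) * c := by
  have : Nonempty X := by
    by_contra hX
    rw [not_nonempty_iff] at hX
    simp at hp1
  obtain ⟨z₀, hz₀⟩ := Finite.exists_min f
  have hc : 0 ≤ c := by simpa using hf z₀ z₀
  set S := ∑ z, min (p z) (q z)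
  have upper : ∑ z, (p z - min (p z) (q z)) * f z ≤ (1 - S) * (f z₀ + c) :=
    calc ∑ z, (p z - min (p z) (q z)) * f z
        ≤ ∑ z, (p z - min (p z) (q z)) * (f z₀ + c) := by
          gcongr with z
          · exact sub_nonneg.2 (min_le_left _ _)
          · linarith [hf z z₀]
      _ = (1 - S) * (f z₀ + c) := by rw [← sum_mul, sum_sub_distrib, hp1]
  have lower : (1 - S) * f z₀ ≤ ∑ z, (q z - min (p z) (q z)) * f z :=
    calc (1 - S) * f z₀ = ∑ z, (q z - min (p z) (q z)) * f z₀ := by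
          rw [← sum_mul, sum_sub_distrib, hq1]
      _ ≤ ∑ z, (q z - min (p z) (q z)) * f z := by
          gcongr with z
          · exact sub_nonneg.2 (min_le_right _ _)
          · exact hz₀ z
  calc ∑ z, p z * f z - ∑ z, q z * f z
      = ∑ z, (p z - min (p z) (q z)) * f z - ∑ z, (q z - min (p z) (q z)) * f z := by
        simp only [sub_mul, sum_sub_distrib]
        ring
    _ ≤ (1 - S) * c := by linarith
    _ ≤ (1 - δ) * c := mul_le_mul_of_nonneg_right (by linarith) hc

theorem bellman_sub_le_of_overlap {p : X → X → ℝ} {r f : X → ℝ} {c δ : ℝ}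
    (hp1 : ∀ x, ∑ z, p x z = 1) (hr : ∀ x, 0 ≤ r x ∧ r x ≤ 1)
    (hδ : ∀ x x', δ ≤ ∑ z, min (p x z) (p x' z)) (hf : ∀ u v, f u - f v ≤ c)
    (x x' : X) :
    (r x + ∑ z, p x z * f z) - (r x' + ∑ z, p x' z * f z) ≤ 1 + (1 - δ) * c := by
  have := sum_mul_sub_sum_mul_le_of_overlap (hp1 x) (hp1 x') (hδ x x') hf
  linarith [hr x, hr x']

end

theorem value_sub_value_le_of_doeblin
    {X A : Type*} [Fintype X] {H : ℕ}
    {P : X → A → X → ℝ} (hP : ∀ x a, ∑ y, P x a y = 1)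
    {r : ℕ → X → A → ℝ}
    (hr : ∀ h, 1 ≤ h → h ≤ H → ∀ x a, 0 ≤ r h x a ∧ r h x a ≤ 1)
    {pol : ℕ → X → A} {η : ℝ} (hη : η ≠ 0)
    (hdoeblin : ∀ h, 1 ≤ h → h ≤ H → ∀ x x' : X,
      1 / η ^ 2 ≤ ∑ z, min (P x (pol h x) z) (P x' (pol h x') z))
    {V : ℕ → X → ℝ} (hV0 : ∀ x, V (H + 1) x = 0)
    (hVrec : ∀ h, 1 ≤ h → h ≤ H → ∀ x,
      V h x = r h x (pol h x) + ∑ y, P x (pol h x) y * V (h + 1) y)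
    {h : ℕ} (h1 : 1 ≤ h) (hH : h ≤ H + 1) (x x' : X) :
    V h x - V h x' ≤ η ^ 2 := by
  induction hH using Nat.decreasingInduction generalizing x x' with
  | self => simp [hV0, sq_nonneg]
  | of_succ k hk ih =>
    have hkH : k ≤ H := Nat.lt_succ_iff.1 hk
    rw [hVrec k h1 hkH x, hVrec k h1 hkH x']
    calc _ ≤ 1 + (1 - 1 / η ^ 2) * η ^ 2 :=
          bellman_sub_le_of_overlap (fun x => hP x (pol k x))
            (fun x => hr k h1 hkH x (pol k x)) (hdoeblin k h1 hkH) (ih (h1.trans k.le_succ)) x x'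
      _ = η ^ 2 := by field_simp; ring

theorem horizon_free_centered_value_bound_general
    {X A : Type*} [Fintype X]
    (H : ℕ)
    (P : X → A → X → ℝ) (hP : ∀ x a, (∀ y, 0 ≤ P x a y) ∧ ∑ y, P x a y = 1)
    (r : ℕ → X → A → ℝ)
    (hr : ∀ h, 1 ≤ h → h ≤ H → ∀ x a, 0 ≤ r h x a ∧ r h x a ≤ 1)
    (pol : ℕ → X → A)
    (η : ℝ) (hη : 1 ≤ η)
    (hdoeblin : ∀ h, 1 ≤ h → h ≤ H → ∀ x x' : X,
      1 / η ^ 2 ≤ ∑ z, min (P x (pol h x) z) (P x' (pol h x') z))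
    (V : ℕ → X → ℝ)
    (hV0 : ∀ x, V (H + 1) x = 0)
    (hVrec : ∀ h, 1 ≤ h → h ≤ H → ∀ x,
      V h x = r h x (pol h x) + ∑ y, P x (pol h x) y * V (h + 1) y) :
    ∀ h, 1 ≤ h → h ≤ H → ∀ (x : X) (a : A) (y : X),
      |V (h + 1) y - ∑ z, P x a z * V (h + 1) z| ≤ 2 * η ^ 2 - 1 := by
  intro h _ hH x a y
  have hspan : ∀ u v, V (h + 1) u - V (h + 1) v ≤ η ^ 2 :=
    value_sub_value_le_of_doeblin (fun x a => (hP x a).2) hr (zero_lt_one.trans_le hη).ne'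
      hdoeblin hV0 hVrec (Nat.le_add_left 1 h) (Nat.succ_le_succ hH)
  have hη2 : 1 ≤ η ^ 2 := one_le_pow₀ hη
  linarith [abs_sub_sum_mul_le (hP x a).1 (hP x a).2 hspan y]

/-- **Horizon-free bound on centered value functions.**
`P x a y = P(y|x,a)`, `r h x a` are the rewards, `π` is a deterministic policy, and `V`
is the family of value functions of `π`, defined backwards from `V (H+1) = 0`.  The
policy-induced kernels `Q_h(z|x) = P(z|x,π_h(x))` satisfy a Doeblin-type regularity
condition with constant `1/η²`. -/
theorem horizon_free_centered_value_bound
    {X A : Type*} [Fintype X] [Fintype A]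
    (H : ℕ) (hH : 1 ≤ H)
    (P : X → A → X → ℝ) (hP : ∀ x a, (∀ y, 0 ≤ P x a y) ∧ ∑ y, P x a y = 1)
    (r : ℕ → X → A → ℝ)
    (hr : ∀ h, 1 ≤ h → h ≤ H → ∀ x a, 0 ≤ r h x a ∧ r h x a ≤ 1)
    (pol : ℕ → X → A)
    (η : ℝ) (hη : 1 ≤ η)
    (hdoeblin : ∀ h, 1 ≤ h → h ≤ H → ∀ x x' : X,
      1 / η ^ 2 ≤ ∑ z, min (P x (pol h x) z) (P x' (pol h x') z))
    (V : ℕ → X → ℝ)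
    (hV0 : ∀ x, V (H + 1) x = 0)
    (hVrec : ∀ h, 1 ≤ h → h ≤ H → ∀ x,
      V h x = r h x (pol h x) + ∑ y, P x (pol h x) y * V (h + 1) y) :
    ∀ h, 1 ≤ h → h ≤ H → ∀ (x : X) (a : A) (y : X),
      |V (h + 1) y - ∑ z, P x a z * V (h + 1) z| ≤ 2 * η ^ 2 - 1 :=
  horizon_free_centered_value_bound_general H P hP r hr pol η hη hdoeblin V hV0 hVrec
end

section
/- (Error decomposition for the estimated context kernel.) Assume every emission probability of the true model satisfies q(y|s) ≤ κ/n for all y ∈ X and s ∈ S, where n = |X| and κ > 0. Then for every x ∈ X, a ∈ A, and V : X → ℝ: | Σ_{y∈X} ( P̃(y|x,a) − P̂(y|x,a) )·V(y) | ≤ max_{s∈S} ‖p̂(·|s,a) − p(·|s,a)‖₁ · ‖V‖_∞ + max_{s∈S} | Σ_{y∈X} ( q̂(y|s) − q(y|s) )·V(y) | + (κ·|E|/n)·‖V‖_∞, where E := { y ∈ X : f̂(y) ≠ f(y) } is the set of misclassified contexts, ‖p̂(·|s,a) − p(·|s,a)‖₁ := Σ_{s'∈S} |p̂(s'|s,a)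 − p(s'|s,a)| and ‖V‖_∞ := max_y |V(y)|. -/
/-!
Group the sum over `y` by the estimated cluster `s = f̂(y)` and write
`q p - q̂ p̂ = p (q - q̂) + (p - p̂) q̂`. Since `q̂(·|s)` is a sub-probability, the second part is
bounded by the `ℓ¹` transition error times `‖V‖_∞`. In the first part, the sum of `(q - q̂) V`
over the cluster `f̂⁻¹(s)` differs from the full sum only by the mass that `q(·|s)` puts outside
`f̂⁻¹(s)`; that mass lies on `f⁻¹(s)`, hence on misclassified contexts, so it is at most
`κ |E| / n`. Averaging against the probability vector `p(·|f̂(x),a)` preserves the bound.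
-/

open Finset

lemma abs_sum_mul_le_sum_abs_mul {ι : Type*} (s : Finset ι) (w g : ι → ℝ) {M : ℝ}
    (hg : ∀ i ∈ s, |g i| ≤ M) : |∑ i ∈ s, w i * g i| ≤ (∑ i ∈ s, |w i|) * M := by
  rw [sum_mul]
  refine (abs_sum_le_sum_abs _ _).trans (sum_le_sum fun i hi => ?_)
  rw [abs_mul]
  exact mul_le_mul_of_nonneg_left (hg i hi) (abs_nonneg _)

lemma abs_sum_mul_le_sum_mul_of_nonneg {ι : Type*} (s : Finset ι) (w g : ι → ℝ) {M : ℝ}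
    (hw : ∀ i ∈ s, 0 ≤ w i) (hg : ∀ i ∈ s, |g i| ≤ M) :
    |∑ i ∈ s, w i * g i| ≤ (∑ i ∈ s, w i) * M := by
  rw [← sum_congr rfl fun i hi => abs_of_nonneg (hw i hi)]
  exact abs_sum_mul_le_sum_abs_mul s w g hg

lemma abs_sum_mul_le_supNorm {X : Type*} [Fintype X] [Nonempty X] (t : Finset X) {w : X → ℝ}
    (hw0 : ∀ y, 0 ≤ w y) (hw1 : ∑ y, w y ≤ 1) (V : X → ℝ) : |∑ y ∈ t, w y * V y| ≤ supNorm V := by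
  refine (abs_sum_mul_le_sum_mul_of_nonneg t w V (fun y _ => hw0 y)
    fun y _ => abs_le_supNorm V y).trans ?_
  have ht : ∑ y ∈ t, w y ≤ 1 :=
    (sum_le_sum_of_subset_of_nonneg (subset_univ t) fun y _ _ => hw0 y).trans hw1
  exact (mul_le_mul_of_nonneg_right ht (supNorm_nonneg V)).trans_eq (one_mul _)

section Fibers

variable {X S : Type*} [Fintype X] [DecidableEq S]

lemma sum_kernel_sub_mul_eq_fiberwise [Fintype S] (g : X → S) (p p' : S → ℝ)
    (q q' : S → X → ℝ) (V : X → ℝ) :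
    ∑ y, (q (g y) y * p (g y) - q' (g y) y * p' (g y)) * V y
      = ∑ s, p s * ∑ y ∈ univ with g y = s, (q s y - q' s y) * V y
        + ∑ s, (p s - p' s) * ∑ y ∈ univ with g y = s, q' s y * V y := by
  rw [← sum_fiberwise univ g, ← sum_add_distrib]
  refine sum_congr rfl fun s _ => ?_
  rw [mul_sum, mul_sum, ← sum_add_distrib]
  refine sum_congr rfl fun y hy => ?_
  rw [(mem_filter.1 hy).2]
  ring

variable [Nonempty X] (f g : X → S) {s : S} {w V : X → ℝ} {c : ℝ}

lemma abs_sum_filter_ne_mul_le (hw0 : ∀ y, 0 ≤ w y) (hw : ∀ y, f y ≠ s → w y = 0)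
    (hwc : ∀ y, w y ≤ c) :
    |∑ y ∈ univ with g y ≠ s, w y * V y|
      ≤ c * ((univ.filter fun y => g y ≠ f y).card : ℝ) * supNorm V := by
  have hc : 0 ≤ c := (hw0 (Classical.arbitrary X)).trans (hwc _)
  have hE : ∑ y ∈ univ with g y ≠ s, w y * V y
      = ∑ y ∈ (univ.filter fun y => g y ≠ s) with g y ≠ f y, w y * V y := by
    refine (sum_filter_of_ne fun y hy hne => ?_).symm
    have hfy : f y = s := by_contra fun h => hne (by rw [hw y h, zero_mul])
    exact hfy ▸ (mem_filter.1 hy).2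
  calc |∑ y ∈ univ with g y ≠ s, w y * V y|
      ≤ ∑ y ∈ (univ.filter fun y => g y ≠ s) with g y ≠ f y, |w y * V y| := by
        rw [hE]; exact abs_sum_le_sum_abs _ _
    _ ≤ ((univ.filter fun y => g y ≠ s).filter fun y => g y ≠ f y).card • (c * supNorm V) :=
        sum_le_card_nsmul _ _ _ fun y _ => by
          rw [abs_mul, abs_of_nonneg (hw0 y)]
          exact mul_le_mul (hwc y) (abs_le_supNorm V y) (abs_nonneg _) hc
    _ ≤ ((univ.filter fun y => g y ≠ f y).card : ℝ) * (c * supNorm V) := by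
        rw [nsmul_eq_mul]
        have := mul_nonneg hc (supNorm_nonneg V)
        gcongr
        exact subset_univ _
    _ = c * ((univ.filter fun y => g y ≠ f y).card : ℝ) * supNorm V := by ring

lemma abs_sum_fiber_sub_mul_le {w' : X → ℝ} (hw0 : ∀ y, 0 ≤ w y)
    (hw : ∀ y, f y ≠ s → w y = 0) (hwc : ∀ y, w y ≤ c) (hw' : ∀ y, g y ≠ s → w' y = 0) :
    |∑ y ∈ univ with g y = s, (w y - w' y) * V y|
      ≤ |∑ y, (w' y - w y) * V y|
        + c * ((univ.filter fun y => g y ≠ f y).card : ℝ) * supNorm V := by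
  have hoff : ∑ y ∈ univ with ¬g y = s, (w y - w' y) * V y
      = ∑ y ∈ univ with g y ≠ s, w y * V y :=
    sum_congr rfl fun y hy => by rw [hw' y (mem_filter.1 hy).2, sub_zero]
  have hsplit : ∑ y ∈ univ with g y = s, (w y - w' y) * V y
      = ∑ y, (w y - w' y) * V y - ∑ y ∈ univ with g y ≠ s, w y * V y := by
    rw [← hoff]
    exact eq_sub_of_add_eq (sum_filter_add_sum_filter_not _ _ _)
  have hflip : |∑ y, (w y - w' y) * V y| = |∑ y, (w' y - w y) * V y| := by
    rw [← abs_neg, ← sum_neg_distrib]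
    simp only [← neg_mul, neg_sub]
  rw [hsplit, ← hflip]
  exact (abs_sub _ _).trans (add_le_add_right (abs_sum_filter_ne_mul_le f g hw0 hw hwc) _)

end Fibers

theorem estimated_kernel_error_decomposition_general
    {X S A : Type*} [Fintype X] [Fintype S]
    [Nonempty X] [Nonempty S] [DecidableEq S]
    (f : X → S)
    (p : S → A → S → ℝ) (hp : ∀ s a, (∀ s', 0 ≤ p s a s') ∧ ∑ s', p s a s' = 1)
    (q : S → X → ℝ)
    (hq : ∀ s, (∀ y, 0 ≤ q s y) ∧ (∀ y, f y ≠ s → q s y = 0) ∧ ∑ y, q s y = 1)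
    (κ : ℝ)
    (hqbound : ∀ (s : S) (y : X), q s y ≤ κ / (Fintype.card X : ℝ))
    (fhat : X → S)
    (phat : S → A → S → ℝ)
    (qhat : S → X → ℝ)
    (hqhat : ∀ s, (∀ y, 0 ≤ qhat s y) ∧ (∀ y, fhat y ≠ s → qhat s y = 0) ∧
      ∑ y, qhat s y ≤ 1)
    (x : X) (a : A) (V : X → ℝ) :
    |∑ y, (q (fhat y) y * p (fhat x) a (fhat y)
            - qhat (fhat y) y * phat (fhat x) a (fhat y)) * V y|
      ≤ (Finset.univ.sup' Finset.univ_nonempty fun s : S =>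
            ∑ s', |phat s a s' - p s a s'|) * supNorm V
        + (Finset.univ.sup' Finset.univ_nonempty fun s : S =>
            |∑ y, (qhat s y - q s y) * V y|)
        + κ * ((Finset.univ.filter fun y => fhat y ≠ f y).card : ℝ)
            / (Fintype.card X : ℝ) * supNorm V := by
  set Mp := univ.sup' univ_nonempty fun s : S => ∑ s', |phat s a s' - p s a s'|
  set Mq := univ.sup' univ_nonempty fun s : S => |∑ y, (qhat s y - q s y) * V y|
  set C := κ * ((univ.filter fun y => fhat y ≠ f y).card : ℝ) / (Fintype.card X : ℝ) *
    supNorm V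
  have hemission (s : S) :
      |∑ y ∈ univ with fhat y = s, (q s y - qhat s y) * V y| ≤ Mq + C := by
    refine (abs_sum_fiber_sub_mul_le f fhat (hq s).1 (hq s).2.1 (hqbound s)
      (hqhat s).2.1).trans ?_
    rw [div_mul_eq_mul_div]
    gcongr
    exact le_sup' (fun s : S => |∑ y, (qhat s y - q s y) * V y|) (mem_univ s)
  have htransition :
      (∑ s', |p (fhat x) a s' - phat (fhat x) a s'|) * supNorm V ≤ Mp * supNorm V := by
    refine mul_le_mul_of_nonneg_right ?_ (supNorm_nonneg V)
    exact (sum_congr rfl fun s' _ => abs_sub_comm _ _).trans_le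
      (le_sup' (fun s : S => ∑ s', |phat s a s' - p s a s'|) (mem_univ (fhat x)))
  rw [sum_kernel_sub_mul_eq_fiberwise fhat (p (fhat x) a) (phat (fhat x) a) q qhat V]
  calc _ ≤ (∑ s', p (fhat x) a s') * (Mq + C)
          + (∑ s', |p (fhat x) a s' - phat (fhat x) a s'|) * supNorm V :=
        (abs_add_le _ _).trans (add_le_add
          (abs_sum_mul_le_sum_mul_of_nonneg _ _ _ (fun s' _ => (hp _ a).1 s')
            fun s _ => hemission s)
          (abs_sum_mul_le_sum_abs_mul _ _ _ fun s _ =>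
            abs_sum_mul_le_supNorm _ (hqhat s).1 (hqhat s).2.2 V))
    _ ≤ (Mq + C) + Mp * supNorm V := by rw [(hp _ a).2, one_mul]; gcongr
    _ = Mp * supNorm V + Mq + C := by ring

/-- **Error decomposition for the estimated context kernel.**
True model: decoding function `f`, latent transitions `p s a s' = p(s'|s,a)`, emissions
`q s y = q(y|s)` supported on the fibers of `f` and bounded by `κ/n` where
`n = Fintype.card X`.  Estimated model: decoding function `fhat`, nonnegative `phat`,
and `qhat` supported on the fibers of `fhat` with `Σ_y qhat(y|s) ≤ 1`.  The two kernels
are `P̃(y|x,a) = q(y|f̂(y))·p(f̂(y)|f̂(x),a)` and `P̂(y|x,a) = q̂(y|f̂(y))·p̂(f̂(y)|f̂(x),a)`,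
and `E = {y : f̂(y) ≠ f(y)}` is the set of misclassified contexts. -/
theorem estimated_kernel_error_decomposition
    {X S A : Type*} [Fintype X] [Fintype S] [Fintype A]
    [Nonempty X] [Nonempty S] [DecidableEq S]
    (f : X → S) (hf : Function.Surjective f)
    (p : S → A → S → ℝ) (hp : ∀ s a, (∀ s', 0 ≤ p s a s') ∧ ∑ s', p s a s' = 1)
    (q : S → X → ℝ)
    (hq : ∀ s, (∀ y, 0 ≤ q s y) ∧ (∀ y, f y ≠ s → q s y = 0) ∧ ∑ y, q s y = 1)
    (κ : ℝ) (hκ : 0 < κ)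
    (hqbound : ∀ (s : S) (y : X), q s y ≤ κ / (Fintype.card X : ℝ))
    (fhat : X → S)
    (phat : S → A → S → ℝ) (hphat : ∀ s a s', 0 ≤ phat s a s')
    (qhat : S → X → ℝ)
    (hqhat : ∀ s, (∀ y, 0 ≤ qhat s y) ∧ (∀ y, fhat y ≠ s → qhat s y = 0) ∧
      ∑ y, qhat s y ≤ 1)
    (x : X) (a : A) (V : X → ℝ) :
    |∑ y, (q (fhat y) y * p (fhat x) a (fhat y)
            - qhat (fhat y) y * phat (fhat x) a (fhat y)) * V y|
      ≤ (Finset.univ.sup' Finset.univ_nonempty fun s : S =>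
            ∑ s', |phat s a s' - p s a s'|) * supNorm V
        + (Finset.univ.sup' Finset.univ_nonempty fun s : S =>
            |∑ y, (qhat s y - q s y) * V y|)
        + κ * ((Finset.univ.filter fun y => fhat y ≠ f y).card : ℝ)
            / (Fintype.card X : ℝ) * supNorm V :=
  estimated_kernel_error_decomposition_general f p hp q hq κ hqbound fhat phat qhat hqhat x a V
end

section
/- (Linear representation of the optimal value function in a Block MDP.) Let r_h(x,a) ∈ [0,1] be rewards for h ∈ {1, …, H}, and define the optimal value functions by V*_{H+1} ≡ 0 and V*_h(x) := max_{a∈A} ( r_h(x,a) + Σ_{y∈X} P(y|x,a)·V*_{h+1}(y) ) for h = H, …, 1. Then for every h ∈ {1, …, H} there exists θ_h ∈ ℝ^{S×A} with Euclidean norm ‖θ_h‖₂ ≤ √(|S|·|A|)·(H − h) such that V*_h(x) = max_{a∈A} ( r_h(x,a) + θ_h(f(x), a) ) for every x ∈ X. -/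
/-!
The Bellman backup is monotone and the transition kernel is stochastic, so by backward
induction `0 ≤ V*_{h+1} ≤ H - h`. In a Block MDP the expected next value
`Σ_y P(y|x,a) V*_{h+1}(y)` depends on `x` only through `f x`, so it defines
`θ_h(s,a) ∈ [0, H - h]`, whose Euclidean norm is at most `√(|S||A|)·(H - h)`.
-/

open Finset Set

section Sums

variable {ι : Type*} [Fintype ι]

theorem Real.sqrt_sum_sq_le_sqrt_card_mul {θ : ι → ℝ} {c : ℝ} (hc : 0 ≤ c)
    (hθ : ∀ i, |θ i| ≤ c) :
    √(∑ i, θ i ^ 2) ≤ √(Fintype.card ι : ℝ) * c := by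
  have hsum : ∑ i, θ i ^ 2 ≤ Fintype.card ι * c ^ 2 := by
    simpa using Finset.sum_le_sum fun i (_ : i ∈ Finset.univ) => sq_le_sq' (abs_le.mp (hθ i)).1
      (abs_le.mp (hθ i)).2
  calc √(∑ i, θ i ^ 2) ≤ √(Fintype.card ι * c ^ 2) := Real.sqrt_le_sqrt hsum
    _ = √(Fintype.card ι : ℝ) * c := by rw [Real.sqrt_mul (by positivity), Real.sqrt_sq hc]

theorem weighted_sum_mem_Icc {w v : ι → ℝ} {a b : ℝ} (hw : ∀ i, 0 ≤ w i) (hw1 : ∑ i, w i = 1)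
    (hv : ∀ i, v i ∈ Icc a b) : ∑ i, w i * v i ∈ Icc a b :=
  (convex_Icc a b).sum_mem (fun i _ => hw i) hw1 fun i _ => hv i

end Sums

section BlockMDP

variable {X S A : Type*} [Fintype X] [Fintype S]

theorem sum_emission_mul_comp {f : X → S} {q : S → X → ℝ}
    (hq_supp : ∀ s y, f y ≠ s → q s y = 0) (hq_sum : ∀ s, ∑ y, q s y = 1) (g : S → ℝ) :
    ∑ y, q (f y) y * g (f y) = ∑ s, g s := by
  classical
  rw [← Finset.sum_fiberwise univ f]
  refine Finset.sum_congr rfl fun s _ => ?_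
  calc ∑ y ∈ univ with f y = s, q (f y) y * g (f y)
      = ∑ y ∈ univ with f y = s, q s y * g s :=
        Finset.sum_congr rfl fun y hy => by rw [(Finset.mem_filter.mp hy).2]
    _ = (∑ y, q s y) * g s := by
        rw [← Finset.sum_mul, Finset.sum_filter_of_ne fun y _ hy => by_contra fun h =>
          hy (hq_supp s y h)]
    _ = g s := by rw [hq_sum, one_mul]

theorem sum_blockKernel_eq_one {f : X → S} {p : S → A → S → ℝ} {q : S → X → ℝ}
    (hp_sum : ∀ s a, ∑ s', p s a s' = 1)
    (hq_supp : ∀ s y, f y ≠ s → q s y = 0) (hq_sum : ∀ s, ∑ y, q s y = 1) (s : S) (a : A) :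
    ∑ y, q (f y) y * p s a (f y) = 1 := by
  rw [sum_emission_mul_comp hq_supp hq_sum, hp_sum]

end BlockMDP

section Bellman

variable {X A : Type*} [Fintype X] [Fintype A] [Nonempty A]

theorem bellman_backup_mem_Icc {P : X → A → X → ℝ} (hP_nonneg : ∀ x a y, 0 ≤ P x a y)
    (hP_sum : ∀ x a, ∑ y, P x a y = 1) {r : X → A → ℝ} (hr : ∀ x a, r x a ∈ Icc (0 : ℝ) 1)
    {W : X → ℝ} {c : ℝ} (hW : ∀ y, W y ∈ Icc 0 c) (x : X) :
    (univ.sup' univ_nonempty fun a : A => r x a + ∑ y, P x a y * W y) ∈ Icc 0 (1 + c) := by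
  have hnext (a : A) := weighted_sum_mem_Icc (hP_nonneg x a) (hP_sum x a) hW
  obtain ⟨a₀⟩ := ‹Nonempty A›
  constructor
  · exact ((hr x a₀).1.trans (le_add_of_nonneg_right (hnext a₀).1)).trans
      (univ.le_sup' (fun a => r x a + ∑ y, P x a y * W y) (mem_univ a₀))
  · exact univ.sup'_le _ _ fun a _ => add_le_add (hr x a).2 (hnext a).2

theorem optimalValue_mem_Icc {P : X → A → X → ℝ} (hP_nonneg : ∀ x a y, 0 ≤ P x a y)
    (hP_sum : ∀ x a, ∑ y, P x a y = 1) {H : ℕ} {r : ℕ → X → A → ℝ}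
    (hr : ∀ h, 1 ≤ h → h ≤ H → ∀ x a, r h x a ∈ Icc (0 : ℝ) 1) {V : ℕ → X → ℝ}
    (hV0 : ∀ x, V (H + 1) x = 0)
    (hVrec : ∀ h, 1 ≤ h → h ≤ H → ∀ x,
      V h x = univ.sup' univ_nonempty fun a : A => r h x a + ∑ y, P x a y * V (h + 1) y)
    {h : ℕ} (hh : 1 ≤ h) (hhH : h ≤ H + 1) (x : X) :
    V h x ∈ Icc 0 ((H : ℝ) + 1 - h) := by
  refine Nat.decreasingInduction' (P := fun k => ∀ x, V k x ∈ Icc 0 ((H : ℝ) + 1 - k))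
    (fun k hkH hhk ih x => ?_) hhH (by simp [hV0]) x
  have hk : 1 ≤ k := hh.trans hhk
  have hbackup := bellman_backup_mem_Icc hP_nonneg hP_sum (hr k hk (by omega)) ih x
  rw [hVrec k hk (by omega) x]
  convert hbackup using 2
  push_cast
  ring

end Bellman

theorem optimal_value_linear_representation_general
    {X S A : Type*} [Fintype X] [Fintype S] [Fintype A] [Nonempty A]
    (f : X → S)
    (p : S → A → S → ℝ) (hp : ∀ s a, (∀ s', 0 ≤ p s a s') ∧ ∑ s', p s a s' = 1)
    (q : S → X → ℝ)
    (hq : ∀ s, (∀ y, 0 ≤ q s y) ∧ (∀ y, f y ≠ s → q s y = 0) ∧ ∑ y, q s y = 1)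
    (H : ℕ)
    (r : ℕ → X → A → ℝ)
    (hr : ∀ h, 1 ≤ h → h ≤ H → ∀ x a, 0 ≤ r h x a ∧ r h x a ≤ 1)
    (V : ℕ → X → ℝ)
    (hV0 : ∀ x, V (H + 1) x = 0)
    (hVrec : ∀ h, 1 ≤ h → h ≤ H → ∀ x,
      V h x = Finset.univ.sup' Finset.univ_nonempty fun a : A =>
        r h x a + ∑ y, q (f y) y * p (f x) a (f y) * V (h + 1) y) :
    ∀ h, 1 ≤ h → h ≤ H →
      ∃ θ : S × A → ℝ,
        Real.sqrt (∑ t : S × A, θ t ^ 2)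
            ≤ Real.sqrt ((Fintype.card S : ℝ) * (Fintype.card A : ℝ)) * ((H : ℝ) - (h : ℝ))
        ∧ ∀ x, V h x = Finset.univ.sup' Finset.univ_nonempty fun a : A =>
            r h x a + θ (f x, a) := by
  intro h hh hhH
  have hkernel_nonneg (s : S) (a : A) (y : X) : 0 ≤ q (f y) y * p s a (f y) :=
    mul_nonneg ((hq (f y)).1 y) ((hp s a).1 (f y))
  have hkernel_sum := sum_blockKernel_eq_one (fun s a => (hp s a).2)
    (fun s => (hq s).2.1) (fun s => (hq s).2.2)
  have hVnext (y : X) : V (h + 1) y ∈ Icc 0 ((H : ℝ) - h) := by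
    have := optimalValue_mem_Icc (fun x a => hkernel_nonneg (f x) a) (fun x => hkernel_sum (f x))
      hr hV0 hVrec (h := h + 1) (by omega) (by omega) y
    rwa [Nat.cast_succ, add_sub_add_right_eq_sub] at this
  refine ⟨fun t => ∑ y, q (f y) y * p t.1 t.2 (f y) * V (h + 1) y, ?_, hVrec h hh hhH⟩
  have hHh : (0 : ℝ) ≤ H - h := sub_nonneg.mpr (by exact_mod_cast hhH)
  rw [← Nat.cast_mul, ← Fintype.card_prod]
  refine Real.sqrt_sum_sq_le_sqrt_card_mul hHh fun t => ?_
  have hθ := weighted_sum_mem_Icc (hkernel_nonneg t.1 t.2) (hkernel_sum t.1 t.2) hVnext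
  exact abs_le.mpr ⟨(neg_nonpos.mpr hHh).trans hθ.1, hθ.2⟩

/-- **Linear representation of the optimal value function in a Block MDP.**
`p s a s' = p(s'|s,a)`, `q s y = q(y|s)` (supported on the fibers of `f`), so the
context transition kernel is `P(y|x,a) = q(y|f(y))·p(f(y)|f(x),a)`.  The optimal value
functions `V*_h` are defined backwards from `V*_{H+1} = 0` by the Bellman recursion. -/
theorem optimal_value_linear_representation
    {X S A : Type*} [Fintype X] [Fintype S] [Fintype A] [Nonempty A]
    (f : X → S) (hf : Function.Surjective f)
    (p : S → A → S → ℝ) (hp : ∀ s a, (∀ s', 0 ≤ p s a s') ∧ ∑ s', p s a s' = 1)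
    (q : S → X → ℝ)
    (hq : ∀ s, (∀ y, 0 ≤ q s y) ∧ (∀ y, f y ≠ s → q s y = 0) ∧ ∑ y, q s y = 1)
    (H : ℕ) (hH : 1 ≤ H)
    (r : ℕ → X → A → ℝ)
    (hr : ∀ h, 1 ≤ h → h ≤ H → ∀ x a, 0 ≤ r h x a ∧ r h x a ≤ 1)
    (V : ℕ → X → ℝ)
    (hV0 : ∀ x, V (H + 1) x = 0)
    (hVrec : ∀ h, 1 ≤ h → h ≤ H → ∀ x,
      V h x = Finset.univ.sup' Finset.univ_nonempty fun a : A =>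
        r h x a + ∑ y, q (f y) y * p (f x) a (f y) * V (h + 1) y) :
    ∀ h, 1 ≤ h → h ≤ H →
      ∃ θ : S × A → ℝ,
        Real.sqrt (∑ t : S × A, θ t ^ 2)
            ≤ Real.sqrt ((Fintype.card S : ℝ) * (Fintype.card A : ℝ)) * ((H : ℝ) - (h : ℝ))
        ∧ ∀ x, V h x = Finset.univ.sup' Finset.univ_nonempty fun a : A =>
            r h x a + θ (f x, a) :=
  optimal_value_linear_representation_general f p hp q hq H r hr V hV0 hVrec
end

section
/- (Closed-form recovery of latent forward and backward transition probabilities from expected transition counts.) Let w : X×A → [0,∞) be weights with W(s,a) := Σ_{x∈f⁻¹(s)} w(x,a) > 0 for all (s,a) ∈ S×A, and define N_a(x,y) := w(x,a)·q(y|f(y))·p(f(y)|f(x),a) and, for subsets X', Y' ⊆ X, N_a(X',Y') := Σ_{x∈X', y∈Y'} N_a(x,y). Then for all (s,a,s') ∈ S×A×S: (a) p(s'|s,a) = N_a( f⁻¹(s), f⁻¹(s') ) / N_a( f⁻¹(s), X ); and (b) with m(s,a) := W(s,a) / Σ_{(s̃,ã)∈S×A} W(s̃,ã), the backward probability satisfies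 m(s,a)·p(s'|s,a) / Σ_{(s̃,ã)∈S×A} m(s̃,ã)·p(s'|s̃,ã) = N_a( f⁻¹(s), f⁻¹(s') ) / Σ_{ã∈A} N_ã( X, f⁻¹(s') ). -/
/-!
Summing the expected counts over the target fiber `f⁻¹(s')` collapses the emission
probabilities (they sum to one on that fiber), so the block count is
`N_a(f⁻¹(s), f⁻¹(s')) = W(s,a) · p(s'|s,a)`. Summing further over `s'` gives
`N_a(f⁻¹(s), X) = W(s,a)`, and over source states and actions gives
`Σ_ã N_ã(X, f⁻¹(s')) = Σ_{s̃,ã} W(s̃,ã) p(s'|s̃,ã)`. Both identities are then ratios in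
which `W(s,a)`, resp. the normalisation `Σ W` of `m`, cancels.
-/

open Finset

section ExpectedCounts

variable {X S : Type*} [Fintype X] [DecidableEq S] {f : X → S}

theorem sum_fiber_eq_one_of_support_subset {q : X → ℝ} {s : S}
    (hsupp : ∀ y, f y ≠ s → q y = 0) (hsum : ∑ y, q y = 1) :
    ∑ y ∈ {y | f y = s}, q y = 1 := by
  rw [Finset.sum_filter_of_ne fun y _ hy => not_not.mp (mt (hsupp y) hy), hsum]

variable {q : S → X → ℝ} {P : S → S → ℝ} {w : X → ℝ} {N : X → X → ℝ}

theorem sum_fiber_sum_fiber_count (s s' : S) (hq : ∑ y ∈ {y | f y = s'}, q s' y = 1)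
    (hN : ∀ x y, N x y = w x * (q (f y) y * P (f x) (f y))) :
    ∑ x ∈ {x | f x = s}, ∑ y ∈ {y | f y = s'}, N x y
      = (∑ x ∈ {x | f x = s}, w x) * P s s' := by
  rw [Finset.sum_mul]
  refine Finset.sum_congr rfl fun x hx => ?_
  have hrow : ∀ y ∈ ({y | f y = s'} : Finset X), N x y = w x * P s s' * q s' y := by
    intro y hy
    rw [hN, (Finset.mem_filter.mp hx).2, (Finset.mem_filter.mp hy).2]
    ring
  rw [Finset.sum_congr rfl hrow, ← Finset.mul_sum, hq, mul_one]

variable [Fintype S]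

theorem sum_fiber_sum_count (s : S) (hq : ∀ s', ∑ y ∈ {y | f y = s'}, q s' y = 1)
    (hP : ∑ s', P s s' = 1) (hN : ∀ x y, N x y = w x * (q (f y) y * P (f x) (f y))) :
    ∑ x ∈ {x | f x = s}, ∑ y, N x y = ∑ x ∈ {x | f x = s}, w x := by
  simp_rw [← Finset.sum_fiberwise Finset.univ f (N _)]
  rw [Finset.sum_comm, Finset.sum_congr rfl fun s' _ => sum_fiber_sum_fiber_count s s' (hq s') hN,
    ← Finset.mul_sum, hP, mul_one]

theorem sum_sum_fiber_count (s' : S) (hq : ∑ y ∈ {y | f y = s'}, q s' y = 1)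
    (hN : ∀ x y, N x y = w x * (q (f y) y * P (f x) (f y))) :
    ∑ x, ∑ y ∈ {y | f y = s'}, N x y = ∑ s, (∑ x ∈ {x | f x = s}, w x) * P s s' := by
  rw [← Finset.sum_fiberwise Finset.univ f]
  exact Finset.sum_congr rfl fun s _ => sum_fiber_sum_fiber_count s s' hq hN

end ExpectedCounts

/-- `p s a s'` is `p(s'|s,a)` and `q s y` is `q(y|s)`. -/
theorem latent_transitions_from_expected_counts_general
    {X S A : Type*} [Fintype X] [Fintype S] [Fintype A] [DecidableEq S]
    (f : X → S)
    (p : S → A → S → ℝ) (hp : ∀ s a, (∀ s', 0 < p s a s') ∧ ∑ s', p s a s' = 1)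
    (q : S → X → ℝ)
    (hq : ∀ s, (∀ y, 0 ≤ q s y) ∧ (∀ y, f y ≠ s → q s y = 0) ∧ ∑ y, q s y = 1)
    (w : X → A → ℝ)
    (W : S → A → ℝ)
    (hW : ∀ (s : S) (a : A), W s a = ∑ x ∈ Finset.univ.filter (fun x => f x = s), w x a)
    (hWpos : ∀ (s : S) (a : A), 0 < W s a)
    (Nc : A → X → X → ℝ)
    (hNc : ∀ a x y, Nc a x y = w x a * (q (f y) y * p (f x) a (f y)))
    (m : S → A → ℝ)
    (hm : ∀ (s : S) (a : A), m s a = W s a / ∑ s2 : S, ∑ a2 : A, W s2 a2)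
    (s : S) (a : A) (s' : S) :
    p s a s'
      = (∑ x ∈ Finset.univ.filter (fun x => f x = s),
          ∑ y ∈ Finset.univ.filter (fun y => f y = s'), Nc a x y)
        / (∑ x ∈ Finset.univ.filter (fun x => f x = s), ∑ y : X, Nc a x y)
    ∧
    m s a * p s a s' / (∑ s2 : S, ∑ a2 : A, m s2 a2 * p s2 a2 s')
      = (∑ x ∈ Finset.univ.filter (fun x => f x = s),
          ∑ y ∈ Finset.univ.filter (fun y => f y = s'), Nc a x y)
        / (∑ a2 : A, ∑ x : X, ∑ y ∈ Finset.univ.filter (fun y => f y = s'), Nc a2 x y) := by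
  have hfiber : ∀ s', ∑ y ∈ {y | f y = s'}, q s' y = 1 := fun s' =>
    sum_fiber_eq_one_of_support_subset (hq s').2.1 (hq s').2.2
  have hblock := sum_fiber_sum_fiber_count (P := (p · a)) s s' (hfiber s') (hNc a)
  have hrow := sum_fiber_sum_count (P := (p · a)) s hfiber (hp s a).2 (hNc a)
  have hcol : ∀ a2, ∑ x, ∑ y ∈ {y | f y = s'}, Nc a2 x y = ∑ s2, W s2 a2 * p s2 a2 s' := by
    intro a2
    simp only [sum_sum_fiber_count (P := (p · a2)) s' (hfiber s') (hNc a2), hW]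
  have hT : ∑ s2, ∑ a2, W s2 a2 ≠ 0 :=
    (Finset.sum_pos (fun s2 _ => Finset.sum_pos (fun a2 _ => hWpos s2 a2) ⟨a, mem_univ a⟩)
      ⟨s, mem_univ s⟩).ne'
  rw [hblock, hrow, ← hW]
  refine ⟨(mul_div_cancel_left₀ _ (hWpos s a).ne').symm, ?_⟩
  simp only [hm, div_mul_eq_mul_div, ← Finset.sum_div, hcol]
  rw [div_div_div_cancel_right₀ hT, Finset.sum_comm]

/-- **Closed-form recovery of latent forward and backward transition probabilities from
expected transition counts.**
`p s a s' = p(s'|s,a)`, `q s y = q(y|s)` (supported on the fibers of `f`),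
`w x a ≥ 0` are weights with `W s a = Σ_{x ∈ f⁻¹(s)} w x a > 0`, the expected counts
are `N_a(x,y) = w(x,a)·q(y|f(y))·p(f(y)|f(x),a)`, and
`m(s,a) = W(s,a)/Σ_{s̃,ã} W(s̃,ã)`. -/
theorem latent_transitions_from_expected_counts
    {X S A : Type*} [Fintype X] [Fintype S] [Fintype A] [DecidableEq S]
    (f : X → S) (hf : Function.Surjective f)
    (p : S → A → S → ℝ) (hp : ∀ s a, (∀ s', 0 < p s a s') ∧ ∑ s', p s a s' = 1)
    (q : S → X → ℝ)
    (hq : ∀ s, (∀ y, 0 ≤ q s y) ∧ (∀ y, f y ≠ s → q s y = 0) ∧ ∑ y, q s y = 1)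
    (w : X → A → ℝ) (hw : ∀ x a, 0 ≤ w x a)
    (W : S → A → ℝ)
    (hW : ∀ (s : S) (a : A), W s a = ∑ x ∈ Finset.univ.filter (fun x => f x = s), w x a)
    (hWpos : ∀ (s : S) (a : A), 0 < W s a)
    (Nc : A → X → X → ℝ)
    (hNc : ∀ a x y, Nc a x y = w x a * (q (f y) y * p (f x) a (f y)))
    (m : S → A → ℝ)
    (hm : ∀ (s : S) (a : A), m s a = W s a / ∑ s2 : S, ∑ a2 : A, W s2 a2)
    (s : S) (a : A) (s' : S) :
    p s a s'
      = (∑ x ∈ Finset.univ.filter (fun x => f x = s),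
          ∑ y ∈ Finset.univ.filter (fun y => f y = s'), Nc a x y)
        / (∑ x ∈ Finset.univ.filter (fun x => f x = s), ∑ y : X, Nc a x y)
    ∧
    m s a * p s a s' / (∑ s2 : S, ∑ a2 : A, m s2 a2 * p s2 a2 s')
      = (∑ x ∈ Finset.univ.filter (fun x => f x = s),
          ∑ y ∈ Finset.univ.filter (fun y => f y = s'), Nc a x y)
        / (∑ a2 : A, ∑ x : X, ∑ y ∈ Finset.univ.filter (fun y => f y = s'), Nc a2 x y) :=
  latent_transitions_from_expected_counts_general f p hp q hq w W hW hWpos Nc hNc m hm s a s'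
end
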